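/- arXiv:2004.05042 — 8 statements merged into one kernel-verified Lean document; each statement's English description precedes it below -/
import Mathlib

section
/- Fix integers m ≥ 1 and A, B, C ≥ 0. Then the sum, over all triples (a, b, c) where a = (a_1, …, a_m) is a nonnegative composition of A, b = (b_1, …, b_m) is a nonnegative composition of B, c = (c_1, …, c_m) is a nonnegative composition of C, and a_i + b_i + c_i ≥ 3 for every i ∈ {1, …, m}, of the product ∏_{i=1}^m (a_i + b_i + c_i − 2)!, is at most 2^{12m+9} · (A + B + C − 3m + 1)!. -/
open Nat Finset


-- three-term binomial lower bound
lemma B3 (x : ℕ) : ∀ n : ℕ,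
    2*x^(n+2) + 2*(n+2)*x^(n+1) + (n+2)*(n+1)*x^n ≤ 2*(x+1)^(n+2) := by
  intro n
  induction n with
  | zero => ring_nf; nlinarith [sq_nonneg x]
  | succ n ih =>
    have h2 : (2*x^(n+2) + 2*(n+2)*x^(n+1) + (n+2)*(n+1)*x^n) * (x+1)
        ≤ 2*(x+1)^(n+2) * (x+1) := Nat.mul_le_mul_right _ ih
    calc 2*x^(n+3) + 2*(n+3)*x^(n+2) + (n+3)*(n+2)*x^(n+1)
        ≤ (2*x^(n+2) + 2*(n+2)*x^(n+1) + (n+2)*(n+1)*x^n) * (x+1) := by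
          ring_nf; nlinarith [pow_nonneg (Nat.zero_le x) n]
      _ ≤ 2*(x+1)^(n+2) * (x+1) := h2
      _ = 2*(x+1)^(n+3) := by ring

-- key ratio inequality for u ≥ 11
lemma KI (u : ℕ) (hu : 11 ≤ u) : 2*(u+4)^2*(u+1)^u ≤ (u+3)^2*(u+2)^u := by
  obtain ⟨k, rfl⟩ : ∃ k, u = k + 11 := ⟨u - 11, by omega⟩
  have hb : 2*(k+12)^(k+9+2) + 2*(k+9+2)*(k+12)^(k+9+1) + (k+9+2)*(k+9+1)*(k+12)^(k+9)
      ≤ 2*(k+13)^(k+9+2) := B3 (k+12) (k+9)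
  have hpoly : 4*(k+15)^2*(k+12)^2 ≤ (k+14)^2*(2*(k+12)^2 + 2*(k+11)*(k+12) + (k+11)*(k+10)) := by
    nlinarith [sq_nonneg k, k.zero_le]
  have step : 4*(k+15)^2*((k+12)^(k+9)*(k+12)^2)
      ≤ (k+14)^2*(2*(k+12)^(k+9+2) + 2*(k+11)*(k+12)^(k+9+1) + (k+11)*(k+10)*(k+12)^(k+9)) := by
    have h1 : 4*(k+15)^2*((k+12)^(k+9)*(k+12)^2)
        = (4*(k+15)^2*(k+12)^2) * (k+12)^(k+9) := by ring
    have h2 : (k+14)^2*(2*(k+12)^(k+9+2) + 2*(k+11)*(k+12)^(k+9+1) + (k+11)*(k+10)*(k+12)^(k+9))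
        = ((k+14)^2*(2*(k+12)^2 + 2*(k+11)*(k+12) + (k+11)*(k+10))) * (k+12)^(k+9) := by
      rw [pow_add, pow_add]; ring
    rw [h1, h2]
    exact Nat.mul_le_mul_right _ hpoly
  have final : 4*(k+15)^2*((k+12)^(k+9)*(k+12)^2) ≤ (k+14)^2*(2*((k+13)^(k+9)*(k+13)^2)) := by
    refine le_trans step (Nat.mul_le_mul_left _ ?_)
    calc 2*(k+12)^(k+9+2) + 2*(k+11)*(k+12)^(k+9+1) + (k+11)*(k+10)*(k+12)^(k+9)
        ≤ 2*(k+12)^(k+9+2) + 2*(k+9+2)*(k+12)^(k+9+1) + (k+9+2)*(k+9+1)*(k+12)^(k+9) := by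
          exact Nat.add_le_add (Nat.add_le_add le_rfl
            (Nat.mul_le_mul_right _ (le_of_eq (by ring)))) (Nat.mul_le_mul_right _ (le_of_eq (by ring)))
      _ ≤ 2*(k+13)^(k+9+2) := hb
      _ = 2*((k+13)^(k+9)*(k+13)^2) := by rw [pow_add]
  have e1 : (k+11+1)^(k+11) = (k+12)^(k+9)*(k+12)^2 := by
    rw [← pow_add]
  have e2 : (k+11+2)^(k+11) = (k+13)^(k+9)*(k+13)^2 := by
    rw [← pow_add]
  have e3 : (k+11+4) = k+15 := by omega
  have e4 : (k+11+3) = k+14 := by omega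
  rw [e3, e4, e1, e2]
  refine Nat.le_of_mul_le_mul_left ?_ (show 0 < 2 by norm_num)
  calc 2*(2*(k+15)^2*((k+12)^(k+9)*(k+12)^2))
      = 4*(k+15)^2*((k+12)^(k+9)*(k+12)^2) := by ring
    _ ≤ (k+14)^2*(2*((k+13)^(k+9)*(k+13)^2)) := final
    _ = 2*((k+14)^2*((k+13)^(k+9)*(k+13)^2)) := by ring

-- core termwise bound
lemma T2 : ∀ u : ℕ, 1 ≤ u → (u+3)^2 * u ! * 2^u ≤ 1024 * (u+1)^(u-1) := by
  have tail : ∀ u : ℕ, 11 ≤ u → (u+3)^2 * u ! * 2^u ≤ 1024 * (u+1)^(u-1) := by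
    intro u hu
    induction u, hu using Nat.le_induction with
    | base => norm_num [Nat.factorial]
    | succ u hu ih =>
      have h1 : 1 ≤ u := by omega
      have e : u + 1 - 1 = u := by omega
      rw [e]
      refine Nat.le_of_mul_le_mul_left ?_ (show 0 < (u+3)^2 by positivity)
      have key : (u+3)^2 * ((u+1+3)^2 * (u+1)! * 2^(u+1))
          = ((u+4)^2 * (2*(u+1))) * ((u+3)^2 * u ! * 2^u) := by
        rw [Nat.factorial_succ]; ring
      rw [key]
      calc ((u+4)^2 * (2*(u+1))) * ((u+3)^2 * u ! * 2^u)
          ≤ ((u+4)^2 * (2*(u+1))) * (1024 * (u+1)^(u-1)) := Nat.mul_le_mul_left _ ih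
        _ = 1024 * (2*(u+4)^2*((u+1)*(u+1)^(u-1))) := by ring
        _ = 1024 * (2*(u+4)^2*(u+1)^u) := by
            have h' : (u+1)*(u+1)^(u-1) = (u+1)^u := by
              rw [← pow_succ']; congr 1; omega
            rw [h']
        _ ≤ 1024 * ((u+3)^2*(u+2)^u) := Nat.mul_le_mul_left _ (KI u (by omega))
        _ = (u+3)^2 * (1024 * (u+2)^u) := by ring
  intro u hu
  rcases le_or_gt 11 u with h | h
  · exact tail u h
  · interval_cases u <;> norm_num [Nat.factorial]

-- factorial product bound
lemma TW (V u : ℕ) (h1 : 1 ≤ u) (h2 : 2*u ≤ V) :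
    ((u+3)^2 * u ! * (V-u)!) * 2^u ≤ 1024 * (V-1)! := by
  have hb : (u+1)^(u-1) * (V-u)! ≤ (V-1)! := by
    have hle : (u+1)^(u-1) ≤ (V-u+1)^(u-1) := Nat.pow_le_pow_left (by omega) _
    calc (u+1)^(u-1) * (V-u)! ≤ (V-u+1)^(u-1) * (V-u)! := Nat.mul_le_mul_right _ hle
      _ = (V-u)! * (V-u+1)^(u-1) := Nat.mul_comm _ _
      _ ≤ (V-u+(u-1))! := Nat.factorial_mul_pow_le_factorial
      _ = (V-1)! := by congr 1; omega
  calc ((u+3)^2 * u ! * (V-u)!) * 2^u = ((u+3)^2 * u ! * 2^u) * (V-u)! := by ring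
    _ ≤ (1024 * (u+1)^(u-1)) * (V-u)! := Nat.mul_le_mul_right _ (T2 u h1)
    _ = 1024 * ((u+1)^(u-1) * (V-u)!) := by ring
    _ ≤ 1024 * (V-1)! := Nat.mul_le_mul_left _ hb

-- geometric sum of floors
lemma GEO : ∀ (n : ℕ) (X : ℕ), ∑ u ∈ Finset.range n, X / 2^(u+1) ≤ X := by
  intro n
  induction n with
  | zero => simp
  | succ n ih =>
    intro X
    rw [Finset.sum_range_succ']
    have e : ∀ i : ℕ, X / 2^(i+1+1) = (X/2) / 2^(i+1) := by
      intro i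
      rw [Nat.div_div_eq_div_mul, pow_succ', Nat.mul_comm]
    calc (∑ i ∈ Finset.range n, X / 2^(i+1+1)) + X / 2^(0+1)
        = (∑ i ∈ Finset.range n, (X/2) / 2^(i+1)) + X / 2 := by
          rw [Finset.sum_congr rfl fun i _ => e i]; norm_num
      _ ≤ X/2 + X/2 := by exact Nat.add_le_add_right (ih (X/2)) _
      _ ≤ X := by omega

lemma GEOIco (V X : ℕ) : ∑ u ∈ Finset.Ico 1 V, X / 2^u ≤ X := by
  rcases le_or_gt 1 V with h | h
  · rw [Finset.sum_Ico_eq_sum_range]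
    calc ∑ u ∈ Finset.range (V-1), X / 2^(1+u)
        = ∑ u ∈ Finset.range (V-1), X / 2^(u+1) := by
          exact Finset.sum_congr rfl fun i _ => by rw [Nat.add_comm]
      _ ≤ X := GEO _ _
  · have : Finset.Ico 1 V = ∅ := by
      apply Finset.Ico_eq_empty; omega
    simp [this]

lemma sumIcoReflect (g : ℕ → ℕ) (V : ℕ) :
    ∑ u ∈ Finset.Ico 1 V, g (V - u) = ∑ u ∈ Finset.Ico 1 V, g u := by
  apply Finset.sum_nbij' (fun u => V - u) (fun u => V - u)
  · intro a ha; simp only [Finset.mem_Ico] at *; omega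
  · intro a ha; simp only [Finset.mem_Ico] at *; omega
  · intro a ha; simp only [Finset.mem_Ico] at ha; omega
  · intro a ha; simp only [Finset.mem_Ico] at ha; omega
  · intro a ha; rfl

-- 1D summation lemma for the P-step
lemma L2 (V : ℕ) :
    ∑ u ∈ Finset.Ico 1 V, min ((u+3)^2) ((V-u+2)^2) * (u ! * (V-u)!)
      ≤ 4096 * (V-1)! := by
  set X := 1024 * (V-1)! with hX
  have term : ∀ u ∈ Finset.Ico 1 V,
      min ((u+3)^2) ((V-u+2)^2) * (u ! * (V-u)!) ≤ (2*X) / 2^u + (2*X) / 2^(V-u) := by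
    intro u hu
    simp only [Finset.mem_Ico] at hu
    rcases le_or_gt (2*u) V with h | h
    · have h1 : min ((u+3)^2) ((V-u+2)^2) * (u ! * (V-u)!) * 2^u ≤ 2*X := by
        calc min ((u+3)^2) ((V-u+2)^2) * (u ! * (V-u)!) * 2^u
            ≤ (u+3)^2 * (u ! * (V-u)!) * 2^u := by
              exact Nat.mul_le_mul_right _ (Nat.mul_le_mul_right _ (min_le_left _ _))
          _ = ((u+3)^2 * u ! * (V-u)!) * 2^u := by ring
          _ ≤ 1024 * (V-1)! := TW V u hu.1 h
          _ ≤ 2*X := by rw [hX]; omega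
      exact le_trans ((Nat.le_div_iff_mul_le (show 0 < 2^u by positivity)).mpr h1)
        (Nat.le_add_right _ _)
    · have hv1 : 1 ≤ V - u := by omega
      have hv2 : 2*(V-u) ≤ V := by omega
      have huv : V - (V-u) = u := by omega
      have h1 : min ((u+3)^2) ((V-u+2)^2) * (u ! * (V-u)!) * 2^(V-u) ≤ 2*X := by
        calc min ((u+3)^2) ((V-u+2)^2) * (u ! * (V-u)!) * 2^(V-u)
            ≤ (V-u+3)^2 * (u ! * (V-u)!) * 2^(V-u) := by
              refine Nat.mul_le_mul_right _ (Nat.mul_le_mul_right _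
                (le_trans (min_le_right _ _) (Nat.pow_le_pow_left (by omega) 2)))
          _ = (((V-u)+3)^2 * (V-u)! * (V-(V-u))!) * 2^(V-u) := by rw [huv]; ring
          _ ≤ 1024 * (V-1)! := TW V (V-u) hv1 hv2
          _ ≤ 2*X := by rw [hX]; omega
      exact le_trans ((Nat.le_div_iff_mul_le (show 0 < 2^(V-u) by positivity)).mpr h1)
        (Nat.le_add_left _ _)
  calc ∑ u ∈ Finset.Ico 1 V, min ((u+3)^2) ((V-u+2)^2) * (u ! * (V-u)!)
      ≤ ∑ u ∈ Finset.Ico 1 V, ((2*X) / 2^u + (2*X) / 2^(V-u)) := Finset.sum_le_sum term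
    _ = (∑ u ∈ Finset.Ico 1 V, (2*X) / 2^u) + ∑ u ∈ Finset.Ico 1 V, (2*X) / 2^(V-u) := Finset.sum_add_distrib
    _ = (∑ u ∈ Finset.Ico 1 V, (2*X) / 2^u) + ∑ u ∈ Finset.Ico 1 V, (2*X) / 2^u := by
        rw [sumIcoReflect (fun t => (2*X) / 2^t) V]
    _ ≤ 2*X + 2*X := Nat.add_le_add (GEOIco V (2*X)) (GEOIco V (2*X))
    _ = 4096 * (V-1)! := by rw [hX]; ring

-- 1D summation lemma for the Q-step
lemma L1 (W : ℕ) :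
    ∑ u ∈ Finset.Ico 1 W, (u+3)^2 * (W-u+2)^2 * (u ! * (W-u)!)
      ≤ 4096 * ((W-1)! * (W+1)^2) := by
  set Y := 1024 * ((W-1)! * (W+1)^2) with hY
  have term : ∀ u ∈ Finset.Ico 1 W,
      (u+3)^2 * (W-u+2)^2 * (u ! * (W-u)!) ≤ (2*Y) / 2^u + (2*Y) / 2^(W-u) := by
    intro u hu
    simp only [Finset.mem_Ico] at hu
    rcases le_or_gt (2*u) W with h | h
    · have h1 : (u+3)^2 * (W-u+2)^2 * (u ! * (W-u)!) * 2^u ≤ 2*Y := by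
        calc (u+3)^2 * (W-u+2)^2 * (u ! * (W-u)!) * 2^u
            ≤ (u+3)^2 * (W+1)^2 * (u ! * (W-u)!) * 2^u := by
              refine Nat.mul_le_mul_right _ (Nat.mul_le_mul_right _ (Nat.mul_le_mul_left _ ?_))
              exact Nat.pow_le_pow_left (by omega) 2
          _ = (((u+3)^2 * u ! * (W-u)!) * 2^u) * (W+1)^2 := by ring
          _ ≤ (1024 * (W-1)!) * (W+1)^2 := Nat.mul_le_mul_right _ (TW W u hu.1 h)
          _ ≤ 2*Y := by rw [hY]; ring_nf; omega
      exact le_trans ((Nat.le_div_iff_mul_le (show 0 < 2^u by positivity)).mpr h1)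
        (Nat.le_add_right _ _)
    · have hv1 : 1 ≤ W - u := by omega
      have hv2 : 2*(W-u) ≤ W := by omega
      have huv : W - (W-u) = u := by omega
      have hW2 : 2 ≤ W := by omega
      have h1 : (u+3)^2 * (W-u+2)^2 * (u ! * (W-u)!) * 2^(W-u) ≤ 2*Y := by
        calc (u+3)^2 * (W-u+2)^2 * (u ! * (W-u)!) * 2^(W-u)
            ≤ (2*(W+1)^2) * ((W-u)+3)^2 * (u ! * (W-u)!) * 2^(W-u) := by
              refine Nat.mul_le_mul_right _ (Nat.mul_le_mul ?_ le_rfl)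
              refine Nat.mul_le_mul ?_ ?_
              · have h3 : (u+3)^2 ≤ (W+2)^2 := Nat.pow_le_pow_left (by omega) 2
                refine le_trans h3 ?_
                nlinarith [hW2]
              · exact Nat.pow_le_pow_left (by omega) 2
          _ = ((((W-u)+3)^2 * (W-u)! * (W-(W-u))!) * 2^(W-u)) * (2*(W+1)^2) := by
              rw [huv]; ring
          _ ≤ (1024 * (W-1)!) * (2*(W+1)^2) := Nat.mul_le_mul_right _ (TW W (W-u) hv1 hv2)
          _ = 2*Y := by rw [hY]; ring
      exact le_trans ((Nat.le_div_iff_mul_le (show 0 < 2^(W-u) by positivity)).mpr h1)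
        (Nat.le_add_left _ _)
  calc ∑ u ∈ Finset.Ico 1 W, (u+3)^2 * (W-u+2)^2 * (u ! * (W-u)!)
      ≤ ∑ u ∈ Finset.Ico 1 W, ((2*Y) / 2^u + (2*Y) / 2^(W-u)) := Finset.sum_le_sum term
    _ = (∑ u ∈ Finset.Ico 1 W, (2*Y) / 2^u) + ∑ u ∈ Finset.Ico 1 W, (2*Y) / 2^(W-u) := Finset.sum_add_distrib
    _ = (∑ u ∈ Finset.Ico 1 W, (2*Y) / 2^u) + ∑ u ∈ Finset.Ico 1 W, (2*Y) / 2^u := by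
        rw [sumIcoReflect (fun t => (2*Y) / 2^t) W]
    _ ≤ 2*Y + 2*Y := Nat.add_le_add (GEOIco W (2*Y)) (GEOIco W (2*Y))
    _ = 4096 * ((W-1)! * (W+1)^2) := by rw [hY]; ring

-- recursive version of the nested sum
def SS : ℕ → ℕ → ℕ → ℕ → ℕ
  | 0, A, B, C => if A + B + C = 0 then 1 else 0
  | m + 1, A, B, C =>
      ∑ i ∈ Finset.range (A+1), ∑ j ∈ Finset.range (B+1), ∑ k ∈ Finset.range (C+1),
        if 3 ≤ i + j + k then (i + j + k - 2)! * SS m (A-i) (B-j) (C-k) else 0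

def UU (m A B C R : ℕ) : ℕ :=
  ∑ A' ∈ Finset.range (A+1), ∑ B' ∈ Finset.range (B+1), ∑ C' ∈ Finset.range (C+1),
    if A' + B' + C' = R then SS m A' B' C' else 0

lemma SS_zero : ∀ m A B C, A + B + C < 3*m → SS m A B C = 0 := by
  intro m
  induction m with
  | zero => intro A B C h; omega
  | succ m ih =>
    intro A B C h
    rw [SS]
    refine Finset.sum_eq_zero fun i hi => Finset.sum_eq_zero fun j hj => Finset.sum_eq_zero fun k hk => ?_
    simp only [Finset.mem_range] at hi hj hk
    split
    · rename_i h3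
      rw [ih (A-i) (B-j) (C-k) (by omega)]
      ring
    · rfl

lemma UU_zero (m A B C R : ℕ) (h : R < 3*m) : UU m A B C R = 0 := by
  rw [UU]
  refine Finset.sum_eq_zero fun i hi => Finset.sum_eq_zero fun j hj => Finset.sum_eq_zero fun k hk => ?_
  split
  · rename_i hc; exact SS_zero m i j k (by omega)
  · rfl

lemma UU_mono (m : ℕ) {A B C A' B' C' : ℕ} (R : ℕ) (hA : A ≤ A') (hB : B ≤ B') (hC : C ≤ C') :
    UU m A B C R ≤ UU m A' B' C' R := by
  rw [UU, UU]
  refine le_trans (Finset.sum_le_sum fun i _ => le_trans (Finset.sum_le_sum fun j _ =>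
    Finset.sum_le_sum_of_subset (Finset.range_subset_range.mpr (by omega)))
    (Finset.sum_le_sum_of_subset (Finset.range_subset_range.mpr (by omega))))
    (Finset.sum_le_sum_of_subset (Finset.range_subset_range.mpr (by omega)))

-- reflection helper
lemma refl_sum (n : ℕ) (f : ℕ → ℕ) :
    ∑ i ∈ Finset.range (n+1), f (n-i) = ∑ i ∈ Finset.range (n+1), f i := by
  have := Finset.sum_range_reflect f (n+1)
  simpa using this

-- counting lemma
lemma sumBound (n s y : ℕ) (g : ℕ → ℕ) (hle : ∀ t, g t ≤ y) (hz : ∀ t, s < t → g t = 0) :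
    ∑ t ∈ Finset.range n, g t ≤ (s+1) * y := by
  calc ∑ t ∈ Finset.range n, g t ≤ ∑ t ∈ Finset.range n, (if t ≤ s then y else 0) := by
        refine Finset.sum_le_sum fun t _ => ?_
        split
        · exact hle t
        · exact le_of_eq (hz t (by omega))
    _ = ((Finset.range n).filter (· ≤ s)).card * y := by
        rw [← Finset.sum_filter, Finset.sum_const, smul_eq_mul]
    _ ≤ (s+1) * y := by
        refine Nat.mul_le_mul_right _ ?_
        have hsub : (Finset.range n).filter (· ≤ s) ⊆ Finset.range (s+1) := by
          intro t ht
          simp only [Finset.mem_filter, Finset.mem_range] at *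
          omega
        simpa using Finset.card_le_card hsub

lemma CL (A B C s x : ℕ) :
    (∑ i ∈ Finset.range (A+1), ∑ j ∈ Finset.range (B+1), ∑ k ∈ Finset.range (C+1),
      if i + j + k = s then x else 0) ≤ (s+1)^2 * x := by
  have inner : ∀ i j, (∑ k ∈ Finset.range (C+1), if i + j + k = s then x else 0) ≤ x := by
    intro i j
    calc (∑ k ∈ Finset.range (C+1), if i + j + k = s then x else 0)
        ≤ ∑ k ∈ Finset.range (C+1), (if k = s - i - j then x else 0) := by
          refine Finset.sum_le_sum fun k _ => ?_
          split_ifs with h1 h2 <;> first | rfl | omega | exact Nat.zero_le _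
      _ ≤ x := by
          rw [Finset.sum_ite_eq' (Finset.range (C+1)) (s-i-j) (fun _ => x)]
          split <;> simp
  have mid : ∀ i, (∑ j ∈ Finset.range (B+1), ∑ k ∈ Finset.range (C+1),
      if i + j + k = s then x else 0) ≤ (s+1) * x := by
    intro i
    refine sumBound (B+1) s x _ (fun j => inner i j) (fun j hj => ?_)
    refine Finset.sum_eq_zero fun k _ => if_neg (by omega)
  calc (∑ i ∈ Finset.range (A+1), ∑ j ∈ Finset.range (B+1), ∑ k ∈ Finset.range (C+1),
      if i + j + k = s then x else 0)
      ≤ (s+1) * ((s+1) * x) := by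
        refine sumBound (A+1) s ((s+1)*x) _ (fun i => mid i) (fun i hi => ?_)
        refine Finset.sum_eq_zero fun j _ => Finset.sum_eq_zero fun k _ => if_neg (by omega)
    _ = (s+1)^2 * x := by ring

-- CL2 : splits-count bound
lemma CL2 (A B C R x : ℕ) :
    (∑ A' ∈ Finset.range (A+1), ∑ B' ∈ Finset.range (B+1), ∑ C' ∈ Finset.range (C+1),
      if A' + B' + C' = R then x else 0) ≤ (A+B+C-R+1)^2 * x := by
  rcases le_or_gt R (A+B+C) with h | h
  · have e1 : (∑ A' ∈ Finset.range (A+1), ∑ B' ∈ Finset.range (B+1), ∑ C' ∈ Finset.range (C+1),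
        if A' + B' + C' = R then x else 0)
        = ∑ i ∈ Finset.range (A+1), ∑ j ∈ Finset.range (B+1), ∑ k ∈ Finset.range (C+1),
          if (A-i) + (B-j) + (C-k) = R then x else 0 := by
      rw [← refl_sum A (fun A' => ∑ B' ∈ Finset.range (B+1), ∑ C' ∈ Finset.range (C+1),
        if A' + B' + C' = R then x else 0)]
      refine Finset.sum_congr rfl fun i _ => ?_
      rw [← refl_sum B (fun B' => ∑ C' ∈ Finset.range (C+1), if (A-i) + B' + C' = R then x else 0)]
      refine Finset.sum_congr rfl fun j _ => ?_
      rw [← refl_sum C (fun C' => if (A-i) + (B-j) + C' = R then x else 0)]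
    rw [e1]
    have e2 : ∀ i ∈ Finset.range (A+1), ∀ j ∈ Finset.range (B+1), ∀ k ∈ Finset.range (C+1),
        (if (A-i) + (B-j) + (C-k) = R then x else 0) = (if i + j + k = A+B+C-R then x else 0) := by
      intro i hi j hj k hk
      simp only [Finset.mem_range] at hi hj hk
      exact if_congr (by omega) rfl rfl
    calc (∑ i ∈ Finset.range (A+1), ∑ j ∈ Finset.range (B+1), ∑ k ∈ Finset.range (C+1),
        if (A-i) + (B-j) + (C-k) = R then x else 0)
        = ∑ i ∈ Finset.range (A+1), ∑ j ∈ Finset.range (B+1), ∑ k ∈ Finset.range (C+1),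
          if i + j + k = A+B+C-R then x else 0 := by
          refine Finset.sum_congr rfl fun i hi => Finset.sum_congr rfl fun j hj =>
            Finset.sum_congr rfl fun k hk => e2 i hi j hj k hk
      _ ≤ (A+B+C-R+1)^2 * x := CL A B C (A+B+C-R) x
  · have : (∑ A' ∈ Finset.range (A+1), ∑ B' ∈ Finset.range (B+1), ∑ C' ∈ Finset.range (C+1),
        if A' + B' + C' = R then x else 0) = 0 := by
      refine Finset.sum_eq_zero fun i hi => Finset.sum_eq_zero fun j hj =>
        Finset.sum_eq_zero fun k hk => ?_
      simp only [Finset.mem_range] at hi hj hk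
      exact if_neg (by omega)
    rw [this]
    exact Nat.zero_le _

-- reflected form of UU
lemma UU_reflect (m A B C R : ℕ) :
    (∑ i ∈ Finset.range (A+1), ∑ j ∈ Finset.range (B+1), ∑ k ∈ Finset.range (C+1),
      if (A-i) + (B-j) + (C-k) = R then SS m (A-i) (B-j) (C-k) else 0) = UU m A B C R := by
  rw [UU]
  rw [← refl_sum A (fun A' => ∑ B' ∈ Finset.range (B+1), ∑ C' ∈ Finset.range (C+1),
    if A' + B' + C' = R then SS m A' B' C' else 0)]
  refine Finset.sum_congr rfl fun i _ => ?_
  rw [← refl_sum B (fun B' => ∑ C' ∈ Finset.range (C+1),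
    if (A-i) + B' + C' = R then SS m (A-i) B' C' else 0)]
  refine Finset.sum_congr rfl fun j _ => ?_
  rw [← refl_sum C (fun C' => if (A-i) + (B-j) + C' = R then SS m (A-i) (B-j) C' else 0)]

-- ID1
lemma ID1 (m A B C : ℕ) :
    SS (m+1) A B C = ∑ R ∈ Finset.range (A+B+C+1),
      (if R+3 ≤ A+B+C then (A+B+C-R-2)! else 0) * UU m A B C R := by
  set N := A + B + C with hN
  set w : ℕ → ℕ := fun R => if R+3 ≤ N then (N-R-2)! else 0 with hw
  have hwR : ∀ R, w R = if R+3 ≤ N then (N-R-2)! else 0 := fun R => rfl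
  have step1 : ∀ i ∈ Finset.range (A+1), ∀ j ∈ Finset.range (B+1), ∀ k ∈ Finset.range (C+1),
      (if 3 ≤ i + j + k then (i + j + k - 2)! * SS m (A-i) (B-j) (C-k) else 0)
      = ∑ R ∈ Finset.range (N+1),
          if (A-i) + (B-j) + (C-k) = R then w R * SS m (A-i) (B-j) (C-k) else 0 := by
    intro i hi j hj k hk
    simp only [Finset.mem_range] at hi hj hk
    rw [Finset.sum_ite_eq (Finset.range (N+1)) ((A-i)+(B-j)+(C-k))
      (fun R => w R * SS m (A-i) (B-j) (C-k))]
    have hmem : (A-i)+(B-j)+(C-k) ∈ Finset.range (N+1) := Finset.mem_range.mpr (by omega)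
    rw [if_pos hmem, hwR]
    by_cases h3 : 3 ≤ i + j + k
    · rw [if_pos h3, if_pos (show (A-i)+(B-j)+(C-k)+3 ≤ N by omega),
        show i+j+k-2 = N - ((A-i)+(B-j)+(C-k)) - 2 from by omega]
    · rw [if_neg h3, if_neg (show ¬((A-i)+(B-j)+(C-k)+3 ≤ N) by omega), zero_mul]
  calc SS (m+1) A B C
      = ∑ i ∈ Finset.range (A+1), ∑ j ∈ Finset.range (B+1), ∑ k ∈ Finset.range (C+1),
          ∑ R ∈ Finset.range (N+1),
            if (A-i) + (B-j) + (C-k) = R then w R * SS m (A-i) (B-j) (C-k) else 0 := by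
        rw [SS]
        exact Finset.sum_congr rfl fun i hi => Finset.sum_congr rfl fun j hj =>
          Finset.sum_congr rfl fun k hk => step1 i hi j hj k hk
    _ = ∑ i ∈ Finset.range (A+1), ∑ j ∈ Finset.range (B+1), ∑ R ∈ Finset.range (N+1),
          ∑ k ∈ Finset.range (C+1),
            if (A-i) + (B-j) + (C-k) = R then w R * SS m (A-i) (B-j) (C-k) else 0 := by
        exact Finset.sum_congr rfl fun i _ => Finset.sum_congr rfl fun j _ => Finset.sum_comm
    _ = ∑ i ∈ Finset.range (A+1), ∑ R ∈ Finset.range (N+1), ∑ j ∈ Finset.range (B+1),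
          ∑ k ∈ Finset.range (C+1),
            if (A-i) + (B-j) + (C-k) = R then w R * SS m (A-i) (B-j) (C-k) else 0 := by
        exact Finset.sum_congr rfl fun i _ => Finset.sum_comm
    _ = ∑ R ∈ Finset.range (N+1), ∑ i ∈ Finset.range (A+1), ∑ j ∈ Finset.range (B+1),
          ∑ k ∈ Finset.range (C+1),
            if (A-i) + (B-j) + (C-k) = R then w R * SS m (A-i) (B-j) (C-k) else 0 := by
        exact Finset.sum_comm
    _ = ∑ R ∈ Finset.range (N+1), w R * UU m A B C R := by
        refine Finset.sum_congr rfl fun R _ => ?_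
        rw [← UU_reflect m A B C R, Finset.mul_sum]
        refine Finset.sum_congr rfl fun i _ => ?_
        rw [Finset.mul_sum]
        refine Finset.sum_congr rfl fun j _ => ?_
        rw [Finset.mul_sum]
        refine Finset.sum_congr rfl fun k _ => ?_
        split <;> simp

-- triangle reindexing
lemma TRI (n : ℕ) (F : ℕ → ℕ → ℕ) :
    ∑ x ∈ Finset.range (n+1), ∑ i ∈ Finset.range (x+1), F i (x-i)
      = ∑ i ∈ Finset.range (n+1), ∑ a ∈ Finset.range (n-i+1), F i a := by
  rw [Finset.sum_sigma', Finset.sum_sigma']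
  refine Finset.sum_nbij' (fun p => ⟨p.2, p.1 - p.2⟩) (fun q => ⟨q.1 + q.2, q.1⟩) ?_ ?_ ?_ ?_ ?_
  · intro p hp
    simp only [Finset.mem_sigma, Finset.mem_range] at *
    omega
  · intro q hq
    simp only [Finset.mem_sigma, Finset.mem_range] at *
    omega
  · intro p hp
    simp only [Finset.mem_sigma, Finset.mem_range] at hp
    refine Sigma.ext ?_ ?_ <;> simp <;> omega
  · intro q hq
    simp only [Finset.mem_sigma, Finset.mem_range] at hq
    refine Sigma.ext ?_ ?_ <;> simp
  · intro p hp
    rfl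

lemma ifPush (c : Prop) [Decidable c] (s : Finset ℕ) (f : ℕ → ℕ) :
    (if c then ∑ x ∈ s, f x else 0) = ∑ x ∈ s, if c then f x else 0 := by
  split <;> simp

lemma ifAnd (c d : Prop) [Decidable c] [Decidable d] (x : ℕ) :
    (if c then (if d then x else 0) else 0) = if c ∧ d then x else 0 := by
  split_ifs <;> tauto

lemma Qstep (m A B C R : ℕ) :
    UU (m+1) A B C R ≤ ∑ s ∈ Finset.range (A+B+C+1),
      (s+1)^2 * (if 3 ≤ s ∧ s ≤ R then (s-2)! * UU m A B C (R-s) else 0) := by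
  set g : ℕ → ℕ := fun s => if 3 ≤ s ∧ s ≤ R then (s-2)! * UU m A B C (R-s) else 0 with hg
  have hgdef : ∀ s, g s = if 3 ≤ s ∧ s ≤ R then (s-2)! * UU m A B C (R-s) else 0 := fun _ => rfl
  -- Step E1-E7 : full regrouping identity
  have E : UU (m+1) A B C R
      = ∑ i ∈ Finset.range (A+1), ∑ j ∈ Finset.range (B+1), ∑ k ∈ Finset.range (C+1),
          ∑ a ∈ Finset.range (A-i+1), ∑ b ∈ Finset.range (B-j+1), ∑ c ∈ Finset.range (C-k+1),
            if (i+a+j+b+k+c = R ∧ 3 ≤ i+j+k) then (i+j+k-2)! * SS m a b c else 0 := by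
    calc UU (m+1) A B C R
        = ∑ A' ∈ Finset.range (A+1), ∑ B' ∈ Finset.range (B+1), ∑ C' ∈ Finset.range (C+1),
            ∑ i ∈ Finset.range (A'+1), ∑ j ∈ Finset.range (B'+1), ∑ k ∈ Finset.range (C'+1),
              if (A'+B'+C' = R ∧ 3 ≤ i+j+k) then (i+j+k-2)! * SS m (A'-i) (B'-j) (C'-k) else 0 := by
          rw [UU]
          refine Finset.sum_congr rfl fun A' _ => Finset.sum_congr rfl fun B' _ =>
            Finset.sum_congr rfl fun C' _ => ?_
          rw [show SS (m+1) A' B' C' = (∑ i ∈ Finset.range (A'+1), ∑ j ∈ Finset.range (B'+1),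
            ∑ k ∈ Finset.range (C'+1), if 3 ≤ i+j+k then (i+j+k-2)! * SS m (A'-i) (B'-j) (C'-k)
              else 0) from by rw [SS]]
          rw [ifPush]
          refine Finset.sum_congr rfl fun i _ => ?_
          rw [ifPush]
          refine Finset.sum_congr rfl fun j _ => ?_
          rw [ifPush]
          refine Finset.sum_congr rfl fun k _ => ?_
          exact ifAnd _ _ _
      _ = ∑ A' ∈ Finset.range (A+1), ∑ i ∈ Finset.range (A'+1), ∑ B' ∈ Finset.range (B+1),
            ∑ C' ∈ Finset.range (C+1), ∑ j ∈ Finset.range (B'+1), ∑ k ∈ Finset.range (C'+1),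
              if (A'+B'+C' = R ∧ 3 ≤ i+j+k) then (i+j+k-2)! * SS m (A'-i) (B'-j) (C'-k) else 0 := by
          refine Finset.sum_congr rfl fun A' _ => ?_
          calc (∑ B' ∈ Finset.range (B+1), ∑ C' ∈ Finset.range (C+1), ∑ i ∈ Finset.range (A'+1),
                ∑ j ∈ Finset.range (B'+1), ∑ k ∈ Finset.range (C'+1),
                if (A'+B'+C' = R ∧ 3 ≤ i+j+k) then (i+j+k-2)! * SS m (A'-i) (B'-j) (C'-k) else 0)
              = ∑ B' ∈ Finset.range (B+1), ∑ i ∈ Finset.range (A'+1), ∑ C' ∈ Finset.range (C+1),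
                ∑ j ∈ Finset.range (B'+1), ∑ k ∈ Finset.range (C'+1),
                if (A'+B'+C' = R ∧ 3 ≤ i+j+k) then (i+j+k-2)! * SS m (A'-i) (B'-j) (C'-k) else 0 :=
              Finset.sum_congr rfl fun B' _ => Finset.sum_comm
            _ = _ := Finset.sum_comm
      _ = ∑ A' ∈ Finset.range (A+1), ∑ i ∈ Finset.range (A'+1), ∑ B' ∈ Finset.range (B+1),
            ∑ C' ∈ Finset.range (C+1), ∑ j ∈ Finset.range (B'+1), ∑ k ∈ Finset.range (C'+1),
              if (i+(A'-i)+B'+C' = R ∧ 3 ≤ i+j+k) then (i+j+k-2)! * SS m (A'-i) (B'-j) (C'-k)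
                else 0 := by
          refine Finset.sum_congr rfl fun A' _ => ?_
          refine Finset.sum_congr rfl fun i hi => ?_
          simp only [Finset.mem_range] at hi
          refine Finset.sum_congr rfl fun B' _ => Finset.sum_congr rfl fun C' _ =>
            Finset.sum_congr rfl fun j _ => Finset.sum_congr rfl fun k _ => ?_
          exact if_congr (by omega) rfl rfl
      _ = ∑ i ∈ Finset.range (A+1), ∑ a ∈ Finset.range (A-i+1), ∑ B' ∈ Finset.range (B+1),
            ∑ C' ∈ Finset.range (C+1), ∑ j ∈ Finset.range (B'+1), ∑ k ∈ Finset.range (C'+1),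
              if (i+a+B'+C' = R ∧ 3 ≤ i+j+k) then (i+j+k-2)! * SS m a (B'-j) (C'-k) else 0 :=
          TRI A (fun i a => ∑ B' ∈ Finset.range (B+1), ∑ C' ∈ Finset.range (C+1),
            ∑ j ∈ Finset.range (B'+1), ∑ k ∈ Finset.range (C'+1),
              if (i+a+B'+C' = R ∧ 3 ≤ i+j+k) then (i+j+k-2)! * SS m a (B'-j) (C'-k) else 0)
      _ = ∑ i ∈ Finset.range (A+1), ∑ a ∈ Finset.range (A-i+1), ∑ B' ∈ Finset.range (B+1),
            ∑ j ∈ Finset.range (B'+1), ∑ C' ∈ Finset.range (C+1), ∑ k ∈ Finset.range (C'+1),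
              if (i+a+B'+C' = R ∧ 3 ≤ i+j+k) then (i+j+k-2)! * SS m a (B'-j) (C'-k) else 0 := by
          exact Finset.sum_congr rfl fun i _ => Finset.sum_congr rfl fun a _ =>
            Finset.sum_congr rfl fun B' _ => Finset.sum_comm
      _ = ∑ i ∈ Finset.range (A+1), ∑ a ∈ Finset.range (A-i+1), ∑ B' ∈ Finset.range (B+1),
            ∑ j ∈ Finset.range (B'+1), ∑ C' ∈ Finset.range (C+1), ∑ k ∈ Finset.range (C'+1),
              if (i+a+j+(B'-j)+C' = R ∧ 3 ≤ i+j+k) then (i+j+k-2)! * SS m a (B'-j) (C'-k) else 0 := by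
          refine Finset.sum_congr rfl fun i _ => Finset.sum_congr rfl fun a _ =>
            Finset.sum_congr rfl fun B' _ => ?_
          refine Finset.sum_congr rfl fun j hj => ?_
          simp only [Finset.mem_range] at hj
          refine Finset.sum_congr rfl fun C' _ => Finset.sum_congr rfl fun k _ => ?_
          exact if_congr (by omega) rfl rfl
      _ = ∑ i ∈ Finset.range (A+1), ∑ a ∈ Finset.range (A-i+1), ∑ j ∈ Finset.range (B+1),
            ∑ b ∈ Finset.range (B-j+1), ∑ C' ∈ Finset.range (C+1), ∑ k ∈ Finset.range (C'+1),
              if (i+a+j+b+C' = R ∧ 3 ≤ i+j+k) then (i+j+k-2)! * SS m a b (C'-k) else 0 := by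
          refine Finset.sum_congr rfl fun i _ => Finset.sum_congr rfl fun a _ => ?_
          exact TRI B (fun j b => ∑ C' ∈ Finset.range (C+1), ∑ k ∈ Finset.range (C'+1),
            if (i+a+j+b+C' = R ∧ 3 ≤ i+j+k) then (i+j+k-2)! * SS m a b (C'-k) else 0)
      _ = ∑ i ∈ Finset.range (A+1), ∑ a ∈ Finset.range (A-i+1), ∑ j ∈ Finset.range (B+1),
            ∑ b ∈ Finset.range (B-j+1), ∑ C' ∈ Finset.range (C+1), ∑ k ∈ Finset.range (C'+1),
              if (i+a+j+b+k+(C'-k) = R ∧ 3 ≤ i+j+k) then (i+j+k-2)! * SS m a b (C'-k) else 0 := by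
          refine Finset.sum_congr rfl fun i _ => Finset.sum_congr rfl fun a _ =>
            Finset.sum_congr rfl fun j _ => Finset.sum_congr rfl fun b _ =>
            Finset.sum_congr rfl fun C' _ => ?_
          refine Finset.sum_congr rfl fun k hk => ?_
          simp only [Finset.mem_range] at hk
          exact if_congr (by omega) rfl rfl
      _ = ∑ i ∈ Finset.range (A+1), ∑ a ∈ Finset.range (A-i+1), ∑ j ∈ Finset.range (B+1),
            ∑ b ∈ Finset.range (B-j+1), ∑ k ∈ Finset.range (C+1), ∑ c ∈ Finset.range (C-k+1),
              if (i+a+j+b+k+c = R ∧ 3 ≤ i+j+k) then (i+j+k-2)! * SS m a b c else 0 := by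
          refine Finset.sum_congr rfl fun i _ => Finset.sum_congr rfl fun a _ =>
            Finset.sum_congr rfl fun j _ => Finset.sum_congr rfl fun b _ => ?_
          exact TRI C (fun k c => if (i+a+j+b+k+c = R ∧ 3 ≤ i+j+k)
            then (i+j+k-2)! * SS m a b c else 0)
      _ = ∑ i ∈ Finset.range (A+1), ∑ j ∈ Finset.range (B+1), ∑ a ∈ Finset.range (A-i+1),
            ∑ b ∈ Finset.range (B-j+1), ∑ k ∈ Finset.range (C+1), ∑ c ∈ Finset.range (C-k+1),
              if (i+a+j+b+k+c = R ∧ 3 ≤ i+j+k) then (i+j+k-2)! * SS m a b c else 0 :=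
          Finset.sum_congr rfl fun i _ => Finset.sum_comm
      _ = ∑ i ∈ Finset.range (A+1), ∑ j ∈ Finset.range (B+1), ∑ a ∈ Finset.range (A-i+1),
            ∑ k ∈ Finset.range (C+1), ∑ b ∈ Finset.range (B-j+1), ∑ c ∈ Finset.range (C-k+1),
              if (i+a+j+b+k+c = R ∧ 3 ≤ i+j+k) then (i+j+k-2)! * SS m a b c else 0 :=
          Finset.sum_congr rfl fun i _ => Finset.sum_congr rfl fun j _ =>
            Finset.sum_congr rfl fun a _ => Finset.sum_comm
      _ = ∑ i ∈ Finset.range (A+1), ∑ j ∈ Finset.range (B+1), ∑ k ∈ Finset.range (C+1),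
            ∑ a ∈ Finset.range (A-i+1), ∑ b ∈ Finset.range (B-j+1), ∑ c ∈ Finset.range (C-k+1),
              if (i+a+j+b+k+c = R ∧ 3 ≤ i+j+k) then (i+j+k-2)! * SS m a b c else 0 :=
          Finset.sum_congr rfl fun i _ => Finset.sum_congr rfl fun j _ => Finset.sum_comm
  -- Step E8 : bound inner triple sums
  have E8 : UU (m+1) A B C R
      ≤ ∑ i ∈ Finset.range (A+1), ∑ j ∈ Finset.range (B+1), ∑ k ∈ Finset.range (C+1),
          g (i+j+k) := by
    rw [E]
    refine Finset.sum_le_sum fun i _ => Finset.sum_le_sum fun j _ => Finset.sum_le_sum fun k _ => ?_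
    by_cases h3 : 3 ≤ i+j+k
    · by_cases hsR : i+j+k ≤ R
      · have inner : (∑ a ∈ Finset.range (A-i+1), ∑ b ∈ Finset.range (B-j+1),
            ∑ c ∈ Finset.range (C-k+1),
            if (i+a+j+b+k+c = R ∧ 3 ≤ i+j+k) then (i+j+k-2)! * SS m a b c else 0)
            = (i+j+k-2)! * UU m (A-i) (B-j) (C-k) (R-(i+j+k)) := by
          rw [UU, Finset.mul_sum]
          refine Finset.sum_congr rfl fun a _ => ?_
          rw [Finset.mul_sum]
          refine Finset.sum_congr rfl fun b _ => ?_
          rw [Finset.mul_sum]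
          refine Finset.sum_congr rfl fun c _ => ?_
          rw [mul_ite, mul_zero]
          exact if_congr (by omega) rfl rfl
        rw [inner, hgdef, if_pos ⟨h3, hsR⟩]
        exact Nat.mul_le_mul_left _ (UU_mono m (R-(i+j+k)) (by omega) (by omega) (by omega))
      · have : (∑ a ∈ Finset.range (A-i+1), ∑ b ∈ Finset.range (B-j+1),
            ∑ c ∈ Finset.range (C-k+1),
            if (i+a+j+b+k+c = R ∧ 3 ≤ i+j+k) then (i+j+k-2)! * SS m a b c else 0) = 0 := by
          refine Finset.sum_eq_zero fun a _ => Finset.sum_eq_zero fun b _ =>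
            Finset.sum_eq_zero fun c _ => if_neg (by omega)
        rw [this]
        exact Nat.zero_le _
    · have : (∑ a ∈ Finset.range (A-i+1), ∑ b ∈ Finset.range (B-j+1),
          ∑ c ∈ Finset.range (C-k+1),
          if (i+a+j+b+k+c = R ∧ 3 ≤ i+j+k) then (i+j+k-2)! * SS m a b c else 0) = 0 := by
        refine Finset.sum_eq_zero fun a _ => Finset.sum_eq_zero fun b _ =>
          Finset.sum_eq_zero fun c _ => if_neg (by omega)
      rw [this]
      exact Nat.zero_le _
  -- Step E9 : grading
  refine le_trans E8 ?_
  have grading : (∑ i ∈ Finset.range (A+1), ∑ j ∈ Finset.range (B+1), ∑ k ∈ Finset.range (C+1),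
      g (i+j+k))
      = ∑ s ∈ Finset.range (A+B+C+1), ∑ i ∈ Finset.range (A+1), ∑ j ∈ Finset.range (B+1),
          ∑ k ∈ Finset.range (C+1), if i+j+k = s then g s else 0 := by
    calc (∑ i ∈ Finset.range (A+1), ∑ j ∈ Finset.range (B+1), ∑ k ∈ Finset.range (C+1), g (i+j+k))
        = ∑ i ∈ Finset.range (A+1), ∑ j ∈ Finset.range (B+1), ∑ k ∈ Finset.range (C+1),
            ∑ s ∈ Finset.range (A+B+C+1), if i+j+k = s then g s else 0 := by
          refine Finset.sum_congr rfl fun i hi => Finset.sum_congr rfl fun j hj =>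
            Finset.sum_congr rfl fun k hk => ?_
          simp only [Finset.mem_range] at hi hj hk
          rw [Finset.sum_ite_eq (Finset.range (A+B+C+1)) (i+j+k) g]
          rw [if_pos (Finset.mem_range.mpr (by omega))]
      _ = ∑ i ∈ Finset.range (A+1), ∑ j ∈ Finset.range (B+1), ∑ s ∈ Finset.range (A+B+C+1),
            ∑ k ∈ Finset.range (C+1), if i+j+k = s then g s else 0 :=
          Finset.sum_congr rfl fun i _ => Finset.sum_congr rfl fun j _ => Finset.sum_comm
      _ = ∑ i ∈ Finset.range (A+1), ∑ s ∈ Finset.range (A+B+C+1), ∑ j ∈ Finset.range (B+1),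
            ∑ k ∈ Finset.range (C+1), if i+j+k = s then g s else 0 :=
          Finset.sum_congr rfl fun i _ => Finset.sum_comm
      _ = _ := Finset.sum_comm
  rw [grading]
  exact Finset.sum_le_sum fun s _ => CL A B C s (g s)

lemma shift_sum (G : ℕ → ℕ) (n W : ℕ) (h0 : G 0 = 0) (hW : ∀ u, W ≤ u → G u = 0) :
    ∑ s ∈ Finset.range n, G (s-2) ≤ ∑ u ∈ Finset.Ico 1 W, G u := by
  set M := n + W + 1 with hM
  have ext : ∑ s ∈ Finset.range n, G (s-2) ≤ ∑ s ∈ Finset.range (M+2), G (s-2) :=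
    Finset.sum_le_sum_of_subset (Finset.range_subset_range.mpr (by omega))
  refine le_trans ext (le_of_eq ?_)
  have e1 : ∑ s ∈ Finset.range (M+2), G (s-2)
      = (∑ i ∈ Finset.range (M+1), G (i+1-2)) + G (0-2) :=
    Finset.sum_range_succ' (fun s => G (s-2)) (M+1)
  have e2 : ∑ i ∈ Finset.range (M+1), G (i+1-2)
      = (∑ i ∈ Finset.range M, G (i+1+1-2)) + G (0+1-2) :=
    Finset.sum_range_succ' (fun i => G (i+1-2)) M
  have e3 : ∀ i : ℕ, G (i+1+1-2) = G i := fun i => by congr 1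
  rw [e1, e2, Finset.sum_congr rfl fun i _ => e3 i]
  simp only [h0]
  have e4 : ∑ i ∈ Finset.range M, G i = ∑ i ∈ Finset.Ico 1 M, G i := by
    symm
    refine Finset.sum_subset ?_ ?_
    · intro x hx
      simp only [Finset.mem_Ico, Finset.mem_range] at *
      omega
    · intro x hx hnx
      simp only [Finset.mem_Ico, Finset.mem_range] at *
      have : x = 0 := by omega
      rw [this, h0]
  have e5 : ∑ i ∈ Finset.Ico 1 M, G i = ∑ i ∈ Finset.Ico 1 W, G i := by
    symm
    refine Finset.sum_subset ?_ ?_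
    · intro x hx
      simp only [Finset.mem_Ico] at *
      omega
    · intro x hx hnx
      simp only [Finset.mem_Ico] at *
      exact hW x (by omega)
  rw [e4, e5]
  norm_num

lemma main (m : ℕ) :
    (∀ A B C, SS m A B C ≤ 512 * 4096^m * (A+B+C-3*m+1)!) ∧
    (∀ A B C R, UU m A B C R ≤ 512 * 4096^m * ((R-3*m+1)! * (R-3*m+3)^2)) := by
  induction m with
  | zero =>
    constructor
    · intro A B C
      rw [SS]
      simp only [pow_zero, mul_one]
      have hf := Nat.factorial_pos (A+B+C-3*0+1)
      split
      · omega
      · exact Nat.zero_le _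
    · intro A B C R
      have h1 : UU 0 A B C R ≤ (R+1)^2 * 1 := by
        rw [UU]
        refine le_trans (Finset.sum_le_sum fun A' _ => Finset.sum_le_sum fun B' _ =>
          Finset.sum_le_sum fun C' _ => ?_) (CL A B C R 1)
        split_ifs with hc
        · rw [SS]
          split <;> omega
        · exact le_rfl
      refine le_trans h1 ?_
      have hf := Nat.factorial_pos (R-3*0+1)
      have hsq : (R+1)^2 ≤ (R-3*0+3)^2 := Nat.pow_le_pow_left (by omega) 2
      calc (R+1)^2 * 1 = (R+1)^2 := by ring
        _ ≤ (R-3*0+3)^2 := hsq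
        _ ≤ 512 * 4096^0 * ((R-3*0+1)! * (R-3*0+3)^2) := by
            simp only [pow_zero, mul_one]
            nlinarith [hf]
  | succ m ih =>
    obtain ⟨P, Q⟩ := ih
    constructor
    · -- P (m+1)
      intro A B C
      set N := A + B + C with hN
      by_cases hNlt : N < 3*(m+1)
      · rw [SS_zero (m+1) A B C (by omega)]
        exact Nat.zero_le _
      · push_neg at hNlt
        set V := N - 3*m - 1 with hV
        have hV2 : 2 ≤ V := by omega
        set Km := 512 * 4096^m with hKm
        set H : ℕ → ℕ := fun u => if 1 ≤ u ∧ u ≤ V-1 then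
          Km * (min ((u+3)^2) ((V-u+2)^2) * (u ! * (V-u)!)) else 0 with hH
        have hHdef : ∀ u, H u = if 1 ≤ u ∧ u ≤ V-1 then
          Km * (min ((u+3)^2) ((V-u+2)^2) * (u ! * (V-u)!)) else 0 := fun _ => rfl
        rw [ID1]
        have hterm : ∀ R ∈ Finset.range (N+1),
            (if R+3 ≤ N then (N-R-2)! else 0) * UU m A B C R ≤ H (N-R-2) := by
          intro R hR
          simp only [Finset.mem_range] at hR
          by_cases hw : R+3 ≤ N
          · by_cases hR3 : R < 3*m
            · rw [UU_zero m A B C R hR3, mul_zero]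
              exact Nat.zero_le _
            · push_neg at hR3
              set u := N - R - 2 with hu
              have hu1 : 1 ≤ u := by omega
              have hu2 : u ≤ V - 1 := by omega
              have b1 : UU m A B C R ≤ Km * ((V-u)! * (V-u+2)^2) := by
                have := Q A B C R
                rw [show R-3*m+1 = V-u from by omega, show R-3*m+3 = V-u+2 from by omega] at this
                exact this
              have b2 : UU m A B C R ≤ (u+3)^2 * (Km * (V-u)!) := by
                have step : UU m A B C R ≤ (N-R+1)^2 * (Km * (R-3*m+1)!) := by
                  rw [UU]
                  refine le_trans (Finset.sum_le_sum fun A' hA' => Finset.sum_le_sum fun B' hB' =>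
                    Finset.sum_le_sum fun C' hC' => ?_) (CL2 A B C R (Km * (R-3*m+1)!))
                  split_ifs with hc
                  · have := P A' B' C'
                    rw [hc] at this
                    exact this
                  · exact le_rfl
                rw [show N-R+1 = u+3 from by omega, show R-3*m+1 = V-u from by omega] at step
                exact step
              rw [if_pos hw, hHdef, if_pos ⟨hu1, hu2⟩]
              rcases le_total ((u+3)^2) ((V-u+2)^2) with hmin | hmin
              · rw [min_eq_left hmin]
                calc u ! * UU m A B C R ≤ u ! * ((u+3)^2 * (Km * (V-u)!)) :=
                      Nat.mul_le_mul_left _ b2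
                  _ = Km * ((u+3)^2 * (u ! * (V-u)!)) := by ring
              · rw [min_eq_right hmin]
                calc u ! * UU m A B C R ≤ u ! * (Km * ((V-u)! * (V-u+2)^2)) :=
                      Nat.mul_le_mul_left _ b1
                  _ = Km * ((V-u+2)^2 * (u ! * (V-u)!)) := by ring
          · rw [if_neg hw, zero_mul]
            exact Nat.zero_le _
        calc (∑ R ∈ Finset.range (N+1), (if R+3 ≤ N then (N-R-2)! else 0) * UU m A B C R)
            ≤ ∑ R ∈ Finset.range (N+1), H (N-R-2) := Finset.sum_le_sum hterm
          _ = ∑ R ∈ Finset.range (N+1), H (R-2) := refl_sum N (fun t => H (t-2))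
          _ ≤ ∑ u ∈ Finset.Ico 1 V, H u := by
              refine shift_sum H (N+1) V ?_ ?_
              · rw [hHdef]; norm_num
              · intro u hu
                rw [hHdef, if_neg (by omega)]
          _ = Km * ∑ u ∈ Finset.Ico 1 V, min ((u+3)^2) ((V-u+2)^2) * (u ! * (V-u)!) := by
              rw [Finset.mul_sum]
              refine Finset.sum_congr rfl fun u hu => ?_
              simp only [Finset.mem_Ico] at hu
              rw [hHdef, if_pos ⟨hu.1, by omega⟩]
          _ ≤ Km * (4096 * (V-1)!) := Nat.mul_le_mul_left _ (L2 V)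
          _ = 512 * 4096^(m+1) * (N-3*(m+1)+1)! := by
              rw [show V-1 = N-3*(m+1)+1 from by omega, hKm]
              ring
    · -- Q (m+1)
      intro A B C R
      by_cases hRlt : R < 3*(m+1)
      · rw [UU_zero (m+1) A B C R hRlt]
        exact Nat.zero_le _
      · push_neg at hRlt
        set W := R - 3*m - 1 with hW
        have hW2 : 2 ≤ W := by omega
        set Km := 512 * 4096^m with hKm
        set H : ℕ → ℕ := fun u => if 1 ≤ u ∧ u ≤ W-1 then
          Km * ((u+3)^2 * (W-u+2)^2 * (u ! * (W-u)!)) else 0 with hH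
        have hHdef : ∀ u, H u = if 1 ≤ u ∧ u ≤ W-1 then
          Km * ((u+3)^2 * (W-u+2)^2 * (u ! * (W-u)!)) else 0 := fun _ => rfl
        refine le_trans (Qstep m A B C R) ?_
        have hterm : ∀ s ∈ Finset.range (A+B+C+1),
            (s+1)^2 * (if 3 ≤ s ∧ s ≤ R then (s-2)! * UU m A B C (R-s) else 0) ≤ H (s-2) := by
          intro s hs
          by_cases hc : 3 ≤ s ∧ s ≤ R
          · by_cases hz : R - s < 3*m
            · rw [if_pos hc, UU_zero m A B C (R-s) hz, mul_zero, mul_zero]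
              exact Nat.zero_le _
            · push_neg at hz
              set u := s - 2 with hu
              have hu1 : 1 ≤ u := by omega
              have hu2 : u ≤ W - 1 := by omega
              have b1 : UU m A B C (R-s) ≤ Km * ((W-u)! * (W-u+2)^2) := by
                have := Q A B C (R-s)
                rw [show R-s-3*m+1 = W-u from by omega,
                  show R-s-3*m+3 = W-u+2 from by omega] at this
                exact this
              rw [if_pos hc, hHdef, if_pos ⟨hu1, hu2⟩]
              calc (s+1)^2 * ((s-2)! * UU m A B C (R-s))
                  ≤ (s+1)^2 * ((s-2)! * (Km * ((W-u)! * (W-u+2)^2))) :=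
                    Nat.mul_le_mul_left _ (Nat.mul_le_mul_left _ b1)
                _ = (u+3)^2 * (u ! * (Km * ((W-u)! * (W-u+2)^2))) := by
                    rw [show s+1 = u+3 from by omega, show s-2 = u from rfl]
                _ = Km * ((u+3)^2 * (W-u+2)^2 * (u ! * (W-u)!)) := by ring
          · rw [if_neg hc, mul_zero]
            exact Nat.zero_le _
        calc (∑ s ∈ Finset.range (A+B+C+1),
              (s+1)^2 * (if 3 ≤ s ∧ s ≤ R then (s-2)! * UU m A B C (R-s) else 0))
            ≤ ∑ s ∈ Finset.range (A+B+C+1), H (s-2) := Finset.sum_le_sum hterm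
          _ ≤ ∑ u ∈ Finset.Ico 1 W, H u := by
              refine shift_sum H (A+B+C+1) W ?_ ?_
              · rw [hHdef]; norm_num
              · intro u hu
                rw [hHdef, if_neg (by omega)]
          _ = Km * ∑ u ∈ Finset.Ico 1 W, (u+3)^2 * (W-u+2)^2 * (u ! * (W-u)!) := by
              rw [Finset.mul_sum]
              refine Finset.sum_congr rfl fun u hu => ?_
              simp only [Finset.mem_Ico] at hu
              rw [hHdef, if_pos ⟨hu.1, by omega⟩]
          _ ≤ Km * (4096 * ((W-1)! * (W+1)^2)) := Nat.mul_le_mul_left _ (L1 W)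
          _ = 512 * 4096^(m+1) * ((R-3*(m+1)+1)! * (R-3*(m+1)+3)^2) := by
              rw [show W-1 = R-3*(m+1)+1 from by omega,
                show W+1 = R-3*(m+1)+3 from by omega, hKm]
              ring

lemma ifMul (c d : Prop) [Decidable c] [Decidable d] (x y : ℕ) :
    (if c ∧ d then x*y else 0) = (if c then x else 0) * (if d then y else 0) := by
  split_ifs <;> first | rfl | tauto | simp

lemma sum_adt (n N : ℕ) (f : (Fin (n+1) → ℕ) → ℕ) :
    ∑ x ∈ Finset.Nat.antidiagonalTuple (n+1) N, f x
      = ∑ p ∈ Finset.HasAntidiagonal.antidiagonal N, ∑ y ∈ Finset.Nat.antidiagonalTuple n p.2,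
          f (Fin.cons p.1 y) := by
  rw [Finset.sum_sigma']
  refine Finset.sum_nbij' (fun x => ⟨(x 0, ∑ i : Fin n, x i.succ), Fin.tail x⟩)
    (fun q => Fin.cons q.1.1 q.2) ?_ ?_ ?_ ?_ ?_
  · intro x hx
    rw [Finset.Nat.mem_antidiagonalTuple, Fin.sum_univ_succ] at hx
    simp only [Finset.mem_sigma, Finset.HasAntidiagonal.mem_antidiagonal, Finset.Nat.mem_antidiagonalTuple]
    exact ⟨hx, rfl⟩
  · intro q hq
    simp only [Finset.mem_sigma, Finset.HasAntidiagonal.mem_antidiagonal,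
      Finset.Nat.mem_antidiagonalTuple] at hq
    rw [Finset.Nat.mem_antidiagonalTuple, Fin.sum_univ_succ]
    simp only [Fin.cons_zero, Fin.cons_succ]
    rw [hq.2]
    exact hq.1
  · intro x hx
    exact Fin.cons_self_tail x
  · intro q hq
    simp only [Finset.mem_sigma, Finset.HasAntidiagonal.mem_antidiagonal,
      Finset.Nat.mem_antidiagonalTuple] at hq
    refine Sigma.ext ?_ ?_
    · simp only [Fin.cons_zero]
      rw [show (∑ i : Fin n, (Fin.cons q.1.1 q.2 : Fin (n+1) → ℕ) i.succ) = q.1.2 from by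
        simp only [Fin.cons_succ]; exact hq.2]
    all_goals simp [Fin.tail_cons]
  · intro x hx
    rw [Fin.cons_self_tail]

lemma swap6 {m : ℕ} (P Q R' : Finset (ℕ × ℕ)) (T : ℕ → Finset (Fin m → ℕ))
    (F : (ℕ × ℕ) → (Fin m → ℕ) → (ℕ × ℕ) → (Fin m → ℕ) → (ℕ × ℕ) → (Fin m → ℕ) → ℕ) :
    (∑ pa ∈ P, ∑ ya ∈ T pa.2, ∑ pb ∈ Q, ∑ yb ∈ T pb.2, ∑ pc ∈ R', ∑ yc ∈ T pc.2,
      F pa ya pb yb pc yc)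
    = ∑ pa ∈ P, ∑ pb ∈ Q, ∑ pc ∈ R', ∑ ya ∈ T pa.2, ∑ yb ∈ T pb.2, ∑ yc ∈ T pc.2,
      F pa ya pb yb pc yc := by
  refine Finset.sum_congr rfl fun pa _ => ?_
  calc (∑ ya ∈ T pa.2, ∑ pb ∈ Q, ∑ yb ∈ T pb.2, ∑ pc ∈ R', ∑ yc ∈ T pc.2, F pa ya pb yb pc yc)
      = ∑ pb ∈ Q, ∑ ya ∈ T pa.2, ∑ yb ∈ T pb.2, ∑ pc ∈ R', ∑ yc ∈ T pc.2, F pa ya pb yb pc yc :=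
        Finset.sum_comm
    _ = ∑ pb ∈ Q, ∑ ya ∈ T pa.2, ∑ pc ∈ R', ∑ yb ∈ T pb.2, ∑ yc ∈ T pc.2, F pa ya pb yb pc yc :=
        Finset.sum_congr rfl fun pb _ => Finset.sum_congr rfl fun ya _ => Finset.sum_comm
    _ = ∑ pb ∈ Q, ∑ pc ∈ R', ∑ ya ∈ T pa.2, ∑ yb ∈ T pb.2, ∑ yc ∈ T pc.2, F pa ya pb yb pc yc :=
        Finset.sum_congr rfl fun pb _ => Finset.sum_comm

lemma bridge : ∀ m A B C, (∑ a ∈ Finset.Nat.antidiagonalTuple m A,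
      ∑ b ∈ Finset.Nat.antidiagonalTuple m B,
        ∑ c ∈ Finset.Nat.antidiagonalTuple m C,
          if ∀ i, 3 ≤ a i + b i + c i then ∏ i, (a i + b i + c i - 2)! else 0)
    = SS m A B C := by
  intro m
  induction m with
  | zero =>
    intro A B C
    cases A <;> cases B <;> cases C <;> simp [SS]
  | succ m ih =>
    intro A B C
    set F : (ℕ × ℕ) → (Fin m → ℕ) → (ℕ × ℕ) → (Fin m → ℕ) → (ℕ × ℕ) → (Fin m → ℕ) → ℕ :=
      fun pa ya pb yb pc yc =>
        if ∀ i, 3 ≤ (Fin.cons pa.1 ya : Fin (m+1) → ℕ) i + (Fin.cons pb.1 yb : Fin (m+1) → ℕ) i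
            + (Fin.cons pc.1 yc : Fin (m+1) → ℕ) i
        then ∏ i, ((Fin.cons pa.1 ya : Fin (m+1) → ℕ) i + (Fin.cons pb.1 yb : Fin (m+1) → ℕ) i
            + (Fin.cons pc.1 yc : Fin (m+1) → ℕ) i - 2)! else 0 with hF
    calc (∑ a ∈ Finset.Nat.antidiagonalTuple (m+1) A, ∑ b ∈ Finset.Nat.antidiagonalTuple (m+1) B,
          ∑ c ∈ Finset.Nat.antidiagonalTuple (m+1) C,
          if ∀ i, 3 ≤ a i + b i + c i then ∏ i, (a i + b i + c i - 2)! else 0)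
        = ∑ pa ∈ Finset.HasAntidiagonal.antidiagonal A, ∑ ya ∈ Finset.Nat.antidiagonalTuple m pa.2,
            ∑ pb ∈ Finset.HasAntidiagonal.antidiagonal B, ∑ yb ∈ Finset.Nat.antidiagonalTuple m pb.2,
            ∑ pc ∈ Finset.HasAntidiagonal.antidiagonal C, ∑ yc ∈ Finset.Nat.antidiagonalTuple m pc.2,
            F pa ya pb yb pc yc := by
          rw [sum_adt m A]
          refine Finset.sum_congr rfl fun pa _ => Finset.sum_congr rfl fun ya _ => ?_
          rw [sum_adt m B]
          refine Finset.sum_congr rfl fun pb _ => Finset.sum_congr rfl fun yb _ => ?_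
          rw [sum_adt m C]
      _ = ∑ pa ∈ Finset.HasAntidiagonal.antidiagonal A, ∑ pb ∈ Finset.HasAntidiagonal.antidiagonal B,
            ∑ pc ∈ Finset.HasAntidiagonal.antidiagonal C, ∑ ya ∈ Finset.Nat.antidiagonalTuple m pa.2,
            ∑ yb ∈ Finset.Nat.antidiagonalTuple m pb.2,
            ∑ yc ∈ Finset.Nat.antidiagonalTuple m pc.2,
            F pa ya pb yb pc yc :=
          swap6 (Finset.HasAntidiagonal.antidiagonal A) (Finset.HasAntidiagonal.antidiagonal B) (Finset.HasAntidiagonal.antidiagonal C)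
            (Finset.Nat.antidiagonalTuple m) F
      _ = ∑ pa ∈ Finset.HasAntidiagonal.antidiagonal A, ∑ pb ∈ Finset.HasAntidiagonal.antidiagonal B,
            ∑ pc ∈ Finset.HasAntidiagonal.antidiagonal C,
            (if 3 ≤ pa.1 + pb.1 + pc.1 then (pa.1 + pb.1 + pc.1 - 2)! * SS m pa.2 pb.2 pc.2
              else 0) := by
          refine Finset.sum_congr rfl fun pa _ => Finset.sum_congr rfl fun pb _ =>
            Finset.sum_congr rfl fun pc _ => ?_
          have hbody : ∀ (ya yb yc : Fin m → ℕ), F pa ya pb yb pc yc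
              = (if 3 ≤ pa.1 + pb.1 + pc.1 then (pa.1 + pb.1 + pc.1 - 2)! else 0)
                * (if ∀ i, 3 ≤ ya i + yb i + yc i then ∏ i, (ya i + yb i + yc i - 2)! else 0) := by
            intro ya yb yc
            rw [hF, ← ifMul]
            refine if_congr ?_ ?_ rfl
            · rw [Fin.forall_fin_succ]
              simp [Fin.cons_succ]
            · rw [Fin.prod_univ_succ]
              simp [Fin.cons_succ]
          calc (∑ ya ∈ Finset.Nat.antidiagonalTuple m pa.2,
                ∑ yb ∈ Finset.Nat.antidiagonalTuple m pb.2,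
                ∑ yc ∈ Finset.Nat.antidiagonalTuple m pc.2, F pa ya pb yb pc yc)
              = (if 3 ≤ pa.1 + pb.1 + pc.1 then (pa.1 + pb.1 + pc.1 - 2)! else 0)
                * (∑ ya ∈ Finset.Nat.antidiagonalTuple m pa.2,
                  ∑ yb ∈ Finset.Nat.antidiagonalTuple m pb.2,
                  ∑ yc ∈ Finset.Nat.antidiagonalTuple m pc.2,
                  if ∀ i, 3 ≤ ya i + yb i + yc i then ∏ i, (ya i + yb i + yc i - 2)! else 0) := by
                rw [Finset.mul_sum]
                refine Finset.sum_congr rfl fun ya _ => ?_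
                rw [Finset.mul_sum]
                refine Finset.sum_congr rfl fun yb _ => ?_
                rw [Finset.mul_sum]
                exact Finset.sum_congr rfl fun yc _ => hbody ya yb yc
            _ = (if 3 ≤ pa.1 + pb.1 + pc.1 then (pa.1 + pb.1 + pc.1 - 2)! else 0)
                * SS m pa.2 pb.2 pc.2 := by rw [ih pa.2 pb.2 pc.2]
            _ = (if 3 ≤ pa.1 + pb.1 + pc.1 then (pa.1 + pb.1 + pc.1 - 2)! * SS m pa.2 pb.2 pc.2
                  else 0) := by
                rw [ite_mul, zero_mul]
      _ = SS (m+1) A B C := by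
          rw [SS]
          rw [Finset.Nat.sum_antidiagonal_eq_sum_range_succ (fun x y =>
            ∑ pb ∈ Finset.HasAntidiagonal.antidiagonal B, ∑ pc ∈ Finset.HasAntidiagonal.antidiagonal C,
            (if 3 ≤ x + pb.1 + pc.1 then (x + pb.1 + pc.1 - 2)! * SS m y pb.2 pc.2 else 0)) A]
          refine Finset.sum_congr rfl fun i _ => ?_
          rw [Finset.Nat.sum_antidiagonal_eq_sum_range_succ (fun x y =>
            ∑ pc ∈ Finset.HasAntidiagonal.antidiagonal C,
            (if 3 ≤ i + x + pc.1 then (i + x + pc.1 - 2)! * SS m (A-i) y pc.2 else 0)) B]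
          refine Finset.sum_congr rfl fun j _ => ?_
          rw [Finset.Nat.sum_antidiagonal_eq_sum_range_succ (fun x y =>
            (if 3 ≤ i + j + x then (i + j + x - 2)! * SS m (A-i) (B-j) y else 0)) C]


/-- For integers `m ≥ 1` and `A, B, C ≥ 0`, the sum over all triples of
nonnegative compositions `a` of `A`, `b` of `B`, `c` of `C`, each of length `m`, satisfying
`a i + b i + c i ≥ 3` for every `i`, of the product `∏ i, (a i + b i + c i - 2)!`, is at most
`2 ^ (12 * m + 9) * (A + B + C - 3 * m + 1)!` (with truncated natural subtraction). -/
theorem stmt0 (m A B C : ℕ) (hm : 1 ≤ m) :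
    (∑ a ∈ Finset.Nat.antidiagonalTuple m A,
      ∑ b ∈ Finset.Nat.antidiagonalTuple m B,
        ∑ c ∈ Finset.Nat.antidiagonalTuple m C,
          if ∀ i, 3 ≤ a i + b i + c i then ∏ i, (a i + b i + c i - 2)! else 0)
      ≤ 2 ^ (12 * m + 9) * (A + B + C - 3 * m + 1)! := by
  rw [bridge m A B C]
  refine le_trans ((main m).1 A B C) (le_of_eq ?_)
  have h : 512 * 4096^m = 2^(12*m+9) := by
    rw [show (512:ℕ) = 2^9 from rfl, show (4096:ℕ) = 2^12 from rfl, ← pow_mul, ← pow_add]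
    ring_nf
  rw [h]
end

section
/- Let R, δ > 0 be real numbers, and let K be an integer such that K > (1 + 2δ)R. Then |e^R − Σ_{j=0}^K R^j / j!| < δ^{−1} (1 + δ)^{−δR} e^R. -/
/-- Error estimate for the truncation of the Taylor series of `exp`:
for real `R, δ > 0` and an integer `K > (1 + 2δ)R`,
`|e^R − ∑_{j=0}^K R^j / j!| < δ⁻¹ (1 + δ)^{−δR} e^R`. -/
theorem stmt2 (R δ : ℝ) (hR : 0 < R) (hδ : 0 < δ) (K : ℤ) (hK : (1 + 2 * δ) * R < K) :
    |Real.exp R - ∑ j ∈ Finset.range (K.toNat + 1), R ^ j / (Nat.factorial j : ℝ)| <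
      δ⁻¹ * (1 + δ) ^ (-(δ * R)) * Real.exp R := by
  have h1δ : (0 : ℝ) < 1 + δ := by linarith
  set n : ℕ := K.toNat + 1 with hn
  clear_value n
  have hexp : ∀ x : ℝ, Real.exp x = ∑' j : ℕ, x ^ j / (Nat.factorial j : ℝ) := by
    intro x
    rw [Real.exp_eq_exp_ℝ, NormedSpace.exp_eq_tsum_div]
  have hsum : ∀ x : ℝ, Summable (fun j : ℕ => x ^ j / (Nat.factorial j : ℝ)) :=
    fun x => Real.summable_pow_div_factorial x
  have hsum' : ∀ x : ℝ, Summable (fun i : ℕ => x ^ (i + n) / (Nat.factorial (i + n) : ℝ)) :=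
    fun x => ((summable_nat_add_iff n).mpr (hsum x))
  have htail : ∀ x : ℝ,
      Real.exp x - ∑ j ∈ Finset.range n, x ^ j / (Nat.factorial j : ℝ)
        = ∑' i : ℕ, x ^ (i + n) / (Nat.factorial (i + n) : ℝ) := by
    intro x
    rw [hexp x, ← Summable.sum_add_tsum_nat_add n (hsum x)]
    ring
  -- positivity of the tail
  have hpos : 0 < ∑' i : ℕ, R ^ (i + n) / (Nat.factorial (i + n) : ℝ) := by
    refine Summable.tsum_pos (hsum' R) (fun i => by positivity) 0 (by positivity)
  have hKpos : (0 : ℝ) < (K : ℝ) := lt_trans (by positivity) hK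
  have hKnn : (0 : ℤ) ≤ K := by exact_mod_cast le_of_lt (by exact_mod_cast hKpos)
  have hnK : (n : ℝ) = (K : ℝ) + 1 := by
    have h : ((K.toNat : ℤ) : ℝ) = (K : ℝ) := by rw [Int.toNat_of_nonneg hKnn]
    push_cast at h
    rw [hn]
    push_cast
    linarith
  -- upper bound on the tail
  have hbound : ∑' i : ℕ, R ^ (i + n) / (Nat.factorial (i + n) : ℝ)
      ≤ (1 + δ)⁻¹ ^ n * Real.exp ((1 + δ) * R) := by
    have h1 : ∑' i : ℕ, R ^ (i + n) / (Nat.factorial (i + n) : ℝ)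
        ≤ ∑' i : ℕ, (1 + δ)⁻¹ ^ n * (((1 + δ) * R) ^ (i + n) / (Nat.factorial (i + n) : ℝ)) := by
      refine Summable.tsum_le_tsum (fun i => ?_) (hsum' R) (((hsum' ((1 + δ) * R))).mul_left _)
      have hfac : (0 : ℝ) < (Nat.factorial (i + n) : ℝ) := by positivity
      have h2 : (1 : ℝ) ≤ (1 + δ)⁻¹ ^ n * (1 + δ) ^ (i + n) := by
        rw [inv_pow, inv_mul_eq_div, le_div_iff₀ (by positivity), one_mul]
        exact pow_le_pow_right₀ (by linarith) (Nat.le_add_left n i)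
      calc R ^ (i + n) / (Nat.factorial (i + n) : ℝ)
          = 1 * (R ^ (i + n) / (Nat.factorial (i + n) : ℝ)) := (one_mul _).symm
        _ ≤ ((1 + δ)⁻¹ ^ n * (1 + δ) ^ (i + n)) * (R ^ (i + n) / (Nat.factorial (i + n) : ℝ)) :=
            mul_le_mul_of_nonneg_right h2 (by positivity)
        _ = (1 + δ)⁻¹ ^ n * (((1 + δ) * R) ^ (i + n) / (Nat.factorial (i + n) : ℝ)) := by
            rw [mul_pow]; ring
    have h3 : ∑' i : ℕ, (((1 + δ) * R) ^ (i + n) / (Nat.factorial (i + n) : ℝ))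
        ≤ Real.exp ((1 + δ) * R) := by
      rw [hexp ((1 + δ) * R), ← Summable.sum_add_tsum_nat_add n (hsum ((1 + δ) * R))]
      have : 0 ≤ ∑ j ∈ Finset.range n, ((1 + δ) * R) ^ j / (Nat.factorial j : ℝ) :=
        Finset.sum_nonneg fun j _ => by positivity
      linarith
    calc ∑' i : ℕ, R ^ (i + n) / (Nat.factorial (i + n) : ℝ)
        ≤ ∑' i : ℕ, (1 + δ)⁻¹ ^ n * (((1 + δ) * R) ^ (i + n) / (Nat.factorial (i + n) : ℝ)) := h1
      _ = (1 + δ)⁻¹ ^ n * ∑' i : ℕ, (((1 + δ) * R) ^ (i + n) / (Nat.factorial (i + n) : ℝ)) :=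
          tsum_mul_left
      _ ≤ (1 + δ)⁻¹ ^ n * Real.exp ((1 + δ) * R) :=
          mul_le_mul_of_nonneg_left h3 (by positivity)
  -- the final comparison
  have hlog : δ / (1 + δ) ≤ Real.log (1 + δ) := by
    have h := Real.log_le_sub_one_of_pos (show (0:ℝ) < (1 + δ)⁻¹ by positivity)
    rw [Real.log_inv] at h
    have h2 : (1 + δ)⁻¹ - 1 = -(δ / (1 + δ)) := by field_simp; ring
    rw [h2] at h
    linarith
  have hlogpos : 0 < Real.log (1 + δ) := Real.log_pos (by linarith)
  have hfinal : (1 + δ)⁻¹ ^ n * Real.exp ((1 + δ) * R)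
      < δ⁻¹ * (1 + δ) ^ (-(δ * R)) * Real.exp R := by
    have hpow : (1 + δ)⁻¹ ^ n = Real.exp (-(n : ℝ) * Real.log (1 + δ)) := by
      rw [← Real.rpow_natCast ((1 + δ)⁻¹) n, Real.rpow_def_of_pos (by positivity),
        Real.log_inv]
      ring_nf
    have hrpow : (1 + δ) ^ (-(δ * R)) = Real.exp (-(δ * R) * Real.log (1 + δ)) := by
      rw [Real.rpow_def_of_pos h1δ, mul_comm]
    have hδinv : δ⁻¹ = Real.exp (-Real.log δ) := by rw [Real.exp_neg, Real.exp_log hδ]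
    rw [hpow, hrpow, hδinv, ← Real.exp_add, ← Real.exp_add, ← Real.exp_add]
    refine Real.exp_lt_exp.mpr ?_
    have hn1 : (1 + δ) * R + 1 < (n : ℝ) - δ * R := by rw [hnK]; nlinarith
    have hstep : ((1 + δ) * R + 1) * Real.log (1 + δ)
        < ((n : ℝ) - δ * R) * Real.log (1 + δ) :=
      mul_lt_mul_of_pos_right hn1 hlogpos
    have hlb : δ * R + Real.log δ ≤ ((1 + δ) * R + 1) * Real.log (1 + δ) := by
      have h1 : δ * R ≤ (1 + δ) * R * Real.log (1 + δ) := by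
        calc δ * R = δ / (1 + δ) * ((1 + δ) * R) := by field_simp
          _ ≤ Real.log (1 + δ) * ((1 + δ) * R) :=
              mul_le_mul_of_nonneg_right hlog (by positivity)
          _ = (1 + δ) * R * Real.log (1 + δ) := by ring
      have h2 : Real.log δ ≤ Real.log (1 + δ) := Real.log_le_log hδ (by linarith)
      have expand : ((1 + δ) * R + 1) * Real.log (1 + δ)
          = (1 + δ) * R * Real.log (1 + δ) + Real.log (1 + δ) := by ring
      rw [expand]
      exact add_le_add h1 h2
    have key : δ * R + Real.log δ
        < (n : ℝ) * Real.log (1 + δ) - δ * R * Real.log (1 + δ) := by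
      have e : ((n : ℝ) - δ * R) * Real.log (1 + δ)
          = (n : ℝ) * Real.log (1 + δ) - δ * R * Real.log (1 + δ) := by ring
      rw [e] at hstep
      exact lt_of_le_of_lt hlb hstep
    linarith [key]
  have habs : |Real.exp R - ∑ j ∈ Finset.range n, R ^ j / (Nat.factorial j : ℝ)|
      = Real.exp R - ∑ j ∈ Finset.range n, R ^ j / (Nat.factorial j : ℝ) := by
    rw [abs_of_pos]; rw [htail R]; exact hpos
  rw [habs, htail R]
  exact lt_of_le_of_lt hbound hfinal
end

section
/- Let g', g'' ≥ 1 and n', n'' ≥ 0 be integers, and set g = g' + g'' and n = n' + n''. Then binom(n, n') · binom(g, g') · (6g' + 2n' − 3)!! · (6g'' + 2n'' − 3)!! / (6g + 2n − 3)!! ≤ 1 / ((6g + 2n − 3) · binom(2g − 2, 2g' − 1)). -/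
open Nat

lemma vand_le (m n i j : ℕ) : m.choose i * n.choose j ≤ (m + n).choose (i + j) := by
  rw [Nat.add_choose_eq]
  exact Finset.single_le_sum (f := fun p : ℕ × ℕ => m.choose p.1 * n.choose p.2)
    (fun _ _ => Nat.zero_le _) (show (i, j) ∈ Finset.HasAntidiagonal.antidiagonal (i + j) from Finset.HasAntidiagonal.mem_antidiagonal.2 rfl)

lemma df_fact (P : ℕ) : (2 * P + 1)‼ * (2 ^ (P + 1) * (P + 1)!) = (2 * P + 2)! := by
  have h1 : (2 * P + 2)! = (2 * P + 2)‼ * (2 * P + 1)‼ := by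
    have := Nat.factorial_eq_mul_doubleFactorial (2 * P + 1)
    simpa [show 2 * P + 1 + 1 = 2 * P + 2 by ring] using this
  have h2 : (2 * P + 2)‼ = 2 ^ (P + 1) * (P + 1)! := by
    have := Nat.doubleFactorial_two_mul (P + 1)
    simpa [show 2 * (P + 1) = 2 * P + 2 by ring] using this
  rw [h1, h2]; ring

lemma core (P Q X : ℕ) (hX : X ≤ (P + Q + 2).choose (P + 1)) :
    X * (2 * P + 1)‼ * (2 * Q + 1)‼ ≤ (2 * P + 2 * Q + 3)‼ := by
  have hp := df_fact P
  have hq := df_fact Q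
  have hpq : (2 * P + 2 * Q + 3)‼ * (2 ^ (P + Q + 2) * (P + Q + 2)!) = (2 * P + 2 * Q + 4)! := by
    have := df_fact (P + Q + 1)
    calc (2 * P + 2 * Q + 3)‼ * (2 ^ (P + Q + 2) * (P + Q + 2)!)
        = (2 * (P + Q + 1) + 1)‼ * (2 ^ (P + Q + 1 + 1) * (P + Q + 1 + 1)!) := by ring_nf
      _ = (2 * (P + Q + 1) + 2)! := this
      _ = (2 * P + 2 * Q + 4)! := by ring_nf
  -- binomial inequality
  have hvand : (P + Q + 2).choose (P + 1) * (P + Q + 2).choose (P + 1)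
      ≤ (2 * P + 2 * Q + 4).choose (2 * P + 2) := by
    have := vand_le (P + Q + 2) (P + Q + 2) (P + 1) (P + 1)
    calc (P + Q + 2).choose (P + 1) * (P + Q + 2).choose (P + 1)
        ≤ ((P + Q + 2) + (P + Q + 2)).choose ((P + 1) + (P + 1)) := this
      _ = (2 * P + 2 * Q + 4).choose (2 * P + 2) := by ring_nf
  have hbin : X * (P + Q + 2).choose (P + 1) ≤ (2 * P + 2 * Q + 4).choose (2 * P + 2) :=
    le_trans (Nat.mul_le_mul_right _ hX) hvand
  -- factorial identities
  have e1 : (P + Q + 2).choose (P + 1) * (P + 1)! * (Q + 1)! = (P + Q + 2)! := by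
    have h := Nat.choose_mul_factorial_mul_factorial (n := P + Q + 2) (k := P + 1) (by omega)
    rwa [show P + Q + 2 - (P + 1) = Q + 1 by omega] at h
  have e2 : (2 * P + 2 * Q + 4).choose (2 * P + 2) * (2 * P + 2)! * (2 * Q + 2)!
      = (2 * P + 2 * Q + 4)! := by
    have h := Nat.choose_mul_factorial_mul_factorial (n := 2 * P + 2 * Q + 4) (k := 2 * P + 2)
      (by omega)
    rwa [show 2 * P + 2 * Q + 4 - (2 * P + 2) = 2 * Q + 2 by omega] at h
  have big : X * (P + Q + 2)! * ((2 * P + 2)! * (2 * Q + 2)!)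
      ≤ (2 * P + 2 * Q + 4)! * ((P + 1)! * (Q + 1)!) := by
    calc X * (P + Q + 2)! * ((2 * P + 2)! * (2 * Q + 2)!)
        = X * ((P + Q + 2).choose (P + 1) * (P + 1)! * (Q + 1)!) *
            ((2 * P + 2)! * (2 * Q + 2)!) := by rw [e1]
      _ = (X * (P + Q + 2).choose (P + 1)) * ((2 * P + 2)! * (2 * Q + 2)!) *
            ((P + 1)! * (Q + 1)!) := by ring
      _ ≤ (2 * P + 2 * Q + 4).choose (2 * P + 2) * ((2 * P + 2)! * (2 * Q + 2)!) *
            ((P + 1)! * (Q + 1)!) := by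
            exact Nat.mul_le_mul_right _ (Nat.mul_le_mul_right _ hbin)
      _ = ((2 * P + 2 * Q + 4).choose (2 * P + 2) * (2 * P + 2)! * (2 * Q + 2)!) *
            ((P + 1)! * (Q + 1)!) := by ring
      _ = (2 * P + 2 * Q + 4)! * ((P + 1)! * (Q + 1)!) := by rw [e2]
  have hc : 0 < 2 ^ (P + Q + 2) * ((P + 1)! * ((Q + 1)! * (P + Q + 2)!)) := by positivity
  refine Nat.le_of_mul_le_mul_left ?_ hc
  calc 2 ^ (P + Q + 2) * ((P + 1)! * ((Q + 1)! * (P + Q + 2)!)) *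
        (X * (2 * P + 1)‼ * (2 * Q + 1)‼)
      = X * (P + Q + 2)! * (((2 * P + 1)‼ * (2 ^ (P + 1) * (P + 1)!)) *
          ((2 * Q + 1)‼ * (2 ^ (Q + 1) * (Q + 1)!))) := by ring
    _ = X * (P + Q + 2)! * ((2 * P + 2)! * (2 * Q + 2)!) := by rw [hp, hq]
    _ ≤ (2 * P + 2 * Q + 4)! * ((P + 1)! * (Q + 1)!) := big
    _ = ((2 * P + 2 * Q + 3)‼ * (2 ^ (P + Q + 2) * (P + Q + 2)!)) *
          ((P + 1)! * (Q + 1)!) := by rw [hpq]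
    _ = 2 ^ (P + Q + 2) * ((P + 1)! * ((Q + 1)! * (P + Q + 2)!)) * (2 * P + 2 * Q + 3)‼ := by
          ring

/-- For integers `g', g'' ≥ 1` and `n', n'' ≥ 0`, with `g = g' + g''` and
`n = n' + n''`:
`C(n,n') C(g,g') (6g'+2n'−3)!! (6g''+2n''−3)!! / (6g+2n−3)!! ≤ 1 / ((6g+2n−3) C(2g−2, 2g'−1))`. -/
theorem stmt3 (g' g'' n' n'' : ℕ) (hg' : 1 ≤ g') (hg'' : 1 ≤ g'') :
    (Nat.choose (n' + n'') n' : ℝ) * (Nat.choose (g' + g'') g') *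
        (Nat.doubleFactorial (6 * g' + 2 * n' - 3)) *
        (Nat.doubleFactorial (6 * g'' + 2 * n'' - 3)) /
        (Nat.doubleFactorial (6 * (g' + g'') + 2 * (n' + n'') - 3)) ≤
      1 / (((6 * (g' + g'') + 2 * (n' + n'') - 3) *
        Nat.choose (2 * (g' + g'') - 2) (2 * g' - 1) : ℕ) : ℝ) := by
  set P : ℕ := 3 * g' + n' - 2 with hP
  set Q : ℕ := 3 * g'' + n'' - 2 with hQ
  have eP : 6 * g' + 2 * n' - 3 = 2 * P + 1 := by omega
  have eQ : 6 * g'' + 2 * n'' - 3 = 2 * Q + 1 := by omega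
  have eN : 6 * (g' + g'') + 2 * (n' + n'') - 3 = 2 * (P + Q) + 5 := by omega
  -- the combinatorial bound
  have hX : (n' + n'').choose n' * (g' + g'').choose g' *
      (2 * (g' + g'') - 2).choose (2 * g' - 1) ≤ (P + Q + 2).choose (P + 1) := by
    have h1 : (n' + n'').choose n' * (g' + g'').choose g' ≤
        ((n' + n'') + (g' + g'')).choose (n' + g') := vand_le _ _ _ _
    have h2 : ((n' + n'') + (g' + g'')).choose (n' + g') *
        (2 * (g' + g'') - 2).choose (2 * g' - 1) ≤
        ((n' + n'') + (g' + g'') + (2 * (g' + g'') - 2)).choose ((n' + g') + (2 * g' - 1)) :=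
      vand_le _ _ _ _
    have e3 : (n' + n'') + (g' + g'') + (2 * (g' + g'') - 2) = P + Q + 2 := by omega
    have e4 : (n' + g') + (2 * g' - 1) = P + 1 := by omega
    calc (n' + n'').choose n' * (g' + g'').choose g' *
          (2 * (g' + g'') - 2).choose (2 * g' - 1)
        ≤ ((n' + n'') + (g' + g'')).choose (n' + g') *
          (2 * (g' + g'') - 2).choose (2 * g' - 1) := Nat.mul_le_mul_right _ h1
      _ ≤ ((n' + n'') + (g' + g'') + (2 * (g' + g'') - 2)).choose ((n' + g') + (2 * g' - 1)) := h2
      _ = (P + Q + 2).choose (P + 1) := by rw [e3, e4]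
  have hcore := core P Q ((n' + n'').choose n' * (g' + g'').choose g' *
      (2 * (g' + g'') - 2).choose (2 * g' - 1)) hX
  -- express (2(P+Q)+5)!!
  have hNdf : (2 * (P + Q) + 5)‼ = (2 * (P + Q) + 5) * (2 * P + 2 * Q + 3)‼ := by
    rw [show 2 * (P + Q) + 5 = 2 * P + 2 * Q + 3 + 2 from by ring]
    exact Nat.doubleFactorial_add_two _
  -- key natural number inequality
  have key : (n' + n'').choose n' * (g' + g'').choose g' * (2 * P + 1)‼ * (2 * Q + 1)‼ *
      ((2 * (P + Q) + 5) * (2 * (g' + g'') - 2).choose (2 * g' - 1))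
      ≤ (2 * (P + Q) + 5)‼ := by
    rw [hNdf]
    calc (n' + n'').choose n' * (g' + g'').choose g' * (2 * P + 1)‼ * (2 * Q + 1)‼ *
          ((2 * (P + Q) + 5) * (2 * (g' + g'') - 2).choose (2 * g' - 1))
        = (2 * (P + Q) + 5) * ((n' + n'').choose n' * (g' + g'').choose g' *
            (2 * (g' + g'') - 2).choose (2 * g' - 1) * (2 * P + 1)‼ * (2 * Q + 1)‼) := by ring
      _ ≤ (2 * (P + Q) + 5) * (2 * P + 2 * Q + 3)‼ := Nat.mul_le_mul_left _ hcore
  -- to the reals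
  have hdfpos : (0 : ℝ) < ((2 * (P + Q) + 5)‼ : ℝ) := by
    exact_mod_cast Nat.doubleFactorial_pos _
  have hKpos : (0 : ℝ) < (((2 * (P + Q) + 5) *
      (2 * (g' + g'') - 2).choose (2 * g' - 1) : ℕ) : ℝ) := by
    have hc : 0 < (2 * (g' + g'') - 2).choose (2 * g' - 1) :=
      Nat.choose_pos (by omega)
    have : 0 < (2 * (P + Q) + 5) * (2 * (g' + g'') - 2).choose (2 * g' - 1) := by positivity
    exact_mod_cast this
  rw [eP, eQ, eN]
  rw [div_le_div_iff₀ hdfpos hKpos]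
  have := (Nat.cast_le (α := ℝ)).2 key
  push_cast at this ⊢
  nlinarith [this]
end

section
/- Fix integers k ≥ 1, n ≥ 2, g ≥ 0 and an n-tuple d = (d_1, …, d_n) of nonnegative integers such that d_j ≥ k + 1 for every j and Σ_j d_j + k = 3g + n − 3. Then S ≤ (n + 1) / (8g²). -/
open Finset

namespace Stmt4Aux

open Nat

lemma odd_df (A : ℕ) : (2*A+1)! = (2*A+1)‼ * (2^A * A !) := by
  have h := Nat.factorial_eq_mul_doubleFactorial (2*A)
  rwa [Nat.doubleFactorial_two_mul] at h

lemma choose_mul_choose_le (m n i j : ℕ) :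
    m.choose i * n.choose j ≤ (m+n).choose (i+j) := by
  rw [Nat.add_choose_eq]
  exact Finset.single_le_sum (f := fun ij : ℕ × ℕ => m.choose ij.1 * n.choose ij.2)
    (fun _ _ => Nat.zero_le _) (a := (i, j)) (Finset.HasAntidiagonal.mem_antidiagonal.2 rfl)

lemma choose_le_choose_of_le_half {N r s : ℕ} (hrs : r ≤ s) (hs : s ≤ N / 2) :
    N.choose r ≤ N.choose s := by
  induction s, hrs using Nat.le_induction with
  | base => exact le_rfl
  | succ s hrs ih =>
      exact (ih (by omega)).trans (Nat.choose_le_succ_of_lt_half_left (by omega))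

lemma choose_two_le {N j : ℕ} (h2 : 2 ≤ j) (hj : j + 2 ≤ N) :
    N.choose 2 ≤ N.choose j := by
  rcases le_or_gt j (N/2) with h | h
  · exact choose_le_choose_of_le_half h2 h
  · have hjN : j ≤ N := by omega
    rw [← Nat.choose_symm hjN]
    exact choose_le_choose_of_le_half (by omega) (by omega)

lemma keyN (A B : ℕ) :
    (2*A+1)‼ * (2*B+1)‼ * ((A+B).choose A * ((A+B)+1) * (2*(A+B)+3) * (2*(A+B)+5))
      ≤ 2 * (A+1) * (B+1) * (2*(A+B)+5)‼ := by
  set N := A + B with hN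
  have e1 : (2*A+1)! = (2*A+1)‼ * (2^A * A !) := odd_df A
  have e2 : (2*B+1)! = (2*B+1)‼ * (2^B * B !) := odd_df B
  have e3 : (2*N+5)! = (2*N+5)‼ * (2^(N+2) * (N+2)!) := by
    have h0 := odd_df (N+2)
    have h1 : 2*(N+2)+1 = 2*N+5 := by omega
    rwa [h1] at h0
  have e4 : (2*N+5)! = (2*N+2)! * ((2*N+3)*(2*N+4)*(2*N+5)) := by
    have h3 : (2*N+3)! = (2*N+3) * (2*N+2)! := Nat.factorial_succ (2*N+2)
    have h4 : (2*N+4)! = (2*N+4) * (2*N+3)! := Nat.factorial_succ (2*N+3)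
    have h5 : (2*N+5)! = (2*N+5) * (2*N+4)! := Nat.factorial_succ (2*N+4)
    rw [h5, h4, h3]; ring
  have e5 : (2*N+2)! = (2*N+2).choose (2*A+1) * ((2*A+1)! * (2*B+1)!) := by
    have h := Nat.choose_mul_factorial_mul_factorial (n := 2*N+2) (k := 2*A+1) (by omega)
    have h2 : 2*N+2 - (2*A+1) = 2*B+1 := by omega
    rw [h2] at h
    rw [← h]; ring
  have e6 : (N+1).choose A * (A ! * (B+1)!) = (N+1)! := by
    have h := Nat.choose_mul_factorial_mul_factorial (n := N+1) (k := A) (by omega)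
    have h2 : N+1 - A = B+1 := by omega
    rw [h2] at h
    rw [← h]; ring
  have e7 : (N+1).choose (A+1) * ((A+1)! * B !) = (N+1)! := by
    have h := Nat.choose_mul_factorial_mul_factorial (n := N+1) (k := A+1) (by omega)
    have h2 : N+1 - (A+1) = B := by omega
    rw [h2] at h
    rw [← h]; ring
  have e8 : N.choose A * (A ! * B !) = N ! := by
    have h := Nat.choose_mul_factorial_mul_factorial (n := N) (k := A) (by omega)
    have h2 : N - A = B := by omega
    rw [h2] at h
    rw [← h]; ring
  have v1 : (N+1).choose A * (N+1).choose (A+1) ≤ (2*N+2).choose (2*A+1) := by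
    have h := choose_mul_choose_le (N+1) (N+1) A (A+1)
    have h2 : (N+1) + (N+1) = 2*N+2 := by omega
    have h3 : A + (A+1) = 2*A+1 := by omega
    rwa [h2, h3] at h
  have id1 : ((N+1)! * (N+1) * N.choose A) * (A ! * B !)
      = ((A+1)*(B+1)*(A ! * B !)*((N+1).choose A * (N+1).choose (A+1))) * (A ! * B !) := by
    have lhs : ((N+1)! * (N+1) * N.choose A) * (A ! * B !)
        = ((N+1) * N !) * ((N+1)!) := by
      rw [← e8]; ring
    have rhs : ((A+1)*(B+1)*(A ! * B !)*((N+1).choose A * (N+1).choose (A+1))) * (A ! * B !)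
        = ((N+1).choose A * (A ! * (B+1)!)) * ((N+1).choose (A+1) * ((A+1)! * B !)) := by
      rw [Nat.factorial_succ B, Nat.factorial_succ A]; ring
    rw [lhs, rhs, e6, e7, ← Nat.factorial_succ]
  have eq2 : (N+1)! * (N+1) * N.choose A
      = (A+1)*(B+1)*(A ! * B !)*((N+1).choose A * (N+1).choose (A+1)) :=
    Nat.eq_of_mul_eq_mul_right (by positivity) id1
  have step2 : (N+1)! * (N+1) * N.choose A
      ≤ (A+1)*(B+1)*(A ! * B !)*((2*N+2).choose (2*A+1)) := by
    rw [eq2]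
    exact Nat.mul_le_mul_left _ v1
  have F : 4*((2*A+1)! * (2*B+1)!)*(N+2)!*(N.choose A * (N+1) * (2*N+3) * (2*N+5))
      ≤ 2*(A+1)*(B+1)*(A ! * B !)*(2*N+5)! := by
    have h := Nat.mul_le_mul_left
      ((2*N+4)*((2*A+1)! * (2*B+1)!*((2*N+3)*(2*N+5)))*2) step2
    calc 4*((2*A+1)! * (2*B+1)!)*(N+2)!*(N.choose A * (N+1) * (2*N+3) * (2*N+5))
        = (2*N+4)*((2*A+1)! * (2*B+1)!*((2*N+3)*(2*N+5)))*2 * ((N+1)! * (N+1) * N.choose A) := by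
          rw [Nat.factorial_succ (N+1)]; ring
      _ ≤ (2*N+4)*((2*A+1)! * (2*B+1)!*((2*N+3)*(2*N+5)))*2 *
            ((A+1)*(B+1)*(A ! * B !)*((2*N+2).choose (2*A+1))) := h
      _ = 2*(A+1)*(B+1)*(A ! * B !)*(2*N+5)! := by
          rw [e4, e5]; ring
  have hKpos : 0 < 2^(N+2) * (A ! * B ! * (N+2)!) := by positivity
  apply Nat.le_of_mul_le_mul_right _ hKpos
  calc (2*A+1)‼ * (2*B+1)‼ * (N.choose A * (N+1) * (2*N+3) * (2*N+5))
        * (2^(N+2) * (A ! * B ! * (N+2)!))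
      = 4*((2*A+1)! * (2*B+1)!)*(N+2)!*(N.choose A * (N+1) * (2*N+3) * (2*N+5)) := by
        rw [e1, e2]
        have epow : (2:ℕ)^(N+2) = 2^A * 2^B * 4 := by
          rw [show N + 2 = (A + B) + 2 from rfl, pow_add, pow_add]; norm_num
        rw [epow]; ring
    _ ≤ 2*(A+1)*(B+1)*(A ! * B !)*(2*N+5)! := F
    _ = 2 * (A+1) * (B+1) * (2*N+5)‼ * (2^(N+2) * (A ! * B ! * (N+2)!)) := by
        rw [e3]; ring

lemma keyR (A B : ℕ) :
    (((2*A+1)‼ * (2*B+1)‼ : ℕ) : ℝ) / (((2*(A+B)+5)‼ : ℕ) : ℝ)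
      ≤ ((2 * (A+1) * (B+1) : ℕ) : ℝ) /
        (((A+B).choose A * ((A+B)+1) * (2*(A+B)+3) * (2*(A+B)+5) : ℕ) : ℝ) := by
  have hd1 : (0:ℝ) < (((2*(A+B)+5)‼ : ℕ) : ℝ) := by
    exact_mod_cast Nat.doubleFactorial_pos _
  have hd2 : (0:ℝ) < (((A+B).choose A * ((A+B)+1) * (2*(A+B)+3) * (2*(A+B)+5) : ℕ) : ℝ) := by
    have : 0 < (A+B).choose A := Nat.choose_pos (Nat.le_add_right _ _)
    positivity
  rw [div_le_div_iff₀ hd1 hd2, ← Nat.cast_mul, ← Nat.cast_mul, Nat.cast_le]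
  exact keyN A B

lemma sum_sum_ite_le_ite {α γ : Type*} (s : Finset α) (t : Finset γ)
    (p : α → γ → Prop) [∀ a b, Decidable (p a b)] (c : ℝ) (hc : 0 ≤ c)
    (q : Prop) [Decidable q]
    (himp : ∀ a b, a ∈ s → b ∈ t → p a b → q)
    (huniq : ∀ a b a' b', p a b → p a' b' → a = a' ∧ b = b') :
    ∑ a ∈ s, ∑ b ∈ t, (if p a b then c else 0) ≤ if q then c else 0 := by
  by_cases hq : q
  · rw [if_pos hq, ← Finset.sum_product']
    have h1 : ∑ x ∈ s ×ˢ t, (if p x.1 x.2 then c else 0)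
        = ∑ _x ∈ (s ×ˢ t).filter (fun x => p x.1 x.2), c := by
      rw [Finset.sum_filter]
    rw [h1, Finset.sum_const]
    have hcard : ((s ×ˢ t).filter (fun x => p x.1 x.2)).card ≤ 1 := by
      apply Finset.card_le_one.2
      intro x hx y hy
      simp only [Finset.mem_filter] at hx hy
      have h2 := huniq x.1 x.2 y.1 y.2 hx.2 hy.2
      exact Prod.ext h2.1 h2.2
    calc ((s ×ˢ t).filter (fun x => p x.1 x.2)).card • c
        = (((s ×ˢ t).filter (fun x => p x.1 x.2)).card : ℝ) * c := by
          rw [nsmul_eq_mul]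
      _ ≤ 1 * c := by
          apply mul_le_mul_of_nonneg_right _ hc
          exact_mod_cast hcard
      _ = c := one_mul c
  · rw [if_neg hq]
    apply le_of_eq
    apply Finset.sum_eq_zero
    intro a ha
    apply Finset.sum_eq_zero
    intro b hb
    rw [if_neg]
    intro hp
    exact hq (himp a b ha hb hp)

lemma edgeN (g : ℕ) (hg : 2 ≤ g) : 6*g*(6*(g-1)-3) ≤ 12*g*(3*g-4) := by
  obtain ⟨t, rfl⟩ : ∃ t, g = t+2 := ⟨g-2, by omega⟩
  have e1 : 6*(t+2-1)-3 = 6*t+3 := by omega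
  have e2 : 3*(t+2)-4 = 3*t+2 := by omega
  rw [e1, e2]
  nlinarith [sq_nonneg t]

lemma sqN (g h : ℕ) (hh2 : 2 ≤ h) (hhg : h + 2 ≤ g) :
    (6*h-3)*(6*(g-h)-3) ≤ 9*(g-1)^2 := by
  set x := 2*h-1 with hx
  set y := 2*(g-h)-1 with hy
  have e1 : 6*h-3 = 3*x := by omega
  have e2 : 6*(g-h)-3 = 3*y := by omega
  have hxy : x + y = 2*(g-1) := by omega
  have h4 : 4*(x*y) ≤ (x+y)^2 := by nlinarith [two_mul_le_add_sq x y]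
  have h5 : (x+y)^2 = 4*(g-1)^2 := by rw [hxy]; ring
  rw [e1, e2]
  have h6 : 4*((3*x)*(3*y)) ≤ 4*(9*(g-1)^2) := by nlinarith
  omega

lemma midN (g h : ℕ) (hh2 : 2 ≤ h) (hhg : h + 2 ≤ g) :
    2*(g.choose h)*((6*h-3)*(6*(g-h)-3)) * ((2*g-4)*(2*g-5))
      ≤ 36*(g-1)^2 * ((3*g-4).choose (3*h-2)) := by
  have v3 : g.choose h * (2*g-4).choose (2*h-2) ≤ (3*g-4).choose (3*h-2) := by
    have h0 := choose_mul_choose_le g (2*g-4) h (2*h-2)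
    have e1 : g + (2*g-4) = 3*g-4 := by omega
    have e2 : h + (2*h-2) = 3*h-2 := by omega
    rwa [e1, e2] at h0
  have c2 : (2*g-4)*(2*g-5) = 2 * ((2*g-4).choose 2) := by
    rw [Nat.choose_two_right]
    obtain ⟨a, ha⟩ : ∃ a, 2*g-4 = 2*a := ⟨g-2, by omega⟩
    rw [ha]
    have e3 : 2*a*(2*a-1)/2 = a*(2*a-1) := by
      rw [show 2*a*(2*a-1) = 2*(a*(2*a-1)) by ring, Nat.mul_div_cancel_left _ (by norm_num)]
    rw [e3, show 2*g-5 = 2*a-1 by omega]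
    ring
  have mono := choose_two_le (N := 2*g-4) (j := 2*h-2) (by omega) (by omega)
  have sq := sqN g h hh2 hhg
  calc 2*(g.choose h)*((6*h-3)*(6*(g-h)-3)) * ((2*g-4)*(2*g-5))
      = 4*((6*h-3)*(6*(g-h)-3)) * (g.choose h * (2*g-4).choose 2) := by rw [c2]; ring
    _ ≤ 4*(9*(g-1)^2) * (g.choose h * (2*g-4).choose (2*h-2)) :=
        Nat.mul_le_mul (Nat.mul_le_mul_left 4 sq) (Nat.mul_le_mul_left _ mono)
    _ = 36*(g-1)^2 * (g.choose h * (2*g-4).choose (2*h-2)) := by ring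
    _ ≤ 36*(g-1)^2 * ((3*g-4).choose (3*h-2)) := Nat.mul_le_mul_left _ v3

lemma polyIneqR (G : ℝ) (hG : 4 ≤ G) :
    4*G^2*(16*G*((2*G-4)*(2*G-5)) + (G-3)*(36*(G-1)^2))
      ≤ (3*G-1)*((6*G-1)*(6*G+1))*((2*G-4)*(2*G-5)) := by
  nlinarith [sq_nonneg G, sq_nonneg (G-4), sq_nonneg (G-1), sq_nonneg (G*(G-4)), sq_nonneg (G^2-4*G)]

lemma cubeIneqR (G : ℝ) (hG : 2 ≤ G) : 64*G^3 ≤ (3*G-1)*((6*G-1)*(6*G+1)) := by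
  nlinarith [sq_nonneg G, sq_nonneg (G-2)]

end Stmt4Aux

/-- The quantity `S` from the paper: one half of the sum, over all admissible data
`(r, s, I, J)` — with `r, s ≥ 0`, `r + s = k − 1` (encoded by `r ∈ range k`,
`s = k − 1 − r`), `I ⊆ {1, …, n}` arbitrary and `J = Iᶜ` — of
`g!/(g'! g''!) · (6g'+2n'−3)!! (6g''+2n''−3)!! / (6g+2n−3)!!`, where `n' = |I|`,
`n'' = |J|`, and `g', g''` are the (necessarily unique, and satisfying `g' + g'' = g`)
nonnegative integers with `∑_{i∈I} d i + r = 3g' + n' − 2` and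
`∑_{j∈J} d j + s = 3g'' + n'' − 2`; non-admissible data contribute `0`. -/
noncomputable def paperS (k n g : ℕ) (d : Fin n → ℕ) : ℝ :=
  (1 / 2) * ∑ r ∈ Finset.range k, ∑ I ∈ (Finset.univ : Finset (Fin n)).powerset,
    ∑ g' ∈ Finset.range (g + 1), ∑ g'' ∈ Finset.range (g + 1),
      if (∑ i ∈ I, d i) + r + 2 = 3 * g' + I.card ∧
          (∑ j ∈ Iᶜ, d j) + (k - 1 - r) + 2 = 3 * g'' + Iᶜ.card then
        (Nat.factorial g : ℝ) / (Nat.factorial g' * Nat.factorial g'') *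
          ((Nat.doubleFactorial (6 * g' + 2 * I.card - 3) : ℝ) *
            (Nat.doubleFactorial (6 * g'' + 2 * Iᶜ.card - 3) : ℝ)) /
          (Nat.doubleFactorial (6 * g + 2 * n - 3) : ℝ)
      else 0

set_option maxHeartbeats 3200000 in
/-- Under the stated hypotheses (`d j ≥ k + 1` for all `j` and
`∑ d + k = 3g + n − 3`), the sum `S` satisfies `S ≤ (n + 1) / (8 g²)`. -/
theorem stmt4 (k n g : ℕ) (hk : 1 ≤ k) (hn : 2 ≤ n) (d : Fin n → ℕ)
    (hd : ∀ j, k + 1 ≤ d j) (hsum : (∑ j, d j) + k + 3 = 3 * g + n) :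
    paperS k n g d ≤ ((n : ℝ) + 1) / (8 * (g : ℝ) ^ 2) := by
  classical
  obtain ⟨hcf⟩ : ∃ _h : Fintype.card (Fin n) = n, True := ⟨Fintype.card_fin n, trivial⟩
  -- global facts
  have hdn : 2 * n ≤ ∑ j, d j := by
    calc 2*n = n*2 := by ring
    _ = ∑ _j : Fin n, 2 := by rw [Finset.sum_const, Finset.card_univ, hcf, smul_eq_mul]
    _ ≤ ∑ j, d j := Finset.sum_le_sum (fun j _ => by have := hd j; omega)
  have hg2 : 2 ≤ g := by omega
  have hn3g : n + 4 ≤ 3*g := by omega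
  set M := 3*g + n with hMdef
  set X := (M-3)*(2*M-5)*(2*M-3) with hXdef
  have hM8 : 3*g + 2 ≤ M := by omega
  have hXpos : 0 < X := by
    apply Nat.mul_pos (Nat.mul_pos _ _) <;> omega
  have hsumI : ∀ I : Finset (Fin n), 2 * I.card ≤ ∑ i ∈ I, d i := by
    intro I
    calc 2*I.card = I.card * 2 := by ring
    _ = ∑ _i ∈ I, 2 := by rw [Finset.sum_const, smul_eq_mul]
    _ ≤ ∑ i ∈ I, d i := Finset.sum_le_sum (fun i _ => by have := hd i; omega)
  have hcompl : ∀ I : Finset (Fin n), (∑ i ∈ I, d i) + (∑ j ∈ Iᶜ, d j) = ∑ j, d j :=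
    fun I => Finset.sum_add_sum_compl I d
  have hcardcompl : ∀ I : Finset (Fin n), I.card + Iᶜ.card = n := by
    intro I
    rw [Finset.card_add_card_compl, hcf]
  -- facts from the admissibility condition
  have facts : ∀ (r : ℕ) (I : Finset (Fin n)) (g' g'' : ℕ), r < k →
      ((∑ i ∈ I, d i) + r + 2 = 3 * g' + I.card ∧
        (∑ j ∈ Iᶜ, d j) + (k - 1 - r) + 2 = 3 * g'' + Iᶜ.card) →
      g' + g'' = g ∧ 1 ≤ g' ∧ 1 ≤ g'' ∧ I.card ≤ 3*g'-2 ∧ n - I.card ≤ 3*g''-2 ∧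
        Iᶜ.card = n - I.card ∧ I.card ≤ n := by
    intro r I g' g'' hr hp
    obtain ⟨h1, h2⟩ := hp
    have t1 := hsumI I
    have t2 := hsumI Iᶜ
    have t3 := hcompl I
    have t4 := hcardcompl I
    omega
  -- the per-(h,m) majorant
  obtain ⟨β, hβdef⟩ : ∃ f : ℕ → ℕ → ℝ, f = fun h m =>
      ((2 * (g.choose h) * ((6*h-3) * (6*(g-h)-3)) : ℕ) : ℝ) /
        ((n.choose m * ((3*g-4).choose (3*h-2)) * X : ℕ) : ℝ) := ⟨_, rfl⟩
  have hβnonneg : ∀ h m, 0 ≤ β h m := fun h m => by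
    rw [hβdef]; positivity
  -- the per-term bound
  have term_le : ∀ (r : ℕ) (I : Finset (Fin n)) (g' g'' : ℕ), r < k →
      ((∑ i ∈ I, d i) + r + 2 = 3 * g' + I.card ∧
        (∑ j ∈ Iᶜ, d j) + (k - 1 - r) + 2 = 3 * g'' + Iᶜ.card) →
      (Nat.factorial g : ℝ) / (Nat.factorial g' * Nat.factorial g'') *
          ((Nat.doubleFactorial (6 * g' + 2 * I.card - 3) : ℝ) *
            (Nat.doubleFactorial (6 * g'' + 2 * Iᶜ.card - 3) : ℝ)) /
          (Nat.doubleFactorial (6 * g + 2 * n - 3) : ℝ)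
        ≤ β g' I.card := by
    intro r I g' g'' hr hp
    obtain ⟨hgg, hg'1, hg''1, hm3, hnm3, hIc, hmn⟩ := facts r I g' g'' hr hp
    set m := I.card with hm
    set A := 3*g' + m - 2 with hA
    set B := 3*g'' + (n - m) - 2 with hB
    have hA1 : 6*g' + 2*I.card - 3 = 2*A+1 := by omega
    have hB1 : 6*g'' + 2*Iᶜ.card - 3 = 2*B+1 := by omega
    have hABM : A + B = M - 4 := by omega
    have hDen : 6*g + 2*n - 3 = 2*(A+B)+5 := by omega
    have hchoose : (Nat.factorial g : ℝ) / (Nat.factorial g' * Nat.factorial g'') = (g.choose g' : ℝ) := by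
      have h := Nat.choose_mul_factorial_mul_factorial (n := g) (k := g') (by omega)
      have h2 : g - g' = g'' := by omega
      rw [h2] at h
      have h3 : (g.choose g' * (Nat.factorial g' * Nat.factorial g'') : ℕ) = Nat.factorial g := by
        rw [← h]; ring
      rw [div_eq_iff (by positivity)]
      exact_mod_cast h3.symm
    rw [hA1, hB1, hDen, hchoose]
    have key : ((Nat.doubleFactorial (2*A+1) : ℝ) * (Nat.doubleFactorial (2*B+1) : ℝ)) /
        (Nat.doubleFactorial (2*(A+B)+5) : ℝ)
        ≤ ((2 * (A+1) * (B+1) : ℕ) : ℝ) /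
          (((A+B).choose A * ((A+B)+1) * (2*(A+B)+3) * (2*(A+B)+5) : ℕ) : ℝ) := by
      have h := Stmt4Aux.keyR A B
      rw [Nat.cast_mul] at h
      exact h
    have step1 : (g.choose g' : ℝ) *
        ((Nat.doubleFactorial (2*A+1) : ℝ) * (Nat.doubleFactorial (2*B+1) : ℝ)) /
        (Nat.doubleFactorial (2*(A+B)+5) : ℝ)
        ≤ (g.choose g' : ℝ) * (((2 * (A+1) * (B+1) : ℕ) : ℝ) /
          (((A+B).choose A * ((A+B)+1) * (2*(A+B)+3) * (2*(A+B)+5) : ℕ) : ℝ)) := by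
      rw [mul_div_assoc]
      exact mul_le_mul_of_nonneg_left key (by positivity)
    refine le_trans step1 ?_
    -- now compare with β g' m
    have hnum : (g.choose g' : ℝ) * ((2 * (A+1) * (B+1) : ℕ) : ℝ)
        ≤ ((2 * (g.choose g') * ((6*g'-3) * (6*(g-g')-3)) : ℕ) : ℝ) := by
      rw [← Nat.cast_mul, Nat.cast_le]
      have e1 : A + 1 ≤ 6*g'-3 := by omega
      have e2 : B + 1 ≤ 6*(g-g')-3 := by omega
      calc g.choose g' * (2 * (A+1) * (B+1)) = 2 * (g.choose g') * ((A+1)*(B+1)) := by ring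
        _ ≤ 2 * (g.choose g') * ((6*g'-3) * (6*(g-g')-3)) :=
            Nat.mul_le_mul_left _ (Nat.mul_le_mul e1 e2)
    have hden : ((n.choose m * ((3*g-4).choose (3*g'-2)) * X : ℕ) : ℝ)
        ≤ (((A+B).choose A * ((A+B)+1) * (2*(A+B)+3) * (2*(A+B)+5) : ℕ) : ℝ) := by
      rw [Nat.cast_le]
      have v2 : n.choose m * (3*g-4).choose (3*g'-2) ≤ (A+B).choose A := by
        have h := Stmt4Aux.choose_mul_choose_le n (3*g-4) m (3*g'-2)
        have e3 : n + (3*g-4) = A + B := by omega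
        have e4 : m + (3*g'-2) = A := by omega
        rwa [e3, e4] at h
      have e5 : X = ((A+B)+1) * (2*(A+B)+3) * (2*(A+B)+5) := by
        rw [hXdef]
        have e6 : (A+B)+1 = M-3 := by omega
        have e7 : 2*(A+B)+3 = 2*M-5 := by omega
        have e8 : 2*(A+B)+5 = 2*M-3 := by omega
        rw [e6, e7, e8]
      calc n.choose m * ((3*g-4).choose (3*g'-2)) * X
          ≤ (A+B).choose A * X := Nat.mul_le_mul_right X v2
        _ = (A+B).choose A * (((A+B)+1) * (2*(A+B)+3) * (2*(A+B)+5)) := by rw [← e5]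
        _ = (A+B).choose A * ((A+B)+1) * (2*(A+B)+3) * (2*(A+B)+5) := by ring
    have hdpos : (0:ℝ) < ((n.choose m * ((3*g-4).choose (3*g'-2)) * X : ℕ) : ℝ) := by
      have p1 : 0 < n.choose m := Nat.choose_pos hmn
      have p2 : 0 < (3*g-4).choose (3*g'-2) := Nat.choose_pos (by omega)
      have : 0 < n.choose m * ((3*g-4).choose (3*g'-2)) * X :=
        Nat.mul_pos (Nat.mul_pos p1 p2) hXpos
      exact_mod_cast this
    rw [hβdef]
    calc (g.choose g' : ℝ) * (((2 * (A+1) * (B+1) : ℕ) : ℝ) /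
          (((A+B).choose A * ((A+B)+1) * (2*(A+B)+3) * (2*(A+B)+5) : ℕ) : ℝ))
        = ((g.choose g' : ℝ) * ((2 * (A+1) * (B+1) : ℕ) : ℝ)) /
          (((A+B).choose A * ((A+B)+1) * (2*(A+B)+3) * (2*(A+B)+5) : ℕ) : ℝ) := by
          rw [mul_div_assoc]
      _ ≤ ((2 * (g.choose g') * ((6*g'-3) * (6*(g-g')-3)) : ℕ) : ℝ) /
          ((n.choose m * ((3*g-4).choose (3*g'-2)) * X : ℕ) : ℝ) :=
          div_le_div₀ (by positivity) hnum hdpos hden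
  -- counting function
  obtain ⟨W, hWdef⟩ : ∃ f : ℕ → ℕ, f = fun h =>
      ((Finset.range (n+1)).filter (fun m => m ≤ 3*h-2 ∧ n - m ≤ 3*(g-h)-2)).card := ⟨_, rfl⟩
  obtain ⟨γ, hγdef⟩ : ∃ f : ℕ → ℝ, f = fun h =>
      ((2 * (g.choose h) * ((6*h-3) * (6*(g-h)-3)) : ℕ) : ℝ) /
        (((3*g-4).choose (3*h-2) * X : ℕ) : ℝ) := ⟨_, rfl⟩
  have hγnonneg : ∀ h, 0 ≤ γ h := fun h => by
    simp only [hγdef]; positivity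
  -- relation between β and γ
  have hβγ : ∀ h j, j ≤ n → (n.choose j : ℝ) * β h j = γ h := by
    intro h j hj
    simp only [hβdef, hγdef]
    have hC : ((n.choose j : ℕ) : ℝ) ≠ 0 := by
      exact_mod_cast (Nat.choose_pos hj).ne'
    have e : ((n.choose j * ((3*g-4).choose (3*h-2)) * X : ℕ) : ℝ)
        = (n.choose j : ℝ) * ((((3*g-4).choose (3*h-2)) * X : ℕ) : ℝ) := by
      push_cast; ring
    rw [e, mul_div_assoc', mul_div_mul_left _ _ hC]
  -- step A: bound the full quadruple sum
  have S1 : (∑ r ∈ Finset.range k, ∑ I ∈ (Finset.univ : Finset (Fin n)).powerset,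
      ∑ g' ∈ Finset.range (g + 1), ∑ g'' ∈ Finset.range (g + 1),
        if (∑ i ∈ I, d i) + r + 2 = 3 * g' + I.card ∧
            (∑ j ∈ Iᶜ, d j) + (k - 1 - r) + 2 = 3 * g'' + Iᶜ.card then
          (Nat.factorial g : ℝ) / (Nat.factorial g' * Nat.factorial g'') *
            ((Nat.doubleFactorial (6 * g' + 2 * I.card - 3) : ℝ) *
              (Nat.doubleFactorial (6 * g'' + 2 * Iᶜ.card - 3) : ℝ)) /
            (Nat.doubleFactorial (6 * g + 2 * n - 3) : ℝ)
        else 0)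
      ≤ ∑ g' ∈ Finset.range (g+1), γ g' * (W g' : ℝ) := by
    have step_a : (∑ r ∈ Finset.range k, ∑ I ∈ (Finset.univ : Finset (Fin n)).powerset,
        ∑ g' ∈ Finset.range (g + 1), ∑ g'' ∈ Finset.range (g + 1),
          if (∑ i ∈ I, d i) + r + 2 = 3 * g' + I.card ∧
              (∑ j ∈ Iᶜ, d j) + (k - 1 - r) + 2 = 3 * g'' + Iᶜ.card then
            (Nat.factorial g : ℝ) / (Nat.factorial g' * Nat.factorial g'') *
              ((Nat.doubleFactorial (6 * g' + 2 * I.card - 3) : ℝ) *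
                (Nat.doubleFactorial (6 * g'' + 2 * Iᶜ.card - 3) : ℝ)) /
              (Nat.doubleFactorial (6 * g + 2 * n - 3) : ℝ)
          else 0)
        ≤ ∑ r ∈ Finset.range k, ∑ I ∈ (Finset.univ : Finset (Fin n)).powerset,
            ∑ g' ∈ Finset.range (g + 1), ∑ g'' ∈ Finset.range (g + 1),
              if (∑ i ∈ I, d i) + r + 2 = 3 * g' + I.card ∧
                  (∑ j ∈ Iᶜ, d j) + (k - 1 - r) + 2 = 3 * g'' + Iᶜ.card then
                β g' I.card else 0 := by
      apply Finset.sum_le_sum; intro r hr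
      apply Finset.sum_le_sum; intro I _
      apply Finset.sum_le_sum; intro g' _
      apply Finset.sum_le_sum; intro g'' _
      by_cases hp : (∑ i ∈ I, d i) + r + 2 = 3 * g' + I.card ∧
          (∑ j ∈ Iᶜ, d j) + (k - 1 - r) + 2 = 3 * g'' + Iᶜ.card
      · rw [if_pos hp, if_pos hp]
        exact term_le r I g' g'' (Finset.mem_range.1 hr) hp
      · rw [if_neg hp, if_neg hp]
    have step_b : (∑ r ∈ Finset.range k, ∑ I ∈ (Finset.univ : Finset (Fin n)).powerset,
        ∑ g' ∈ Finset.range (g + 1), ∑ g'' ∈ Finset.range (g + 1),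
          if (∑ i ∈ I, d i) + r + 2 = 3 * g' + I.card ∧
              (∑ j ∈ Iᶜ, d j) + (k - 1 - r) + 2 = 3 * g'' + Iᶜ.card then
            β g' I.card else 0)
        = ∑ g' ∈ Finset.range (g + 1), ∑ I ∈ (Finset.univ : Finset (Fin n)).powerset,
            ∑ r ∈ Finset.range k, ∑ g'' ∈ Finset.range (g + 1),
              if (∑ i ∈ I, d i) + r + 2 = 3 * g' + I.card ∧
                  (∑ j ∈ Iᶜ, d j) + (k - 1 - r) + 2 = 3 * g'' + Iᶜ.card then
                β g' I.card else 0 := by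
      rw [Finset.sum_comm]
      rw [show (∑ I ∈ (Finset.univ : Finset (Fin n)).powerset, ∑ r ∈ Finset.range k,
            ∑ g' ∈ Finset.range (g + 1), ∑ g'' ∈ Finset.range (g + 1),
              if (∑ i ∈ I, d i) + r + 2 = 3 * g' + I.card ∧
                  (∑ j ∈ Iᶜ, d j) + (k - 1 - r) + 2 = 3 * g'' + Iᶜ.card then
                β g' I.card else 0)
          = ∑ I ∈ (Finset.univ : Finset (Fin n)).powerset, ∑ g' ∈ Finset.range (g + 1),
            ∑ r ∈ Finset.range k, ∑ g'' ∈ Finset.range (g + 1),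
              if (∑ i ∈ I, d i) + r + 2 = 3 * g' + I.card ∧
                  (∑ j ∈ Iᶜ, d j) + (k - 1 - r) + 2 = 3 * g'' + Iᶜ.card then
                β g' I.card else 0 from
          Finset.sum_congr rfl (fun I _ => Finset.sum_comm)]
      exact Finset.sum_comm
    have step_c : (∑ g' ∈ Finset.range (g + 1), ∑ I ∈ (Finset.univ : Finset (Fin n)).powerset,
        ∑ r ∈ Finset.range k, ∑ g'' ∈ Finset.range (g + 1),
          if (∑ i ∈ I, d i) + r + 2 = 3 * g' + I.card ∧
              (∑ j ∈ Iᶜ, d j) + (k - 1 - r) + 2 = 3 * g'' + Iᶜ.card then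
            β g' I.card else 0)
        ≤ ∑ g' ∈ Finset.range (g + 1), ∑ I ∈ (Finset.univ : Finset (Fin n)).powerset,
            (if I.card ≤ 3*g'-2 ∧ n - I.card ≤ 3*(g-g')-2 then β g' I.card else 0) := by
      apply Finset.sum_le_sum; intro g' _
      apply Finset.sum_le_sum; intro I _
      refine Stmt4Aux.sum_sum_ite_le_ite (Finset.range k) (Finset.range (g+1)) _ _
        (hβnonneg g' I.card) _ ?_ ?_
      · intro r g'' hr _ hp
        have h := facts r I g' g'' (Finset.mem_range.1 hr) hp
        constructor
        · omega
        · omega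
      · intro a b a' b' h1 h2
        obtain ⟨h1a, h1b⟩ := h1
        obtain ⟨h2a, h2b⟩ := h2
        constructor
        · omega
        · omega
    have hps : ∀ f : ℕ → ℝ, (∑ I ∈ (Finset.univ : Finset (Fin n)).powerset, f I.card)
        = ∑ j ∈ Finset.range (n+1), (n.choose j : ℝ) * f j := by
      intro f
      have hu : (Finset.univ : Finset (Fin n)).card = n := by
        rw [Finset.card_univ, hcf]
      rw [Finset.sum_powerset_apply_card, hu]
      apply Finset.sum_congr rfl
      intro j _
      rw [nsmul_eq_mul]
    have step_d : (∑ g' ∈ Finset.range (g + 1), ∑ I ∈ (Finset.univ : Finset (Fin n)).powerset,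
        (if I.card ≤ 3*g'-2 ∧ n - I.card ≤ 3*(g-g')-2 then β g' I.card else 0))
        = ∑ g' ∈ Finset.range (g + 1), γ g' * (W g' : ℝ) := by
      apply Finset.sum_congr rfl
      intro g' _
      rw [hps (fun c => if c ≤ 3*g'-2 ∧ n - c ≤ 3*(g-g')-2 then β g' c else 0)]
      have e1 : ∀ j ∈ Finset.range (n+1),
          (n.choose j : ℝ) * (if j ≤ 3*g'-2 ∧ n - j ≤ 3*(g-g')-2 then β g' j else 0)
          = (if j ≤ 3*g'-2 ∧ n - j ≤ 3*(g-g')-2 then γ g' else 0) := by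
        intro j hj
        by_cases hw : j ≤ 3*g'-2 ∧ n - j ≤ 3*(g-g')-2
        · rw [if_pos hw, if_pos hw, hβγ g' j (by have := Finset.mem_range.1 hj; omega)]
        · rw [if_neg hw, if_neg hw, mul_zero]
      rw [Finset.sum_congr rfl e1, ← Finset.sum_filter, Finset.sum_const]
      simp only [hWdef]
      rw [nsmul_eq_mul, mul_comm]
    calc _ ≤ _ := step_a
      _ = _ := step_b
      _ ≤ _ := step_c
      _ = _ := step_d
  -- step B : the analytic bound on the γ-W sum
  have hW1 : W 1 ≤ 2 := by
    simp only [hWdef]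
    calc ((Finset.range (n+1)).filter (fun m => m ≤ 3*1-2 ∧ n - m ≤ 3*(g-1)-2)).card
        ≤ (Finset.range 2).card := by
          apply Finset.card_le_card
          intro m hm
          simp only [Finset.mem_filter, Finset.mem_range] at hm ⊢
          omega
      _ = 2 := by simp
  have hWg1 : W (g-1) ≤ 2 := by
    simp only [hWdef]
    calc ((Finset.range (n+1)).filter (fun m => m ≤ 3*(g-1)-2 ∧ n - m ≤ 3*(g-(g-1))-2)).card
        ≤ ({n-1, n} : Finset ℕ).card := by
          apply Finset.card_le_card
          intro m hm
          simp only [Finset.mem_filter, Finset.mem_range] at hm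
          simp only [Finset.mem_insert, Finset.mem_singleton]
          omega
      _ ≤ 2 := Finset.card_insert_le _ _ |>.trans (by simp)
  have hWn : ∀ h, W h ≤ n+1 := by
    intro h
    simp only [hWdef]
    calc ((Finset.range (n+1)).filter (fun m => m ≤ 3*h-2 ∧ n - m ≤ 3*(g-h)-2)).card
        ≤ (Finset.range (n+1)).card := Finset.card_filter_le _ _
      _ = n+1 := by simp
  have hγ0 : γ 0 = 0 := by
    simp only [hγdef]
    norm_num
  have hγg : γ g = 0 := by
    simp only [hγdef]
    have e : 6*(g-g)-3 = 0 := by omega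
    rw [e]
    norm_num
  have hXcpos : (0:ℝ) < (X:ℝ) := by exact_mod_cast hXpos
  have hγ1 : γ 1 ≤ 12*(g:ℝ)/(X:ℝ) := by
    simp only [hγdef]
    have e2 : (3*g-4).choose (3*1-2) = 3*g-4 := by
      norm_num
    have hdpos : (0:ℝ) < (((3*g-4).choose (3*1-2) * X : ℕ) : ℝ) := by
      have : 0 < (3*g-4).choose (3*1-2) * X := by
        rw [e2]; exact Nat.mul_pos (by omega) hXpos
      exact_mod_cast this
    rw [div_le_div_iff₀ hdpos hXcpos]
    have hnum : (2 * (g.choose 1) * ((6*1-3) * (6*(g-1)-3)) : ℕ) * X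
        ≤ 12*g*((3*g-4).choose (3*1-2) * X) := by
      rw [e2, Nat.choose_one_right]
      have h := Stmt4Aux.edgeN g hg2
      calc 2*g*((6*1-3)*(6*(g-1)-3))*X = (6*g*(6*(g-1)-3))*X := by
            rw [show (6*1-3 : ℕ) = 3 by norm_num]; ring
        _ ≤ (12*g*(3*g-4))*X := Nat.mul_le_mul_right X h
        _ = 12*g*((3*g-4)*X) := by ring
    calc ((2 * (g.choose 1) * ((6*1-3) * (6*(g-1)-3)) : ℕ) : ℝ) * (X:ℝ)
        = (((2 * (g.choose 1) * ((6*1-3) * (6*(g-1)-3))) * X : ℕ) : ℝ) := by push_cast; ring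
      _ ≤ ((12*g*((3*g-4).choose (3*1-2) * X) : ℕ) : ℝ) := by exact_mod_cast hnum
      _ = 12*(g:ℝ) * (((3*g-4).choose (3*1-2) * X : ℕ) : ℝ) := by push_cast; ring
  have hγg1 : γ (g-1) ≤ 12*(g:ℝ)/(X:ℝ) := by
    simp only [hγdef]
    have ech : g.choose (g-1) = g := by
      rw [← Nat.choose_symm (by omega : g-1 ≤ g), show g-(g-1) = 1 by omega,
        Nat.choose_one_right]
    have e6 : 6*(g-(g-1))-3 = 3 := by omega
    have e2 : (3*g-4).choose (3*(g-1)-2) = 3*g-4 := by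
      rw [show 3*(g-1)-2 = 3*g-5 by omega,
        ← Nat.choose_symm (by omega : 3*g-5 ≤ 3*g-4),
        show (3*g-4)-(3*g-5) = 1 by omega, Nat.choose_one_right]
    have hdpos : (0:ℝ) < (((3*g-4).choose (3*(g-1)-2) * X : ℕ) : ℝ) := by
      have : 0 < (3*g-4).choose (3*(g-1)-2) * X := by
        rw [e2]; exact Nat.mul_pos (by omega) hXpos
      exact_mod_cast this
    rw [div_le_div_iff₀ hdpos hXcpos]
    have hnum : (2 * (g.choose (g-1)) * ((6*(g-1)-3) * (6*(g-(g-1))-3)) : ℕ) * X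
        ≤ 12*g*((3*g-4).choose (3*(g-1)-2) * X) := by
      rw [e2, ech, e6]
      have h := Stmt4Aux.edgeN g hg2
      calc 2*g*((6*(g-1)-3)*3)*X = (6*g*(6*(g-1)-3))*X := by ring
        _ ≤ (12*g*(3*g-4))*X := Nat.mul_le_mul_right X h
        _ = 12*g*((3*g-4)*X) := by ring
    calc ((2 * (g.choose (g-1)) * ((6*(g-1)-3) * (6*(g-(g-1))-3)) : ℕ) : ℝ) * (X:ℝ)
        = (((2 * (g.choose (g-1)) * ((6*(g-1)-3) * (6*(g-(g-1))-3))) * X : ℕ) : ℝ) := by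
          push_cast; ring
      _ ≤ ((12*g*((3*g-4).choose (3*(g-1)-2) * X) : ℕ) : ℝ) := by exact_mod_cast hnum
      _ = 12*(g:ℝ) * (((3*g-4).choose (3*(g-1)-2) * X : ℕ) : ℝ) := by push_cast; ring
  obtain ⟨μ0, hμ0def⟩ : ∃ x : ℝ,
      x = ((36*(g-1)^2 : ℕ) : ℝ) / (((2*g-4)*(2*g-5)*X : ℕ) : ℝ) := ⟨_, rfl⟩
  have hμ0nonneg : 0 ≤ μ0 := by simp only [hμ0def]; positivity
  have hγmid : ∀ h, 2 ≤ h → h+2 ≤ g → γ h ≤ μ0 := by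
    intro h hh2 hhg
    have hg4 : 4 ≤ g := by omega
    simp only [hγdef, hμ0def]
    have hdpos : (0:ℝ) < (((3*g-4).choose (3*h-2) * X : ℕ) : ℝ) := by
      have : 0 < (3*g-4).choose (3*h-2) * X :=
        Nat.mul_pos (Nat.choose_pos (by omega)) hXpos
      exact_mod_cast this
    have hdpos2 : (0:ℝ) < (((2*g-4)*(2*g-5)*X : ℕ) : ℝ) := by
      have : 0 < (2*g-4)*(2*g-5)*X :=
        Nat.mul_pos (Nat.mul_pos (by omega) (by omega)) hXpos
      exact_mod_cast this
    rw [div_le_div_iff₀ hdpos hdpos2]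
    have hnum : (2 * (g.choose h) * ((6*h-3) * (6*(g-h)-3)) : ℕ) * ((2*g-4)*(2*g-5)*X)
        ≤ (36*(g-1)^2) * ((3*g-4).choose (3*h-2) * X) := by
      have h0 := Stmt4Aux.midN g h hh2 hhg
      calc 2 * (g.choose h) * ((6*h-3) * (6*(g-h)-3)) * ((2*g-4)*(2*g-5)*X)
          = (2 * (g.choose h) * ((6*h-3) * (6*(g-h)-3)) * ((2*g-4)*(2*g-5))) * X := by ring
        _ ≤ (36*(g-1)^2 * ((3*g-4).choose (3*h-2))) * X := Nat.mul_le_mul_right X h0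
        _ = (36*(g-1)^2) * ((3*g-4).choose (3*h-2) * X) := by ring
    calc ((2 * (g.choose h) * ((6*h-3) * (6*(g-h)-3)) : ℕ) : ℝ) * (((2*g-4)*(2*g-5)*X : ℕ) : ℝ)
        = (((2 * (g.choose h) * ((6*h-3) * (6*(g-h)-3))) * ((2*g-4)*(2*g-5)*X) : ℕ) : ℝ) := by
          push_cast; ring
      _ ≤ (((36*(g-1)^2) * ((3*g-4).choose (3*h-2) * X) : ℕ) : ℝ) := by exact_mod_cast hnum
      _ = ((36*(g-1)^2 : ℕ) : ℝ) * (((3*g-4).choose (3*h-2) * X : ℕ) : ℝ) := by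
          push_cast; ring
  have hn1 : (3:ℝ) ≤ (n:ℝ)+1 := by
    have : (3:ℕ) ≤ n+1 := by omega
    exact_mod_cast this
  have hGpos : (0:ℝ) < (g:ℝ) := by
    have : 0 < g := by omega
    exact_mod_cast this
  have hXR : (3*(g:ℝ)-1)*((6*(g:ℝ)-1)*(6*(g:ℝ)+1)) ≤ (X:ℝ) := by
    have hXc : (3*g-1)*(6*g-1)*(6*g+1) ≤ X := by
      have a1 : 3*g-1 ≤ M-3 := by omega
      have a2 : 6*g-1 ≤ 2*M-5 := by omega
      have a3 : 6*g+1 ≤ 2*M-3 := by omega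
      exact Nat.mul_le_mul (Nat.mul_le_mul a1 a2) a3
    have c1 : ((3*g-1 : ℕ) : ℝ) = 3*(g:ℝ)-1 := by
      have h' : (3*g-1 : ℕ) + 1 = 3*g := by omega
      have h'' := congrArg (fun t : ℕ => (t:ℝ)) h'
      push_cast at h''
      linarith
    have c2 : ((6*g-1 : ℕ) : ℝ) = 6*(g:ℝ)-1 := by
      have h' : (6*g-1 : ℕ) + 1 = 6*g := by omega
      have h'' := congrArg (fun t : ℕ => (t:ℝ)) h'
      push_cast at h''
      linarith
    calc (3*(g:ℝ)-1)*((6*(g:ℝ)-1)*(6*(g:ℝ)+1))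
        = (((3*g-1)*(6*g-1)*(6*g+1) : ℕ) : ℝ) := by
          push_cast
          rw [c1, c2]
          ring
      _ ≤ (X:ℝ) := by exact_mod_cast hXc
  have SUMB : (∑ h ∈ Finset.range (g+1), γ h * (W h : ℝ)) ≤ ((n:ℝ)+1)/(4*(g:ℝ)^2) := by
    have hpoint : ∀ h ∈ Finset.range (g+1), γ h * (W h : ℝ)
        ≤ (if h = 1 then 24*(g:ℝ)/(X:ℝ) else 0) + (if h = g-1 then 24*(g:ℝ)/(X:ℝ) else 0) +
          (if 2 ≤ h ∧ h ≤ g-2 then ((n:ℝ)+1) * μ0 else 0) := by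
      intro h hh
      have hhg : h ≤ g := by have := Finset.mem_range.1 hh; omega
      have i1 : (0:ℝ) ≤ (if h = 1 then 24*(g:ℝ)/(X:ℝ) else 0) := by
        split_ifs
        · positivity
        · exact le_rfl
      have i2 : (0:ℝ) ≤ (if h = g-1 then 24*(g:ℝ)/(X:ℝ) else 0) := by
        split_ifs
        · positivity
        · exact le_rfl
      have i3 : (0:ℝ) ≤ (if 2 ≤ h ∧ h ≤ g-2 then ((n:ℝ)+1) * μ0 else 0) := by
        split_ifs
        · exact mul_nonneg (by positivity) hμ0nonneg
        · exact le_rfl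
      by_cases h0 : h = 0
      · subst h0
        rw [hγ0, zero_mul]
        exact add_nonneg (add_nonneg i1 i2) i3
      by_cases hgc : h = g
      · subst hgc
        rw [hγg, zero_mul]
        exact add_nonneg (add_nonneg i1 i2) i3
      by_cases h1 : h = 1
      · subst h1
        have step : γ 1 * (W 1 : ℝ) ≤ (12*(g:ℝ)/(X:ℝ)) * 2 :=
          mul_le_mul hγ1 (by exact_mod_cast hW1) (by positivity) (by positivity)
        rw [if_pos rfl]
        calc γ 1 * (W 1 : ℝ) ≤ (12*(g:ℝ)/(X:ℝ)) * 2 := step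
          _ = 24*(g:ℝ)/(X:ℝ) := by ring
          _ ≤ 24*(g:ℝ)/(X:ℝ) + (if 1 = g-1 then 24*(g:ℝ)/(X:ℝ) else 0) :=
              le_add_of_nonneg_right i2
          _ ≤ 24*(g:ℝ)/(X:ℝ) + (if 1 = g-1 then 24*(g:ℝ)/(X:ℝ) else 0) +
              (if 2 ≤ 1 ∧ 1 ≤ g-2 then ((n:ℝ)+1) * μ0 else 0) :=
              le_add_of_nonneg_right i3
      by_cases hg1c : h = g-1
      · subst hg1c
        have step : γ (g-1) * (W (g-1) : ℝ) ≤ (12*(g:ℝ)/(X:ℝ)) * 2 :=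
          mul_le_mul hγg1 (by exact_mod_cast hWg1) (by positivity) (by positivity)
        rw [if_neg h1, if_pos rfl]
        calc γ (g-1) * (W (g-1) : ℝ) ≤ (12*(g:ℝ)/(X:ℝ)) * 2 := step
          _ = 24*(g:ℝ)/(X:ℝ) := by ring
          _ = 0 + 24*(g:ℝ)/(X:ℝ) := by ring
          _ ≤ 0 + 24*(g:ℝ)/(X:ℝ) +
              (if 2 ≤ g-1 ∧ g-1 ≤ g-2 then ((n:ℝ)+1) * μ0 else 0) :=
              le_add_of_nonneg_right i3
      · have hmid : 2 ≤ h ∧ h ≤ g-2 := by omega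
        have hWc : (W h : ℝ) ≤ (n:ℝ)+1 := by
          have := hWn h
          exact_mod_cast this
        have step : γ h * (W h : ℝ) ≤ μ0 * ((n:ℝ)+1) :=
          mul_le_mul (hγmid h hmid.1 (by omega)) hWc (by positivity) hμ0nonneg
        rw [if_neg h1, if_neg hg1c, if_pos hmid]
        calc γ h * (W h : ℝ) ≤ μ0 * ((n:ℝ)+1) := step
          _ = ((n:ℝ)+1) * μ0 := mul_comm _ _
          _ = 0 + 0 + ((n:ℝ)+1) * μ0 := by ring
    have s1 : (∑ h ∈ Finset.range (g+1), if h = 1 then 24*(g:ℝ)/(X:ℝ) else 0)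
        = 24*(g:ℝ)/(X:ℝ) := by
      rw [Finset.sum_ite_eq' (Finset.range (g+1)) 1 (fun _ => 24*(g:ℝ)/(X:ℝ))]
      rw [if_pos (Finset.mem_range.2 (by omega))]
    have s2 : (∑ h ∈ Finset.range (g+1), if h = g-1 then 24*(g:ℝ)/(X:ℝ) else 0)
        = 24*(g:ℝ)/(X:ℝ) := by
      rw [Finset.sum_ite_eq' (Finset.range (g+1)) (g-1) (fun _ => 24*(g:ℝ)/(X:ℝ))]
      rw [if_pos (Finset.mem_range.2 (by omega))]
    have s3 : (∑ h ∈ Finset.range (g+1), if 2 ≤ h ∧ h ≤ g-2 then ((n:ℝ)+1) * μ0 else 0)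
        = ((n:ℝ)+1) * μ0 * ((g-3 : ℕ) : ℝ) := by
      rw [← Finset.sum_filter]
      have e : (Finset.range (g+1)).filter (fun h => 2 ≤ h ∧ h ≤ g-2)
          = Finset.Icc 2 (g-2) := by
        ext x
        simp only [Finset.mem_filter, Finset.mem_range, Finset.mem_Icc]
        omega
      rw [e, Finset.sum_const, Nat.card_Icc, nsmul_eq_mul]
      rw [show g-2+1-2 = g-3 by omega]
      ring
    have finalarith : 24*(g:ℝ)/(X:ℝ) + 24*(g:ℝ)/(X:ℝ) + ((n:ℝ)+1) * μ0 * ((g-3 : ℕ) : ℝ)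
        ≤ ((n:ℝ)+1)/(4*(g:ℝ)^2) := by
      rcases (by omega : g ≤ 3 ∨ 4 ≤ g) with hg3 | hg4
      · rw [show (g-3 : ℕ) = 0 by omega, Nat.cast_zero, mul_zero, add_zero]
        have cube : 64*(g:ℝ)^3 ≤ (X:ℝ) :=
          le_trans (Stmt4Aux.cubeIneqR (g:ℝ) (by exact_mod_cast hg2)) hXR
        rw [← add_div, div_le_div_iff₀ hXcpos (by positivity)]
        have h1 : (24*(g:ℝ)+24*(g:ℝ)) * (4*(g:ℝ)^2) = 3 * (64*(g:ℝ)^3) := by ring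
        have h2 : 3 * (64*(g:ℝ)^3) ≤ ((n:ℝ)+1) * (X:ℝ) :=
          mul_le_mul hn1 cube (by positivity) (by linarith)
        linarith
      · have hG4 : (4:ℝ) ≤ (g:ℝ) := by exact_mod_cast hg4
        have cg3 : ((g-3 : ℕ) : ℝ) = (g:ℝ)-3 := by
          have h' : (g-3 : ℕ) + 3 = g := by omega
          have h'' := congrArg (fun t : ℕ => (t:ℝ)) h'
          push_cast at h''
          linarith
        have c2g4 : ((2*g-4 : ℕ) : ℝ) = 2*(g:ℝ)-4 := by
          have h' : (2*g-4 : ℕ) + 4 = 2*g := by omega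
          have h'' := congrArg (fun t : ℕ => (t:ℝ)) h'
          push_cast at h''
          linarith
        have c2g5 : ((2*g-5 : ℕ) : ℝ) = 2*(g:ℝ)-5 := by
          have h' : (2*g-5 : ℕ) + 5 = 2*g := by omega
          have h'' := congrArg (fun t : ℕ => (t:ℝ)) h'
          push_cast at h''
          linarith
        have cgm1 : ((g-1 : ℕ) : ℝ) = (g:ℝ)-1 := by
          have h' : (g-1 : ℕ) + 1 = g := by omega
          have h'' := congrArg (fun t : ℕ => (t:ℝ)) h'
          push_cast at h''
          linarith
        have hμ0eq : μ0 = 36*((g:ℝ)-1)^2 / (((2*(g:ℝ)-4)*(2*(g:ℝ)-5))*(X:ℝ)) := by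
          simp only [hμ0def]
          rw [show ((36*(g-1)^2 : ℕ):ℝ) = 36*((g:ℝ)-1)^2 by push_cast; rw [cgm1]]
          congr 1
          push_cast
          rw [c2g4, c2g5]
        rw [hμ0eq, cg3]
        have hD : (0:ℝ) < (2*(g:ℝ)-4)*(2*(g:ℝ)-5) := by nlinarith
        have key2 : 4*(g:ℝ)^2*(16*(g:ℝ)*((2*(g:ℝ)-4)*(2*(g:ℝ)-5)) + ((g:ℝ)-3)*(36*((g:ℝ)-1)^2))
            ≤ ((2*(g:ℝ)-4)*(2*(g:ℝ)-5))*(X:ℝ) := by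
          have p := Stmt4Aux.polyIneqR (g:ℝ) hG4
          nlinarith [mul_le_mul_of_nonneg_right hXR hD.le]
        have b2 : 16*(g:ℝ)/(X:ℝ) +
            36*((g:ℝ)-1)^2/(((2*(g:ℝ)-4)*(2*(g:ℝ)-5))*(X:ℝ)) * ((g:ℝ)-3)
            ≤ 1/(4*(g:ℝ)^2) := by
          have e : 16*(g:ℝ)/(X:ℝ) +
              36*((g:ℝ)-1)^2/(((2*(g:ℝ)-4)*(2*(g:ℝ)-5))*(X:ℝ)) * ((g:ℝ)-3)
              = (16*(g:ℝ)*((2*(g:ℝ)-4)*(2*(g:ℝ)-5)) + ((g:ℝ)-3)*(36*((g:ℝ)-1)^2))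
                / (((2*(g:ℝ)-4)*(2*(g:ℝ)-5))*(X:ℝ)) := by
            have hX0 : (X:ℝ) ≠ 0 := hXcpos.ne'
            rw [div_mul_eq_mul_div, div_add_div _ _ hX0 (mul_ne_zero hD.ne' hX0),
              div_eq_div_iff (mul_ne_zero hX0 (mul_ne_zero hD.ne' hX0)) (mul_ne_zero hD.ne' hX0)]
            ring
          rw [e, div_le_div_iff₀ (by positivity) (by positivity)]
          nlinarith [key2]
        have balance : 24*(g:ℝ)/(X:ℝ) + 24*(g:ℝ)/(X:ℝ) ≤ ((n:ℝ)+1) * (16*(g:ℝ)/(X:ℝ)) := by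
          have h3 : 3 * (16*(g:ℝ)/(X:ℝ)) ≤ ((n:ℝ)+1) * (16*(g:ℝ)/(X:ℝ)) :=
            mul_le_mul_of_nonneg_right hn1 (by positivity)
          have h4 : 24*(g:ℝ)/(X:ℝ) + 24*(g:ℝ)/(X:ℝ) = 3 * (16*(g:ℝ)/(X:ℝ)) := by
            ring
          linarith
        have t1 : ((n:ℝ)+1) * (36*((g:ℝ)-1)^2 / (((2*(g:ℝ)-4)*(2*(g:ℝ)-5))*(X:ℝ))) * ((g:ℝ)-3)
            = ((n:ℝ)+1) * (36*((g:ℝ)-1)^2/(((2*(g:ℝ)-4)*(2*(g:ℝ)-5))*(X:ℝ)) * ((g:ℝ)-3)) := by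
          ring
        have t3 : ((n:ℝ)+1) * (16*(g:ℝ)/(X:ℝ) +
            36*((g:ℝ)-1)^2/(((2*(g:ℝ)-4)*(2*(g:ℝ)-5))*(X:ℝ)) * ((g:ℝ)-3))
            ≤ ((n:ℝ)+1) * (1/(4*(g:ℝ)^2)) :=
          mul_le_mul_of_nonneg_left b2 (by linarith)
        have t4 : ((n:ℝ)+1) * (1/(4*(g:ℝ)^2)) = ((n:ℝ)+1)/(4*(g:ℝ)^2) := by ring
        have t5 : ((n:ℝ)+1) * (16*(g:ℝ)/(X:ℝ)) +
            ((n:ℝ)+1) * (36*((g:ℝ)-1)^2/(((2*(g:ℝ)-4)*(2*(g:ℝ)-5))*(X:ℝ)) * ((g:ℝ)-3))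
            = ((n:ℝ)+1) * (16*(g:ℝ)/(X:ℝ) +
              36*((g:ℝ)-1)^2/(((2*(g:ℝ)-4)*(2*(g:ℝ)-5))*(X:ℝ)) * ((g:ℝ)-3)) := by
          ring
        linarith
    calc (∑ h ∈ Finset.range (g+1), γ h * (W h : ℝ))
        ≤ ∑ h ∈ Finset.range (g+1),
          ((if h = 1 then 24*(g:ℝ)/(X:ℝ) else 0) + (if h = g-1 then 24*(g:ℝ)/(X:ℝ) else 0) +
            (if 2 ≤ h ∧ h ≤ g-2 then ((n:ℝ)+1) * μ0 else 0)) := Finset.sum_le_sum hpoint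
      _ = 24*(g:ℝ)/(X:ℝ) + 24*(g:ℝ)/(X:ℝ) + ((n:ℝ)+1) * μ0 * ((g-3 : ℕ) : ℝ) := by
          rw [Finset.sum_add_distrib, Finset.sum_add_distrib, s1, s2, s3]
      _ ≤ ((n:ℝ)+1)/(4*(g:ℝ)^2) := finalarith
  unfold paperS
  rw [show ((n:ℝ)+1)/(8*(g:ℝ)^2) = 1/2 * (((n:ℝ)+1)/(4*(g:ℝ)^2)) by ring]
  exact mul_le_mul_of_nonneg_left (le_trans S1 SUMB) (by norm_num)
end

section
/- Fix an integer n ≥ 3. For all integers t ≥ 0, Σ_{m=3}^∞ (3/2)^m · P t m ≤ (2/3)^{t/10 − n}, where the exponent t/10 − n is a real number and the sum has finitely many nonzero terms. -/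
/-- The time-`t` distribution of the asymmetric simple random walk on `{2, 3, 4, …}`,
absorbed at `2`, started at `n`, which from any state `m > 2` jumps to `m − 1` with
probability `2/3` and to `m + 1` with probability `1/3`. -/
noncomputable def walkP (n : ℕ) : ℕ → ℕ → ℝ
  | 0, m => if m = n then 1 else 0
  | t + 1, m =>
    if m < 2 then 0
    else if m = 2 then walkP n t 2 + (2 / 3) * walkP n t 3
    else if m = 3 then (2 / 3) * walkP n t 4
    else (2 / 3) * walkP n t (m + 1) + (1 / 3) * walkP n t (m - 1)

lemma walkP_nonneg (n t m : ℕ) : 0 ≤ walkP n t m := by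
  induction t generalizing m with
  | zero => simp only [walkP]; positivity
  | succ t ih =>
    rw [walkP]
    split_ifs
    · exact le_refl 0
    · have := ih 2; have := ih 3; linarith
    · have := ih 4; linarith
    · have := ih (m+1); have := ih (m-1); linarith

lemma walkP_succ_three (n t : ℕ) : walkP n (t+1) 3 = (2/3) * walkP n t 4 := by
  rw [walkP]; norm_num

lemma walkP_succ_big (n t m : ℕ) (h : 4 ≤ m) :
    walkP n (t+1) m = (2/3) * walkP n t (m+1) + (1/3) * walkP n t (m-1) := by
  rw [walkP]
  rw [if_neg (by omega), if_neg (by omega), if_neg (by omega)]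

lemma walkP_zero_of_gt (n t m : ℕ) (hn : 3 ≤ n) (h : n + t < m) : walkP n t m = 0 := by
  induction t generalizing m with
  | zero => rw [walkP]; rw [if_neg (by omega)]
  | succ t ih =>
    have h4 : 4 ≤ m := by omega
    rw [walkP_succ_big n t m h4, ih (m+1) (by omega), ih (m-1) (by omega)]
    ring

lemma summable_walk (n t k : ℕ) (hn : 3 ≤ n) (hk : 3 ≤ k) :
    Summable (fun m => (3/2:ℝ)^(m+k) * walkP n t (m+k)) := by
  apply summable_of_ne_finset_zero (s := Finset.range (n+t+1))
  intro m hm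
  rw [Finset.mem_range, not_lt] at hm
  rw [walkP_zero_of_gt n t (m+k) hn (by omega), mul_zero]

lemma step (n : ℕ) (hn : 3 ≤ n) (t : ℕ) :
    (∑' m : ℕ, (3/2:ℝ)^(m+3) * walkP n (t+1) (m+3)) ≤
      (17/18) * ∑' m : ℕ, (3/2:ℝ)^(m+3) * walkP n t (m+3) := by
  have h3 := summable_walk n t 3 hn (by norm_num)
  have h4 := summable_walk n t 4 hn (by norm_num)
  have h5 := summable_walk n t 5 hn (by norm_num)
  have hS1 := summable_walk n (t+1) 3 hn (by norm_num)
  have key : ∀ m : ℕ, (3/2:ℝ)^(m+1+3) * walkP n (t+1) (m+1+3)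
      = (4/9) * ((3/2:ℝ)^(m+5) * walkP n t (m+5))
        + (1/2) * ((3/2:ℝ)^(m+3) * walkP n t (m+3)) := by
    intro m
    rw [walkP_succ_big n t (m+1+3) (by omega)]
    simp only [show m+1+3+1 = m+5 from rfl, show m+1+3-1 = m+3 from rfl]
    rw [show m+5 = (m+4)+1 from rfl, show m+1+3 = (m+3)+1 from rfl, pow_succ, pow_succ]
    ring
  rw [Summable.tsum_eq_zero_add hS1, tsum_congr key, Summable.tsum_add (h5.mul_left _) (h3.mul_left _),
    tsum_mul_left, tsum_mul_left]
  have e3 : (∑' m : ℕ, (3/2:ℝ)^(m+3) * walkP n t (m+3))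
      = (3/2:ℝ)^3 * walkP n t 3 + ∑' m : ℕ, (3/2:ℝ)^(m+4) * walkP n t (m+4) := by
    rw [Summable.tsum_eq_zero_add h3]

  have e4 : (∑' m : ℕ, (3/2:ℝ)^(m+4) * walkP n t (m+4))
      = (3/2:ℝ)^4 * walkP n t 4 + ∑' m : ℕ, (3/2:ℝ)^(m+5) * walkP n t (m+5) := by
    rw [Summable.tsum_eq_zero_add h4]

  rw [e3, e4, walkP_succ_three]
  have hP3 := walkP_nonneg n t 3
  norm_num
  nlinarith [hP3]

/-- For `n ≥ 3` and every `t ≥ 0`,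
`∑_{m=3}^∞ (3/2)^m · P t m ≤ (2/3)^{t/10 − n}`. -/
theorem stmt6 (n : ℕ) (hn : 3 ≤ n) (t : ℕ) :
    (∑' m : ℕ, (3 / 2 : ℝ) ^ (m + 3) * walkP n t (m + 3)) ≤
      (2 / 3 : ℝ) ^ ((t : ℝ) / 10 - (n : ℝ)) := by
  have hS : ∀ s : ℕ, (∑' m : ℕ, (3/2:ℝ)^(m+3) * walkP n s (m+3))
      ≤ (17/18:ℝ)^s * (3/2:ℝ)^n := by
    intro s
    induction s with
    | zero =>
      have : (∑' m : ℕ, (3/2:ℝ)^(m+3) * walkP n 0 (m+3)) = (3/2:ℝ)^n := by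
        rw [tsum_eq_single (n-3)]
        · rw [show n-3+3 = n from by omega]
          simp [walkP]
        · intro b hb
          have hbn : b+3 ≠ n := by omega
          simp [walkP, hbn]
      rw [this]; norm_num
    | succ s ih =>
      calc (∑' m : ℕ, (3/2:ℝ)^(m+3) * walkP n (s+1) (m+3))
          ≤ (17/18) * ∑' m : ℕ, (3/2:ℝ)^(m+3) * walkP n s (m+3) := step n hn s
        _ ≤ (17/18) * ((17/18:ℝ)^s * (3/2:ℝ)^n) := by
            apply mul_le_mul_of_nonneg_left ih (by norm_num)
        _ = (17/18:ℝ)^(s+1) * (3/2:ℝ)^n := by ring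
  have a : ((17:ℝ)/18)^t ≤ (2/3:ℝ)^((t:ℝ)/10) := by
    have h1 : ((((17:ℝ)/18)^(10:ℕ)))^((t:ℝ)/10) = ((17:ℝ)/18)^t := by
      rw [← Real.rpow_natCast ((17:ℝ)/18) 10,
        ← Real.rpow_mul (by norm_num : (0:ℝ) ≤ 17/18)]
      rw [show ((10:ℕ):ℝ)*((t:ℝ)/10) = (t:ℝ) by push_cast; ring, Real.rpow_natCast]
    rw [← h1]
    apply Real.rpow_le_rpow (by positivity) (by norm_num) (by positivity)
  have hinv : (3/2:ℝ)^n = ((2/3:ℝ)^n)⁻¹ := by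
    rw [← inv_pow]; norm_num
  calc (∑' m : ℕ, (3/2:ℝ)^(m+3) * walkP n t (m+3))
      ≤ (17/18:ℝ)^t * (3/2:ℝ)^n := hS t
    _ ≤ (2/3:ℝ)^((t:ℝ)/10) * (3/2:ℝ)^n := by
        apply mul_le_mul_of_nonneg_right a (by positivity)
    _ = (2/3:ℝ)^((t:ℝ)/10 - (n:ℝ)) := by
        rw [Real.rpow_sub (by norm_num : (0:ℝ) < 2/3), Real.rpow_natCast, hinv]
        norm_num [div_eq_mul_inv]
end

section
/- Fix an integer n ≥ 3. For all integers t ≥ 0, Σ_{m=3}^∞ P t m < (2/3)^{t/10 − n}, where the exponent t/10 − n is a real number and the sum has finitely many nonzero terms. Equivalently, the probability that the walk started at n is not absorbed at 2 by time t is strictly less than (2/3)^{t/10 − n}. -/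
lemma walkP_eq_zero (n t m : ℕ) (h : n + t < m) : walkP n t m = 0 := by
  induction t generalizing m with
  | zero => simp only [walkP]; rw [if_neg]; omega
  | succ t ih =>
    simp only [walkP]
    split_ifs with h1 h2 h3
    · rfl
    · rw [ih 2 (by omega), ih 3 (by omega)]; ring
    · rw [ih 4 (by omega)]; ring
    · rw [ih (m + 1) (by omega), ih (m - 1) (by omega)]; ring

/-- The weighted sum `∑ (√2)^m · P t (m+3)`. -/
noncomputable def wW (n t : ℕ) : ℝ := ∑' m : ℕ, (Real.sqrt 2) ^ m * walkP n t (m + 3)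

lemma summable_shift (n t c : ℕ) : Summable (fun m : ℕ => (Real.sqrt 2) ^ m * walkP n t (m + c)) := by
  apply summable_of_ne_finset_zero (s := Finset.range (n + t + 1))
  intro m hm
  simp only [Finset.mem_range, not_lt] at hm
  rw [walkP_eq_zero n t (m + c) (by omega), mul_zero]

lemma summable_plain (n t c : ℕ) : Summable (fun m : ℕ => walkP n t (m + c)) := by
  apply summable_of_ne_finset_zero (s := Finset.range (n + t + 1))
  intro m hm
  simp only [Finset.mem_range, not_lt] at hm
  exact walkP_eq_zero n t (m + c) (by omega)

lemma summable_gg (n t : ℕ) :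
    Summable (fun m : ℕ => if m = 0 then (0:ℝ) else (Real.sqrt 2) ^ m * walkP n t (m + 2)) := by
  apply summable_of_ne_finset_zero (s := Finset.range (n + t + 3))
  intro m hm
  simp only [Finset.mem_range, not_lt] at hm
  rw [if_neg (by omega), walkP_eq_zero n t (m + 2) (by omega), mul_zero]

lemma wW_step (n t : ℕ) : wW n (t + 1) ≤ (2 * Real.sqrt 2 / 3) * wW n t := by
  set l := Real.sqrt 2 with hl_def
  have hl0 : (0:ℝ) < l := Real.sqrt_pos.2 (by norm_num)
  have hl2 : l * l = 2 := Real.mul_self_sqrt (by norm_num)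
  have key : ∀ m : ℕ, l ^ m * walkP n (t + 1) (m + 3)
      = (2/3) * (l ^ m * walkP n t (m + 4))
        + (1/3) * (if m = 0 then (0:ℝ) else l ^ m * walkP n t (m + 2)) := by
    intro m
    match m with
    | 0 => simp [walkP]
    | m + 1 =>
      have h4 : m + 1 + 3 = m + 4 := by omega
      rw [h4]
      have : walkP n (t+1) (m+4) = (2/3) * walkP n t (m+4+1) + (1/3) * walkP n t (m+4-1) := by
        simp only [walkP]
        rw [if_neg (by omega), if_neg (by omega), if_neg (by omega)]
      rw [this, if_neg (by omega)]
      have h5 : m + 4 + 1 = (m + 1) + 4 := by omega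
      have h6 : m + 4 - 1 = (m + 1) + 2 := by omega
      rw [h5, h6]; ring
  have hS1 : Summable (fun m : ℕ => l ^ m * walkP n t (m + 4)) := summable_shift n t 4
  have hS2 := summable_gg n t
  have hW : Summable (fun m : ℕ => l ^ m * walkP n t (m + 3)) := summable_shift n t 3
  have expand : wW n (t+1)
      = (2/3) * (∑' m : ℕ, l ^ m * walkP n t (m + 4))
        + (1/3) * (∑' m : ℕ, if m = 0 then (0:ℝ) else l ^ m * walkP n t (m + 2)) := by
    rw [wW, tsum_congr key, Summable.tsum_add (hS1.mul_left _) (hS2.mul_left _),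
        tsum_mul_left, tsum_mul_left]
  -- second sum equals l * wW n t
  have eq2 : (∑' m : ℕ, if m = 0 then (0:ℝ) else l ^ m * walkP n t (m + 2)) = l * wW n t := by
    rw [Summable.tsum_eq_zero_add hS2, if_pos rfl, zero_add, wW, ← tsum_mul_left]
    apply tsum_congr
    intro k
    rw [if_neg k.succ_ne_zero]
    have : k + 1 + 2 = k + 3 := by omega
    rw [this, pow_succ]; ring
  -- first sum: wW n t = walkP n t 3 + l * S1
  have eq1 : wW n t = walkP n t 3 + l * (∑' m : ℕ, l ^ m * walkP n t (m + 4)) := by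
    rw [wW, Summable.tsum_eq_zero_add hW]
    simp only [pow_zero, one_mul]
    rw [← tsum_mul_left]
    congr 1
    apply tsum_congr
    intro k
    have : k + 1 + 3 = k + 4 := by omega
    rw [this, pow_succ]; ring
  have hS1nn : (0:ℝ) ≤ ∑' m : ℕ, l ^ m * walkP n t (m + 4) :=
    tsum_nonneg fun m => mul_nonneg (by positivity) (walkP_nonneg n t _)
  have hp3 : 0 ≤ walkP n t 3 := walkP_nonneg n t 3
  have hle : l * (∑' m : ℕ, l ^ m * walkP n t (m + 4)) ≤ wW n t := by
    rw [eq1]; linarith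
  rw [expand, eq2]
  nlinarith [mul_le_mul_of_nonneg_left hle hl0.le, hl2, hS1nn, hl0]

lemma wW_nonneg (n t : ℕ) : 0 ≤ wW n t :=
  tsum_nonneg fun m => mul_nonneg (by positivity) (walkP_nonneg n t _)

lemma wW_le (n t : ℕ) : wW n t ≤ (2 * Real.sqrt 2 / 3) ^ t * wW n 0 := by
  induction t with
  | zero => simp
  | succ t ih =>
    calc wW n (t+1) ≤ (2 * Real.sqrt 2 / 3) * wW n t := wW_step n t
      _ ≤ (2 * Real.sqrt 2 / 3) * ((2 * Real.sqrt 2 / 3) ^ t * wW n 0) := by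
          apply mul_le_mul_of_nonneg_left ih (by positivity)
      _ = (2 * Real.sqrt 2 / 3) ^ (t+1) * wW n 0 := by ring

lemma wW_zero (n : ℕ) (hn : 3 ≤ n) : wW n 0 = (Real.sqrt 2) ^ (n - 3) := by
  rw [wW]
  rw [tsum_eq_single (n - 3)]
  · simp only [walkP]
    rw [if_pos (by omega), mul_one]
  · intro m hm
    simp only [walkP]
    rw [if_neg (by omega), mul_zero]

lemma sqrt2_pow10 : (Real.sqrt 2) ^ (10:ℕ) = 32 := by
  have : (Real.sqrt 2) ^ (10:ℕ) = ((Real.sqrt 2) ^ 2) ^ 5 := by ring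
  rw [this, Real.sq_sqrt (by norm_num : (0:ℝ) ≤ 2)]
  norm_num

lemma c_le : (2 * Real.sqrt 2 / 3 : ℝ) ≤ (2/3 : ℝ) ^ ((1:ℝ)/10) := by
  have hc0 : (0:ℝ) ≤ 2 * Real.sqrt 2 / 3 := by positivity
  have h10 : (2 * Real.sqrt 2 / 3 : ℝ) ^ (10:ℕ) ≤ 2/3 := by
    have : (2 * Real.sqrt 2 / 3 : ℝ) ^ (10:ℕ) = 2^10 * (Real.sqrt 2)^(10:ℕ) / 3^10 := by ring
    rw [this, sqrt2_pow10]
    norm_num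
  calc (2 * Real.sqrt 2 / 3 : ℝ)
      = ((2 * Real.sqrt 2 / 3 : ℝ) ^ (10:ℕ)) ^ ((1:ℝ)/10) := by
        rw [← Real.rpow_natCast (2 * Real.sqrt 2 / 3) 10, ← Real.rpow_mul hc0]
        norm_num
    _ ≤ (2/3 : ℝ) ^ ((1:ℝ)/10) := Real.rpow_le_rpow (by positivity) h10 (by norm_num)

/-- For `n ≥ 3` and every `t ≥ 0`, the probability of not being
absorbed at `2` by time `t` satisfies `∑_{m=3}^∞ P t m < (2/3)^{t/10 − n}`. -/
theorem stmt7 (n : ℕ) (hn : 3 ≤ n) (t : ℕ) :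
    (∑' m : ℕ, walkP n t (m + 3)) < (2 / 3 : ℝ) ^ ((t : ℝ) / 10 - (n : ℝ)) := by
  have hl0 : (0:ℝ) < Real.sqrt 2 := Real.sqrt_pos.2 (by norm_num)
  have hl1 : (1:ℝ) ≤ Real.sqrt 2 := by
    rw [show (1:ℝ) = Real.sqrt 1 from (Real.sqrt_one).symm]
    exact Real.sqrt_le_sqrt (by norm_num)
  -- the plain sum is at most the weighted sum
  have h1 : (∑' m : ℕ, walkP n t (m + 3)) ≤ wW n t := by
    apply Summable.tsum_le_tsum _ (summable_plain n t 3) (summable_shift n t 3)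
    intro m
    calc walkP n t (m + 3) = 1 * walkP n t (m + 3) := (one_mul _).symm
      _ ≤ (Real.sqrt 2) ^ m * walkP n t (m + 3) := by
          apply mul_le_mul_of_nonneg_right _ (walkP_nonneg n t _)
          calc (1:ℝ) = 1 ^ m := (one_pow m).symm
            _ ≤ (Real.sqrt 2) ^ m := pow_le_pow_left₀ (by norm_num) hl1 m
  have h2 : wW n t ≤ (2 * Real.sqrt 2 / 3) ^ t * (Real.sqrt 2) ^ (n - 3) := by
    rw [← wW_zero n hn]; exact wW_le n t
  -- exponential part
  have h3 : (2 * Real.sqrt 2 / 3 : ℝ) ^ t ≤ (2/3 : ℝ) ^ ((t:ℝ)/10) := by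
    have : ((2/3 : ℝ) ^ ((1:ℝ)/10)) ^ t = (2/3 : ℝ) ^ ((t:ℝ)/10) := by
      rw [← Real.rpow_natCast ((2/3 : ℝ) ^ ((1:ℝ)/10)) t, ← Real.rpow_mul (by norm_num)]
      ring_nf
    rw [← this]
    exact pow_le_pow_left₀ (by positivity) c_le t
  -- base point part
  have h4 : (Real.sqrt 2) ^ (n - 3) < (3/2 : ℝ) ^ n := by
    have hs : Real.sqrt 2 ≤ 3/2 := by
      rw [show (3/2:ℝ) = Real.sqrt ((3/2)^2) from (Real.sqrt_sq (by norm_num)).symm]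
      exact Real.sqrt_le_sqrt (by norm_num)
    calc (Real.sqrt 2) ^ (n - 3) ≤ (3/2 : ℝ) ^ (n - 3) :=
          pow_le_pow_left₀ hl0.le hs (n - 3)
      _ < (3/2 : ℝ) ^ n := by
          apply pow_lt_pow_right₀ (by norm_num)
          omega
  -- RHS expansion
  have hrhs : (2 / 3 : ℝ) ^ ((t : ℝ) / 10 - (n : ℝ))
      = (2/3 : ℝ) ^ ((t:ℝ)/10) * (3/2 : ℝ) ^ n := by
    rw [Real.rpow_sub (by norm_num), Real.rpow_natCast, div_eq_mul_inv]
    congr 1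
    rw [← inv_pow]
    norm_num
  have hpos : (0:ℝ) < (2/3 : ℝ) ^ ((t:ℝ)/10) := Real.rpow_pos_of_pos (by norm_num) _
  calc (∑' m : ℕ, walkP n t (m + 3)) ≤ (2 * Real.sqrt 2 / 3) ^ t * (Real.sqrt 2) ^ (n - 3) :=
        le_trans h1 h2
    _ ≤ (2/3 : ℝ) ^ ((t:ℝ)/10) * (Real.sqrt 2) ^ (n - 3) :=
        mul_le_mul_of_nonneg_right h3 (by positivity)
    _ < (2/3 : ℝ) ^ ((t:ℝ)/10) * (3/2 : ℝ) ^ n :=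
        (mul_lt_mul_iff_right₀ hpos).2 h4
    _ = (2 / 3 : ℝ) ^ ((t : ℝ) / 10 - (n : ℝ)) := hrhs.symm
end

section
/- For any integers N ≥ k ≥ 1, Σ_{m=1}^N Z_k(m) ≤ (log N + 5)^k. -/
/-- `ζ(s) = ∑_{j=1}^∞ j^{−s}` as a real number (for a natural exponent `s`). -/
noncomputable def zetaR (s : ℕ) : ℝ := ∑' j : ℕ, (1 : ℝ) / ((j : ℝ) + 1) ^ s

lemma zsummable {s : ℕ} (hs : 2 ≤ s) : Summable (fun j : ℕ => (1 : ℝ) / ((j : ℝ) + 1) ^ s) := by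
  have h : Summable (fun j : ℕ => (1 : ℝ) / (j : ℝ) ^ s) :=
    Real.summable_one_div_nat_pow.2 (by omega)
  have := (summable_nat_add_iff 1).2 h
  simpa using this

lemma zetaR_nonneg (s : ℕ) : 0 ≤ zetaR s :=
  tsum_nonneg fun j => by positivity

lemma tail_two_le : ∑' j : ℕ, (1 : ℝ) / ((j : ℝ) + 2) ^ 2 ≤ 1 := by
  have h1 : HasSum (fun n : ℕ => (1 : ℝ) / ((n + 2 : ℕ) : ℝ) ^ 2) (Real.pi ^ 2 / 6 - 1) := by
    apply (hasSum_nat_add_iff (f := fun n : ℕ => (1 : ℝ) / (n : ℝ) ^ 2) 2).2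
    have : Real.pi ^ 2 / 6 - 1 + ∑ i ∈ Finset.range 2, (1 : ℝ) / (i : ℝ) ^ 2
        = Real.pi ^ 2 / 6 := by
      simp [Finset.sum_range_succ]
    rw [this]
    exact hasSum_zeta_two
  have h2 : HasSum (fun n : ℕ => (1 : ℝ) / ((n : ℝ) + 2) ^ 2) (Real.pi ^ 2 / 6 - 1) := by
    convert h1 using 2 with n
    push_cast
    ring_nf
  rw [h2.tsum_eq]
  have hpi : Real.pi < 3.15 := Real.pi_lt_d2
  have hpi0 : 0 < Real.pi := Real.pi_pos
  nlinarith

set_option maxHeartbeats 1000000 in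
lemma zetaR_tail_le {a : ℕ} (ha : 1 ≤ a) :
    zetaR (2 * a) ≤ 1 + (1 / 4 : ℝ) ^ (a - 1) := by
  have hs : 2 ≤ 2 * a := by omega
  have hsum := zsummable hs
  rw [zetaR, Summable.tsum_eq_zero_add hsum]
  have h0 : (1 : ℝ) / (((0 : ℕ) : ℝ) + 1) ^ (2 * a) = 1 := by norm_num
  rw [h0]
  have key : ∑' j : ℕ, (1 : ℝ) / (((j + 1 : ℕ) : ℝ) + 1) ^ (2 * a) ≤ (1 / 4 : ℝ) ^ (a - 1) := ?_
  · linarith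
  have hterm : ∀ j : ℕ, (1 : ℝ) / (((j + 1 : ℕ) : ℝ) + 1) ^ (2 * a)
      ≤ (1 / 4 : ℝ) ^ (a - 1) * ((1 : ℝ) / ((j : ℝ) + 2) ^ 2) := by
    intro j
    have hx : ((j + 1 : ℕ) : ℝ) + 1 = (j : ℝ) + 2 := by push_cast; ring
    rw [hx]
    set x : ℝ := (j : ℝ) + 2 with hxdef
    have hx0 : (0 : ℝ) < x := by positivity
    have hx4 : (4 : ℝ) ≤ x ^ 2 := by nlinarith [Nat.cast_nonneg (α := ℝ) j]
    have hpow : 4 ^ (a - 1) * x ^ 2 ≤ x ^ (2 * a) := by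
      have h1 : (4 : ℝ) ^ (a - 1) ≤ (x ^ 2) ^ (a - 1) :=
        pow_le_pow_left₀ (by norm_num) hx4 _
      have h2 : x ^ (2 * a) = x ^ 2 * (x ^ 2) ^ (a - 1) := by
        rw [pow_mul, ← pow_succ']
        congr 1
        omega
      rw [h2]
      nlinarith [sq_nonneg x]
    have heq : (1 / 4 : ℝ) ^ (a - 1) * ((1 : ℝ) / x ^ 2)
        = 1 / (4 ^ (a - 1) * x ^ 2) := by
      rw [div_pow, one_pow, div_mul_div_comm, one_mul]
    rw [heq]
    exact one_div_le_one_div_of_le (by positivity) hpow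
  have hsum1 : Summable (fun j : ℕ => (1 : ℝ) / (((j + 1 : ℕ) : ℝ) + 1) ^ (2 * a)) :=
    (summable_nat_add_iff 1).2 hsum
  have hsum2' : Summable (fun j : ℕ => (1 : ℝ) / ((j : ℝ) + 2) ^ 2) := by
    have := (summable_nat_add_iff 1).2 (zsummable (le_refl 2))
    apply this.congr
    intro j
    push_cast
    ring_nf
  have hsum2 : Summable (fun j : ℕ => (1 / 4 : ℝ) ^ (a - 1) * ((1 : ℝ) / ((j : ℝ) + 2) ^ 2)) :=
    hsum2'.mul_left _
  calc ∑' j : ℕ, (1 : ℝ) / (((j + 1 : ℕ) : ℝ) + 1) ^ (2 * a)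
      ≤ ∑' j : ℕ, (1 / 4 : ℝ) ^ (a - 1) * ((1 : ℝ) / ((j : ℝ) + 2) ^ 2) :=
        Summable.tsum_le_tsum hterm hsum1 hsum2
    _ = (1 / 4 : ℝ) ^ (a - 1) * ∑' j : ℕ, (1 : ℝ) / ((j : ℝ) + 2) ^ 2 := tsum_mul_left
    _ ≤ (1 / 4 : ℝ) ^ (a - 1) * 1 :=
        mul_le_mul_of_nonneg_left tail_two_le (by positivity)
    _ = (1 / 4 : ℝ) ^ (a - 1) := mul_one _

open Finset in
lemma sum_zeta_div_le (N : ℕ) (hN : 1 ≤ N) :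
    ∑ a ∈ Icc 1 N, zetaR (2 * a) / (a : ℝ) ≤ Real.log N + 5 := by
  have hstep : ∑ a ∈ Icc 1 N, zetaR (2 * a) / (a : ℝ)
      ≤ ∑ a ∈ Icc 1 N, ((1 : ℝ) / a + (1 / 4 : ℝ) ^ (a - 1)) := by
    apply Finset.sum_le_sum
    intro a hamem
    have ha : 1 ≤ a := (Finset.mem_Icc.1 hamem).1
    have ha0 : (0 : ℝ) < a := by exact_mod_cast ha
    calc zetaR (2 * a) / (a : ℝ) ≤ (1 + (1 / 4 : ℝ) ^ (a - 1)) / a := by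
          exact div_le_div_of_nonneg_right (zetaR_tail_le ha) ha0.le
      _ = 1 / a + (1 / 4 : ℝ) ^ (a - 1) / a := by ring
      _ ≤ 1 / a + (1 / 4 : ℝ) ^ (a - 1) := by
          have h1a : (1 : ℝ) ≤ a := by exact_mod_cast ha
          have : (1 / 4 : ℝ) ^ (a - 1) / a ≤ (1 / 4 : ℝ) ^ (a - 1) / 1 := by
            apply div_le_div_of_nonneg_left (by positivity) (by norm_num) h1a
          simpa using this
  rw [Finset.sum_add_distrib] at hstep
  have hharm : ∑ a ∈ Icc 1 N, (1 : ℝ) / a ≤ Real.log N + 1 := by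
    have h := harmonic_le_one_add_log N
    have hcast : ((harmonic N : ℚ) : ℝ) = ∑ a ∈ Icc 1 N, (1 : ℝ) / a := by
      rw [harmonic_eq_sum_Icc]
      push_cast
      simp [one_div]
    rw [hcast] at h
    linarith
  have hgeom : ∑ a ∈ Icc 1 N, (1 / 4 : ℝ) ^ (a - 1) ≤ 4 / 3 := by
    have hre : ∑ a ∈ Icc 1 N, (1 / 4 : ℝ) ^ (a - 1)
        = ∑ i ∈ range N, (1 / 4 : ℝ) ^ i := by
      rw [show Icc 1 N = Ico 1 (N + 1) by rw [Finset.Ico_add_one_right_eq_Icc],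
        Finset.sum_Ico_eq_sum_range]
      simp
    rw [hre]
    have hsumg : Summable (fun i : ℕ => (1 / 4 : ℝ) ^ i) :=
      summable_geometric_of_lt_one (by norm_num) (by norm_num)
    calc ∑ i ∈ range N, (1 / 4 : ℝ) ^ i ≤ ∑' i : ℕ, (1 / 4 : ℝ) ^ i :=
          Summable.sum_le_tsum _ (fun i _ => by positivity) hsumg
      _ = (1 - 1 / 4 : ℝ)⁻¹ := tsum_geometric_of_lt_one (by norm_num) (by norm_num)
      _ = 4 / 3 := by norm_num
  linarith

/-- `Z_k(m) = ∑ ∏_{i=1}^k ζ(2 a_i)/a_i`, summed over all compositions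
`(a_1, …, a_k)` of `m` into `k` positive parts; in particular `Z_k(m) = 0` for `m < k`. -/
noncomputable def Zk (k m : ℕ) : ℝ :=
  ∑ a ∈ Finset.Nat.antidiagonalTuple k m,
    if ∀ i, 1 ≤ a i then ∏ i, zetaR (2 * a i) / (a i : ℝ) else 0

open Finset in
/-- For integers `N ≥ k ≥ 1`, `∑_{m=1}^N Z_k(m) ≤ (log N + 5)^k`. -/
theorem stmt10 (N k : ℕ) (hk : 1 ≤ k) (hN : k ≤ N) :
    (∑ m ∈ Finset.Icc 1 N, Zk k m) ≤ (Real.log N + 5) ^ k := by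
  have hN1 : 1 ≤ N := le_trans hk hN
  set f : ℕ → ℝ := fun a => zetaR (2 * a) / (a : ℝ) with hf
  have hf0 : ∀ a : ℕ, 0 ≤ f a := fun a => div_nonneg (zetaR_nonneg _) (Nat.cast_nonneg a)
  have hdisj : (↑(Icc 1 N) : Set ℕ).PairwiseDisjoint (Finset.Nat.antidiagonalTuple k) := by
    intro m₁ _ m₂ _ hne
    simp only [Finset.disjoint_left]
    intro a ha1 ha2
    rw [Finset.Nat.mem_antidiagonalTuple] at ha1 ha2
    exact hne (ha1.symm.trans ha2)
  have hL : (∑ m ∈ Finset.Icc 1 N, Zk k m)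
      = ∑ a ∈ (Icc 1 N).biUnion (Finset.Nat.antidiagonalTuple k),
          (if ∀ i, 1 ≤ a i then ∏ i, f (a i) else 0) := by
    rw [Finset.sum_biUnion hdisj]
    rfl
  rw [hL, Finset.sum_ite, Finset.sum_const, smul_zero, add_zero]
  have hsub : ((Icc 1 N).biUnion (Finset.Nat.antidiagonalTuple k)).filter (fun a => ∀ i, 1 ≤ a i)
      ⊆ Fintype.piFinset (fun _ : Fin k => Icc 1 N) := by
    intro a ha
    rw [Finset.mem_filter] at ha
    obtain ⟨hamem, hpos⟩ := ha
    rw [Finset.mem_biUnion] at hamem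
    obtain ⟨m, hm, ham⟩ := hamem
    rw [Finset.Nat.mem_antidiagonalTuple] at ham
    rw [Fintype.mem_piFinset]
    intro i
    rw [Finset.mem_Icc]
    refine ⟨hpos i, ?_⟩
    calc a i ≤ ∑ j, a j := Finset.single_le_sum (fun j _ => Nat.zero_le _) (Finset.mem_univ i)
      _ = m := ham
      _ ≤ N := (Finset.mem_Icc.1 hm).2
  calc ∑ a ∈ ((Icc 1 N).biUnion (Finset.Nat.antidiagonalTuple k)).filter
          (fun a => ∀ i, 1 ≤ a i), ∏ i, f (a i)
      ≤ ∑ a ∈ Fintype.piFinset (fun _ : Fin k => Icc 1 N), ∏ i, f (a i) :=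
        Finset.sum_le_sum_of_subset_of_nonneg hsub
          (fun a _ _ => Finset.prod_nonneg fun i _ => hf0 _)
    _ = ∏ _i : Fin k, ∑ a ∈ Icc 1 N, f a := (Finset.prod_univ_sum _ _).symm
    _ = (∑ a ∈ Icc 1 N, f a) ^ k := by rw [Finset.prod_const, Finset.card_univ, Fintype.card_fin]
    _ ≤ (Real.log N + 5) ^ k :=
        pow_le_pow_left₀ (Finset.sum_nonneg fun a _ => hf0 a) (sum_zeta_div_le N hN1) k
end

section
/- For every integer k ≥ 1 and every complex number w with |w| < 1: (i) the series Σ_{m=k}^∞ H_k(m)·w^m converges with sum (−Log(1 − w))^k; and (ii) the series over j ≥ 1 of Log(1 − w/j²) converges absolutely, and the series Σ_{m=k}^∞ Z_k(m)·w^m converges with sum (−Σ_{j=1}^∞ Log(1 − w/j²))^k. Here Log denotes the principal branch of the complex logarithm. -/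
/-- `H_k(m) = ∑ ∏_{i=1}^k 1/a_i`, summed over all compositions `(a_1, …, a_k)` of `m`
into `k` positive parts; in particular `H_k(m) = 0` for `m < k`. -/
noncomputable def Hk (k m : ℕ) : ℝ :=
  ∑ a ∈ Finset.Nat.antidiagonalTuple k m,
    if ∀ i, 1 ≤ a i then ∏ i, (1 : ℝ) / (a i : ℝ) else 0

lemma summable_shift_s13 (p : ℕ) (hp : 2 ≤ p) :
    Summable (fun j : ℕ => (1 : ℝ) / ((j : ℝ) + 1) ^ p) := by
  have h := (Real.summable_one_div_nat_pow.mpr (by omega : 1 < p)).comp_injective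
    Nat.succ_injective
  refine h.congr fun j => ?_
  simp [Function.comp, Nat.succ_eq_add_one]

lemma prod_summable_norm {g : ℕ → ℂ} (hg : Summable fun a => ‖g a‖) (k : ℕ) :
    Summable (fun a : Fin k → ℕ => ‖∏ i, g (a i)‖) := by
  induction k with
  | zero => exact .of_finite
  | succ k ih =>
    have h2 : Summable (fun p : ℕ × (Fin k → ℕ) => ‖g p.1 * ∏ i, g (p.2 i)‖) :=
      Summable.mul_norm (R := ℂ) (f := g) (g := fun a : Fin k → ℕ => ∏ i, g (a i)) hg ih
    refine ((Fin.consEquiv (fun _ : Fin (k + 1) => ℕ)).summable_iff).mp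
      (h2.congr fun p => ?_)
    simp only [Fin.consEquiv, Equiv.coe_fn_mk, Function.comp_apply]
    congr 1
    simp [Fin.prod_univ_succ]

lemma prod_hasSum {g : ℕ → ℂ} (hg : Summable fun a => ‖g a‖) {S : ℂ} (hS : HasSum g S)
    (k : ℕ) : HasSum (fun a : Fin k → ℕ => ∏ i, g (a i)) (S ^ k) := by
  induction k with
  | zero => simpa using hasSum_fintype (fun a : Fin 0 → ℕ => ∏ i, g (a i))
  | succ k ih =>
    have hsum : Summable (fun p : ℕ × (Fin k → ℕ) => g p.1 * ∏ i, g (p.2 i)) :=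
      (Summable.mul_norm (R := ℂ) (f := g) (g := fun a : Fin k → ℕ => ∏ i, g (a i))
        hg (prod_summable_norm hg k)).of_norm
    have h2 := hS.mul ih hsum
    rw [← pow_succ'] at h2
    have heq : (fun p : ℕ × (Fin k → ℕ) => g p.1 * ∏ i, g (p.2 i))
        = (fun a : Fin (k + 1) → ℕ => ∏ i, g (a i)) ∘ (Fin.consEquiv fun _ => ℕ) := by
      funext p
      simp only [Fin.consEquiv, Equiv.coe_fn_mk, Function.comp_apply]
      simp [Fin.prod_univ_succ]
    rw [heq] at h2
    exact ((Fin.consEquiv (fun _ : Fin (k + 1) => ℕ)).hasSum_iff).mp h2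

def antiEquiv (k : ℕ) :
    (Σ m : ℕ, {a : Fin k → ℕ // a ∈ Finset.Nat.antidiagonalTuple k m}) ≃ (Fin k → ℕ) where
  toFun x := x.2.1
  invFun a := ⟨∑ i, a i, a, Finset.Nat.mem_antidiagonalTuple.mpr rfl⟩
  left_inv := by
    rintro ⟨m, a, ha⟩
    obtain rfl := Finset.Nat.mem_antidiagonalTuple.mp ha
    rfl
  right_inv a := rfl

lemma hasSum_antidiagonalTuple {k : ℕ} {F : (Fin k → ℕ) → ℂ} {T : ℂ} (h : HasSum F T) :
    HasSum (fun m : ℕ => ∑ a ∈ Finset.Nat.antidiagonalTuple k m, F a) T := by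
  have h2 : HasSum (F ∘ (antiEquiv k)) T := ((antiEquiv k).hasSum_iff).mpr h
  refine h2.sigma fun m => ?_
  have h3 := hasSum_fintype
    (fun c : {a : Fin k → ℕ // a ∈ Finset.Nat.antidiagonalTuple k m} => F c.1)
  rw [Finset.sum_coe_sort _ F] at h3
  exact h3

lemma main_piece {g : ℕ → ℂ} (hg : Summable fun a => ‖g a‖) {S : ℂ} (hS : HasSum g S)
    (k : ℕ) (c : ℕ → ℝ) (w : ℂ) (hgc : ∀ a, 1 ≤ a → g a = (c a : ℂ) * w ^ a)
    (hg0 : g 0 = 0) :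
    HasSum (fun m : ℕ =>
      ((∑ a ∈ Finset.Nat.antidiagonalTuple k m,
        if ∀ i, 1 ≤ a i then ∏ i, c (a i) else 0 : ℝ) : ℂ) * w ^ m) (S ^ k) := by
  have h := hasSum_antidiagonalTuple (prod_hasSum hg hS k)
  have key : ∀ m : ℕ, ∑ a ∈ Finset.Nat.antidiagonalTuple k m, ∏ i, g (a i)
      = ((∑ a ∈ Finset.Nat.antidiagonalTuple k m,
          if ∀ i, 1 ≤ a i then ∏ i, c (a i) else 0 : ℝ) : ℂ) * w ^ m := by
    intro m
    rw [Complex.ofReal_sum, Finset.sum_mul]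
    refine Finset.sum_congr rfl fun a ha => ?_
    by_cases hpos : ∀ i, 1 ≤ a i
    · rw [if_pos hpos]
      push_cast
      have hm : ∑ i, a i = m := Finset.Nat.mem_antidiagonalTuple.mp ha
      rw [← hm, ← Finset.prod_pow_eq_pow_sum, ← Finset.prod_mul_distrib]
      exact Finset.prod_congr rfl fun i _ => hgc _ (hpos i)
    · rw [if_neg hpos]
      push_neg at hpos
      obtain ⟨i, hi⟩ := hpos
      have hzero : ∏ j, g (a j) = 0 :=
        Finset.prod_eq_zero (Finset.mem_univ i)
          (by rw [show a i = 0 by omega, hg0])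
      rw [hzero]
      simp
  simp only [key] at h
  exact h

set_option maxHeartbeats 2000000 in
/-- For every integer `k ≥ 1` and complex `w` with `|w| < 1`:
(i) `∑_m H_k(m) w^m = (−Log(1 − w))^k` (the sum converging);
(ii) `∑_{j≥1} Log(1 − w/j²)` converges absolutely and
`∑_m Z_k(m) w^m = (−∑_{j≥1} Log(1 − w/j²))^k`, where `Log` is the principal branch
of the complex logarithm. (Since `H_k(m) = Z_k(m) = 0` for `m < k`, the sums over all
`m : ℕ` agree with the sums from `m = k`.) -/
theorem stmt13 (k : ℕ) (hk : 1 ≤ k) (w : ℂ) (hw : ‖w‖ < 1) :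
    HasSum (fun m : ℕ => (Hk k m : ℂ) * w ^ m) ((-Complex.log (1 - w)) ^ k) ∧
    Summable (fun j : ℕ => ‖Complex.log (1 - w / ((j : ℂ) + 1) ^ 2)‖) ∧
    HasSum (fun m : ℕ => (Zk k m : ℂ) * w ^ m)
      ((-∑' j : ℕ, Complex.log (1 - w / ((j : ℂ) + 1) ^ 2)) ^ k) := by
  have hw' : ‖w‖ < 1 := hw
  -- Part (i)
  have hS1 : HasSum (fun a : ℕ => w ^ a / (a : ℂ)) (-Complex.log (1 - w)) :=
    Complex.hasSum_taylorSeries_neg_log hw'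
  have hnorm1 : Summable fun a : ℕ => ‖w ^ a / (a : ℂ)‖ := by
    refine Summable.of_nonneg_of_le (fun a => norm_nonneg _) (fun a => ?_)
      (summable_geometric_of_lt_one (norm_nonneg w) hw')
    rcases Nat.eq_zero_or_pos a with rfl | ha
    · simp
    · rw [norm_div, norm_pow, Complex.norm_natCast]
      exact div_le_self (pow_nonneg (norm_nonneg w) a) (by exact_mod_cast ha)
  have part1 := main_piece hnorm1 hS1 k (fun a => 1 / (a : ℝ)) w
    (fun a _ => by push_cast; ring) (by simp)
  refine ⟨by simpa only [Hk] using part1, ?_⟩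
  -- Part (ii)
  set L : ℕ → ℂ := fun j => Complex.log (1 - w / ((j : ℂ) + 1) ^ 2) with hL
  set f : ℕ × ℕ → ℂ := fun p => (w / ((p.1 : ℂ) + 1) ^ 2) ^ p.2 / (p.2 : ℂ) with hf
  have hnormj : ∀ j : ℕ, ‖(j : ℂ) + 1‖ = (j : ℝ) + 1 := by
    intro j
    rw [show ((j : ℂ) + 1) = ((j + 1 : ℕ) : ℂ) by push_cast; ring, Complex.norm_natCast]
    push_cast; ring
  have hj1 : ∀ j : ℕ, (1 : ℝ) ≤ ((j : ℝ) + 1) ^ 2 := by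
    intro j
    nlinarith [Nat.cast_nonneg (α := ℝ) j]
  have hzj : ∀ j : ℕ, ‖w / ((j : ℂ) + 1) ^ 2‖ < 1 := by
    intro j
    rw [norm_div, norm_pow, hnormj]
    exact lt_of_le_of_lt (div_le_self (norm_nonneg w) (hj1 j)) hw'
  have htay : ∀ j : ℕ, HasSum (fun a => f (j, a)) (-(L j)) :=
    fun j => Complex.hasSum_taylorSeries_neg_log (hzj j)
  have hfb : ∀ p : ℕ × ℕ, ‖f p‖ ≤ (1 / ((p.1 : ℝ) + 1) ^ 2) * ‖w‖ ^ p.2 := by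
    rintro ⟨j, a⟩
    rcases Nat.eq_zero_or_pos a with rfl | ha
    · simp only [hf, pow_zero, Nat.cast_zero, div_zero, norm_zero]
      positivity
    · have h1 : ‖f (j, a)‖ ≤ ‖w / ((j : ℂ) + 1) ^ 2‖ ^ a := by
        simp only [hf]
        rw [norm_div, norm_pow, Complex.norm_natCast]
        exact div_le_self (pow_nonneg (norm_nonneg _) a) (by exact_mod_cast ha)
      refine h1.trans ?_
      rw [norm_div, norm_pow, hnormj, div_pow]
      rw [one_div, inv_mul_eq_div]
      gcongr
      exact le_self_pow₀ (hj1 j) (by omega)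
  have hBsum : Summable fun p : ℕ × ℕ => (1 / ((p.1 : ℝ) + 1) ^ 2) * ‖w‖ ^ p.2 :=
    Summable.mul_of_nonneg (f := fun j : ℕ => (1 : ℝ) / ((j : ℝ) + 1) ^ 2)
      (g := fun a : ℕ => ‖w‖ ^ a) (summable_shift_s13 2 le_rfl)
      (summable_geometric_of_lt_one (norm_nonneg w) hw')
      (fun j => by positivity) (fun a => by positivity)
  have hfnorm : Summable fun p : ℕ × ℕ => ‖f p‖ :=
    Summable.of_nonneg_of_le (fun _ => norm_nonneg _) hfb hBsum
  have hT : HasSum f (∑' p, f p) := hfnorm.of_norm.hasSum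
  have hLT : HasSum (fun j => -(L j)) (∑' p, f p) := hT.prod_fiberwise htay
  have hsplit := (summable_prod_of_nonneg (f := fun p : ℕ × ℕ => ‖f p‖)
    (fun _ => norm_nonneg _)).mp hfnorm
  have part2a : Summable fun j : ℕ => ‖L j‖ := by
    refine Summable.of_nonneg_of_le (fun j => norm_nonneg _)
      (fun j => ?_) hsplit.2
    have h0 : -(L j) = ∑' a, f (j, a) := (htay j).tsum_eq.symm
    calc ‖L j‖ = ‖-(L j)‖ := by rw [norm_neg]
      _ = ‖∑' a, f (j, a)‖ := by rw [h0]
      _ ≤ ∑' a, ‖f (j, a)‖ := norm_tsum_le_tsum_norm (hsplit.1 j)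
  refine ⟨part2a, ?_⟩
  -- fiberwise sums over the second coordinate
  have hswap : HasSum (fun q : ℕ × ℕ => f (q.2, q.1)) (∑' p, f p) :=
    ((Equiv.prodComm ℕ ℕ).hasSum_iff).mpr hT
  set g₂ : ℕ → ℂ := fun a => ((zetaR (2 * a) : ℝ) : ℂ) / (a : ℂ) * w ^ a with hg₂
  have hfiber : ∀ a : ℕ, HasSum (fun j => f (j, a)) (g₂ a) := by
    intro a
    rcases Nat.eq_zero_or_pos a with rfl | ha
    · have h1 : (fun j : ℕ => f (j, 0)) = fun _ => 0 := by
        funext j; simp [hf]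
      have h2 : g₂ 0 = 0 := by simp [hg₂]
      rw [h1, h2]; exact hasSum_zero
    · have hre : HasSum (fun j : ℕ => (1 : ℝ) / ((j : ℝ) + 1) ^ (2 * a)) (zetaR (2 * a)) :=
        (summable_shift_s13 (2 * a) (by omega)).hasSum
      have hC : HasSum (fun j : ℕ => (((1 : ℝ) / ((j : ℝ) + 1) ^ (2 * a) : ℝ) : ℂ))
          ((zetaR (2 * a) : ℂ)) := Complex.hasSum_ofReal.mpr hre
      have hM := hC.mul_right (w ^ a / (a : ℂ))
      have hfun : (fun j : ℕ => (((1 : ℝ) / ((j : ℝ) + 1) ^ (2 * a) : ℝ) : ℂ)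
          * (w ^ a / (a : ℂ))) = fun j => f (j, a) := by
        funext j
        simp only [hf]
        push_cast
        rw [div_pow, ← pow_mul]
        ring
      have hval : ((zetaR (2 * a) : ℝ) : ℂ) * (w ^ a / (a : ℂ)) = g₂ a := by
        simp only [hg₂]; ring
      rw [hfun, hval] at hM
      exact hM
  have hg2sum : HasSum g₂ (∑' p, f p) := hswap.prod_fiberwise hfiber
  have hswapnorm : Summable fun q : ℕ × ℕ => ‖f (q.2, q.1)‖ :=
    ((Equiv.prodComm ℕ ℕ).summable_iff).mpr hfnorm
  have hsplit2 := (summable_prod_of_nonneg (f := fun q : ℕ × ℕ => ‖f (q.2, q.1)‖)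
    (fun _ => norm_nonneg _)).mp hswapnorm
  have hg2norm : Summable fun a : ℕ => ‖g₂ a‖ := by
    refine Summable.of_nonneg_of_le (fun _ => norm_nonneg _) (fun a => ?_) hsplit2.2
    have h0 : g₂ a = ∑' j, f (j, a) := (hfiber a).tsum_eq.symm
    rw [h0]
    exact norm_tsum_le_tsum_norm (hsplit2.1 a)
  have hLneg : HasSum L (-(∑' p, f p)) := by simpa using hLT.neg
  have hTval : (∑' p, f p) = -∑' j, L j := by rw [hLneg.tsum_eq, neg_neg]
  have part2b := main_piece hg2norm hg2sum k (fun a => zetaR (2 * a) / (a : ℝ)) w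
    (fun a _ => by simp only [hg₂]; push_cast; ring) (by simp [hg₂])
  rw [hTval] at part2b
  simpa only [Zk] using part2b
end
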